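/- arXiv:math/9311212 — 12 statements merged into one kernel-verified Lean document; each statement's English description precedes it below -/
import Mathlib

section
/- (Theorem 1.1(1), third inequality: cov(ℓ⁰) ≤ 𝔟) There exists a family of at most 𝔟 many sets, each belonging to the Laver ideal ℓ⁰, whose union is all of ᵚω; hence the covering number cov(ℓ⁰) — the least cardinality of a subfamily of ℓ⁰ whose union is ᵚω — is at most 𝔟. -/
/-- A tree on `ω^{<ω}`: a set of finite sequences closed under initial segments. -/
def IsTree (p : Set (List ℕ)) : Prop := ∀ s ∈ p, ∀ t : List ℕ, t <+: s → t ∈ p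

/-- `Succs p s` is the set of `n` with `s ⌢ ⟨n⟩ ∈ p`. -/
def Succs (p : Set (List ℕ)) (s : List ℕ) : Set ℕ := {n | s ++ [n] ∈ p}

/-- The set of branches of `p`: all `η : ℕ → ℕ` all of whose initial segments lie in `p`. -/
def Branches (p : Set (List ℕ)) : Set (ℕ → ℕ) := {η | ∀ n, (List.range n).map η ∈ p}

/-- `p` is a Laver tree with stem `st`. -/
def IsLaverWithStem (p : Set (List ℕ)) (st : List ℕ) : Prop :=
  IsTree p ∧ st ∈ p ∧ (∀ s ∈ p, s <+: st ∨ st <+: s) ∧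
    ∀ s ∈ p, st <+: s → (Succs p s).Infinite

/-- `p` is a Laver tree. -/
def IsLaverTree (p : Set (List ℕ)) : Prop := ∃ st, IsLaverWithStem p st

/-- The Laver ideal `ℓ⁰`. -/
def LaverIdeal (X : Set (ℕ → ℕ)) : Prop :=
  ∀ p, IsLaverTree p → ∃ q, IsLaverTree q ∧ q ⊆ p ∧ X ∩ Branches q = ∅

/-- `f ≤* g` : `f n ≤ g n` for all but finitely many `n`. -/
def EvLE (f g : ℕ → ℕ) : Prop := {n : ℕ | ¬ f n ≤ g n}.Finite

/-- The unbounding number `𝔟`. -/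
noncomputable def unboundingNumber : Cardinal :=
  sInf {c : Cardinal | ∃ F : Set (ℕ → ℕ),
    (¬ ∃ g : ℕ → ℕ, ∀ f ∈ F, EvLE f g) ∧ Cardinal.mk ↥F = c}

lemma getD_prefix {t s : List ℕ} (h : t <+: s) {i : ℕ} (hi : i < t.length) :
    s.getD i 0 = t.getD i 0 := by
  obtain ⟨r, rfl⟩ := h
  rw [List.getD_append _ _ _ _ hi]

/-- For every `g`, the set of `η` not eventually above `g` is in the Laver ideal. -/
lemma laver_not_evle (g : ℕ → ℕ) : LaverIdeal {η | ¬ EvLE g η} := by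
  rintro p ⟨st, htree, hstp, hcomp, hsucc⟩
  set q : Set (List ℕ) :=
    {s | s ∈ p ∧ ∀ i, st.length ≤ i → ∀ hi : i < s.length, g i ≤ s.getD i 0} with hq
  have hqsub : q ⊆ p := fun s hs => hs.1
  have hqtree : IsTree q := by
    rintro s ⟨hsp, hscond⟩ t ht
    refine ⟨htree s hsp t ht, fun i hle hi => ?_⟩
    rw [← getD_prefix ht hi]
    exact hscond i hle (lt_of_lt_of_le hi (ht.length_le))
  have hstq : st ∈ q := by
    refine ⟨hstp, fun i hle hi => absurd hle (not_le.2 hi)⟩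
  refine ⟨q, ⟨st, hqtree, hstq, fun s hs => hcomp s hs.1, ?_⟩, hqsub, ?_⟩
  · -- successor sets infinite
    rintro s ⟨hsp, hscond⟩ hst
    have hsub : (Succs p s \ Set.Iio (g s.length)) ⊆ Succs q s := by
      rintro n ⟨hn, hn2⟩
      simp only [Set.mem_Iio, not_lt] at hn2
      refine ⟨hn, fun i hle hi => ?_⟩
      rcases lt_or_eq_of_le (Nat.lt_succ_iff.1 (by simpa using hi)) with h | h
      · rw [List.getD_append _ _ _ _ h]
        exact hscond i hle h
      · subst h
        rw [List.getD_eq_getElem _ _ (by simp)]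
        simpa using hn2
    exact Set.Infinite.mono hsub ((hsucc s hsp hst).diff (Set.finite_Iio _))
  · -- disjointness
    ext η
    simp only [Set.mem_inter_iff, Set.mem_setOf_eq, Set.mem_empty_iff_false, iff_false,
      not_and, Branches]
    intro hη hb
    apply hη
    apply Set.Finite.subset (Set.finite_Iio st.length)
    intro n hn
    simp only [Set.mem_setOf_eq, not_le] at hn
    by_contra hge
    simp only [Set.mem_Iio, not_lt] at hge
    have hm := (hb (n + 1)).2 n hge (by simp)
    rw [List.getD_eq_getElem _ _ (by simp), List.getElem_map,
      List.getElem_range] at hm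
    omega

/-- Theorem 1.1(1), third inequality (`cov(ℓ⁰) ≤ 𝔟`): at most `𝔟` many members
of the Laver ideal cover all of `ᵚω`. -/
theorem cov_laver_le_b :
    ∃ (ι : Type) (X : ι → Set (ℕ → ℕ)),
      Cardinal.mk ι ≤ unboundingNumber ∧ (∀ i, LaverIdeal (X i)) ∧
      (⋃ i, X i) = Set.univ := by
  have hne : {c : Cardinal | ∃ F : Set (ℕ → ℕ),
      (¬ ∃ g : ℕ → ℕ, ∀ f ∈ F, EvLE f g) ∧ Cardinal.mk ↥F = c}.Nonempty := by
    refine ⟨_, Set.univ, ?_, rfl⟩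
    rintro ⟨g, hg⟩
    have := hg (fun n => g n + 1) (Set.mem_univ _)
    simp only [EvLE] at this
    have h2 : {n : ℕ | ¬ g n + 1 ≤ g n} = Set.univ := by
      ext n; simp
    rw [h2] at this
    exact Set.infinite_univ this
  obtain ⟨F, hF, hcard⟩ := csInf_mem hne
  refine ⟨↥F, fun f => {η | ¬ EvLE f.1 η}, le_of_eq hcard, fun f => laver_not_evle f.1, ?_⟩
  ext η
  simp only [Set.mem_iUnion, Set.mem_univ, iff_true, Set.mem_setOf_eq]
  by_contra h
  push_neg at h
  exact hF ⟨η, fun f hf => h ⟨f, hf⟩⟩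
end

section
/- (Theorem 1.1(2), third inequality: cov(m⁰) ≤ 𝔡) There exists a family of at most 𝔡 many sets, each belonging to the Miller ideal m⁰, whose union is all of ᵚω; hence the covering number cov(m⁰) — the least cardinality of a subfamily of m⁰ whose union is ᵚω — is at most 𝔡. -/
/-- `p` is a Miller tree. -/
def IsMillerTree (p : Set (List ℕ)) : Prop :=
  IsTree p ∧ (∃ st ∈ p, ∀ s ∈ p, s <+: st ∨ st <+: s) ∧
    ∀ s ∈ p, ∃ t ∈ p, s <+: t ∧ (Succs p t).Infinite

/-- The Miller ideal `m⁰`. -/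
def MillerIdeal (X : Set (ℕ → ℕ)) : Prop :=
  ∀ p, IsMillerTree p → ∃ q, IsMillerTree q ∧ q ⊆ p ∧ X ∩ Branches q = ∅

/-- The dominating number `𝔡`. -/
noncomputable def dominatingNumber : Cardinal :=
  sInf {c : Cardinal | ∃ F : Set (ℕ → ℕ),
    (∀ g : ℕ → ℕ, ∃ f ∈ F, EvLE g f) ∧ Cardinal.mk ↥F = c}

/-- Auxiliary: the admissible (chosen splitting) nodes of the pruned subtree of `p`
determined by `f`, a choice function `ext` sending each node to a splitting
extension, and a stem `st`. -/
inductive Adm (p : Set (List ℕ)) (f : ℕ → ℕ) (ext : List ℕ → List ℕ) (st : List ℕ) :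
    List ℕ → Prop
  | base : Adm p f ext st (ext st)
  | step (t n) : Adm p f ext st t → (t ++ [n]) ∈ p → f t.length < n →
      Adm p f ext st (ext (t ++ [n]))

/-- The key lemma: `{η | η ≤* f}` belongs to the Miller ideal. -/
theorem millerIdeal_evle (f : ℕ → ℕ) : MillerIdeal {η | EvLE η f} := by
  intro p hp
  obtain ⟨hp1, ⟨st, hst, _⟩, hp3⟩ := hp
  choose! ext h1 h2 h3 using hp3
  set A : List ℕ → Prop := Adm p f ext st with hA
  -- basic facts about admissible nodes
  have hAmem : ∀ t, A t → t ∈ p ∧ (Succs p t).Infinite := by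
    intro t ht
    induction ht with
    | base => exact ⟨h1 st hst, h3 st hst⟩
    | step s n hs hsp hfn _ => exact ⟨h1 _ hsp, h3 _ hsp⟩
  have hAroot : ∀ t, A t → ext st <+: t := by
    intro t ht
    induction ht with
    | base => exact List.prefix_refl _
    | step s n hs hsp hfn ih => exact ih.trans (((s.prefix_append [n])).trans (h2 _ hsp))
  -- structural key lemma
  have key : ∀ N u, u.length ≤ N → A u → ∀ t n, A t → t ++ [n] <+: u →
      f t.length < n ∧ t ++ [n] ∈ p ∧ ext (t ++ [n]) <+: u := by
    intro N
    induction N with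
    | zero =>
      intro u hu _ t n _ hpre
      have := hpre.length_le
      simp at this
      omega
    | succ N ih =>
      intro u hulen hu t n ht hpre
      cases hu with
      | base =>
        have hroot := hAroot t ht
        have l1 := hpre.length_le
        have l2 := hroot.length_le
        simp at l1
        omega
      | step s m hs hsp hfm =>
        have hsm : s ++ [m] <+: ext (s ++ [m]) := h2 _ hsp
        have hslen : s.length + 1 ≤ (ext (s ++ [m])).length := by
          have := hsm.length_le; simpa using this
        have htlen : t.length + 1 ≤ (ext (s ++ [m])).length := by
          have := hpre.length_le; simpa using this
        rcases List.prefix_or_prefix_of_prefix hpre hsm with h | h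
        · by_cases heq : (t ++ [n]).length = (s ++ [m]).length
          · obtain ⟨rfl, hnm⟩ := List.append_inj' (h.eq_of_length heq) rfl
            have hnm' : n = m := by simpa using hnm
            subst hnm'
            exact ⟨hfm, hsp, List.prefix_refl _⟩
          · have hle : (t ++ [n]).length ≤ s.length := by
              have := h.length_le; simp at heq ⊢; simp at this; omega
            have h' : t ++ [n] <+: s :=
              List.prefix_of_prefix_length_le h (s.prefix_append [m]) (by simpa using hle)
            obtain ⟨c1, c2, c3⟩ := ih s (by omega) hs t n ht h'
            exact ⟨c1, c2, c3.trans ((s.prefix_append [m]).trans hsm)⟩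
        · by_cases heq : (s ++ [m]).length = (t ++ [n]).length
          · obtain ⟨rfl, hnm⟩ := List.append_inj' (h.eq_of_length heq) rfl
            have hnm' : m = n := by simpa using hnm
            subst hnm'
            exact ⟨hfm, hsp, List.prefix_refl _⟩
          · have hle : (s ++ [m]).length ≤ t.length := by
              have := h.length_le; simp at heq ⊢; simp at this; omega
            have h' : s ++ [m] <+: t :=
              List.prefix_of_prefix_length_le h (t.prefix_append [n]) (by simpa using hle)
            obtain ⟨_, _, c3⟩ := ih t (by omega) ht s m hs h'
            have := c3.length_le
            omega
  have key' : ∀ u, A u → ∀ t n, A t → t ++ [n] <+: u →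
      f t.length < n ∧ t ++ [n] ∈ p ∧ ext (t ++ [n]) <+: u :=
    fun u hu => key u.length u le_rfl hu
  -- the pruned tree
  set q : Set (List ℕ) := {s | ∃ t, A t ∧ s <+: t} with hqdef
  have hq_sub : q ⊆ p := by
    rintro s ⟨t, ht, hpre⟩
    exact hp1 t (hAmem t ht).1 s hpre
  have ht0A : A (ext st) := Adm.base
  have ht0q : ext st ∈ q := ⟨ext st, ht0A, List.prefix_refl _⟩
  have hq_miller : IsMillerTree q := by
    refine ⟨?_, ⟨ext st, ht0q, ?_⟩, ?_⟩
    · rintro s ⟨t, ht, hpre⟩ r hr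
      exact ⟨t, ht, hr.trans hpre⟩
    · rintro s ⟨t, ht, hpre⟩
      exact List.prefix_or_prefix_of_prefix hpre (hAroot t ht)
    · rintro s ⟨t, ht, hpre⟩
      refine ⟨t, ⟨t, ht, List.prefix_refl _⟩, hpre, ?_⟩
      have hsub : Succs p t \ Set.Iic (f t.length) ⊆ Succs q t := by
        rintro n ⟨hnp, hn⟩
        have hgt : f t.length < n := not_le.mp hn
        exact ⟨ext (t ++ [n]), Adm.step t n ht hnp hgt, h2 _ hnp⟩
      exact (((hAmem t ht).2).diff (Set.finite_Iic _)).mono hsub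
  refine ⟨q, hq_miller, hq_sub, ?_⟩
  rw [Set.eq_empty_iff_forall_notMem]
  rintro η ⟨hev, hbr⟩
  have hb : ∀ k, ∃ t, A t ∧ (List.range k).map η <+: t := hbr
  have hlen : ∀ k, ((List.range k).map η).length = k := by simp
  have hmono : ∀ k m : ℕ, k ≤ m → (List.range k).map η <+: (List.range m).map η := by
    intro k m hkm
    have := List.take_prefix k ((List.range m).map η)
    rwa [← List.map_take, List.take_range, min_eq_left hkm] at this
  have hsucc : ∀ k, (List.range (k + 1)).map η = (List.range k).map η ++ [η k] := by
    intro k; rw [List.range_succ, List.map_append]; rfl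
  -- growth step
  have g : ∀ u, A u → u = (List.range u.length).map η →
      f u.length < η u.length ∧ ∃ v, A v ∧ u.length < v.length ∧
        v = (List.range v.length).map η := by
    intro u huA hueq
    obtain ⟨t, htA, htp⟩ := hb (u.length + 1)
    rw [hsucc, ← hueq] at htp
    obtain ⟨hflt, hmp, _⟩ := key' t htA u (η u.length) huA htp
    refine ⟨hflt, ext (u ++ [η u.length]), Adm.step u (η u.length) huA hmp hflt, ?_, ?_⟩
    · have := (h2 _ hmp).length_le
      simp at this
      omega
    · set v := ext (u ++ [η u.length]) with hv
      have hvlen : u.length + 1 ≤ v.length := by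
        have := (h2 _ hmp).length_le; simpa using this
      obtain ⟨t₂, ht₂A, ht₂p⟩ := hb v.length
      have hup : u ++ [η u.length] <+: (List.range v.length).map η := by
        have he : u ++ [η u.length] = (List.range (u.length + 1)).map η := by
          rw [hsucc, ← hueq]
        rw [he]
        exact hmono _ _ hvlen
      obtain ⟨_, _, hv2⟩ := key' t₂ ht₂A u (η u.length) huA (hup.trans ht₂p)
      have hvp : v <+: (List.range v.length).map η :=
        List.prefix_of_prefix_length_le hv2 ht₂p (by rw [hlen])
      exact hvp.eq_of_length (by rw [hlen])
  -- base
  have hbase : ext st = (List.range (ext st).length).map η := by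
    obtain ⟨t, htA, htp⟩ := hb (ext st).length
    have h' : ext st <+: (List.range (ext st).length).map η :=
      List.prefix_of_prefix_length_le (hAroot t htA) htp (by rw [hlen])
    exact h'.eq_of_length (by rw [hlen])
  have hgrow : ∀ N : ℕ, ∃ u, A u ∧ N ≤ u.length ∧ u = (List.range u.length).map η := by
    intro N
    induction N with
    | zero => exact ⟨ext st, ht0A, Nat.zero_le _, hbase⟩
    | succ N ihN =>
      obtain ⟨u, huA, hulen, hueq⟩ := ihN
      obtain ⟨_, v, hvA, hvlen, hveq⟩ := g u huA hueq
      exact ⟨v, hvA, by omega, hveq⟩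
  have hinf : {n : ℕ | ¬ η n ≤ f n}.Infinite := by
    apply Set.infinite_of_forall_exists_gt
    intro a
    obtain ⟨u, huA, hulen, hueq⟩ := hgrow (a + 1)
    exact ⟨u.length, not_le.mpr (g u huA hueq).1, by omega⟩
  exact hinf hev

/-- Theorem 1.1(2), third inequality (`cov(m⁰) ≤ 𝔡`): at most `𝔡` many members
of the Miller ideal cover all of `ᵚω`. -/
theorem cov_miller_le_d :
    ∃ (ι : Type) (X : ι → Set (ℕ → ℕ)),
      Cardinal.mk ι ≤ dominatingNumber ∧ (∀ i, MillerIdeal (X i)) ∧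
      (⋃ i, X i) = Set.univ := by
  have hne : {c : Cardinal | ∃ F : Set (ℕ → ℕ),
      (∀ g : ℕ → ℕ, ∃ f ∈ F, EvLE g f) ∧ Cardinal.mk ↥F = c}.Nonempty := by
    refine ⟨_, Set.univ, fun g => ⟨g, Set.mem_univ g, ?_⟩, rfl⟩
    have : {n : ℕ | ¬ g n ≤ g n} = ∅ := by ext n; simp
    rw [EvLE, this]; exact Set.finite_empty
  obtain ⟨F, hFdom, hFmk⟩ := csInf_mem hne
  refine ⟨↥F, fun i => {η | EvLE η i.1}, hFmk.le, fun i => millerIdeal_evle i.1, ?_⟩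
  rw [Set.eq_univ_iff_forall]
  intro η
  obtain ⟨f, hf, hev⟩ := hFdom η
  exact Set.mem_iUnion.mpr ⟨⟨f, hf⟩, hev⟩
end

section
/- (ℓ⁰ is a σ-ideal) If ⟨X_n : n ∈ ℕ⟩ is a countable family of sets each belonging to the Laver ideal ℓ⁰, then ⋃_{n∈ℕ} X_n belongs to ℓ⁰; moreover, any subset of a member of ℓ⁰ belongs to ℓ⁰. -/
/-! ### Basic list facts -/

/-- Initial segment of a function. -/
def seg (η : ℕ → ℕ) (k : ℕ) : List ℕ := (List.range k).map η

lemma seg_length (η : ℕ → ℕ) (k : ℕ) : (seg η k).length = k := by simp [seg]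

lemma seg_prefix (η : ℕ → ℕ) {k m : ℕ} (h : k ≤ m) : seg η k <+: seg η m := by
  have := List.take_prefix k (List.range m)
  rw [List.take_range, min_eq_left h] at this
  exact this.map η

lemma prefix_eq_of_length {a b : List ℕ} (h : a <+: b) (hl : b.length ≤ a.length) : a = b :=
  h.eq_of_length (le_antisymm h.length_le hl)

lemma prefix_comparable {a b c : List ℕ} (h1 : a <+: c) (h2 : b <+: c) :
    a <+: b ∨ b <+: a := List.prefix_or_prefix_of_prefix h1 h2

/-! ### Basic Laver facts -/

lemma IsLaverWithStem.tree {p st} (h : IsLaverWithStem p st) : IsTree p := h.1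
lemma IsLaverWithStem.stem_mem {p st} (h : IsLaverWithStem p st) : st ∈ p := h.2.1
lemma IsLaverWithStem.comp {p st} (h : IsLaverWithStem p st) :
    ∀ s ∈ p, s <+: st ∨ st <+: s := h.2.2.1
lemma IsLaverWithStem.succs {p st} (h : IsLaverWithStem p st) :
    ∀ s ∈ p, st <+: s → (Succs p s).Infinite := h.2.2.2

/-- Extend a node of a Laver tree to arbitrary length. -/
lemma laver_extend {p st} (hp : IsLaverWithStem p st) :
    ∀ (k : ℕ) (t : List ℕ), t ∈ p → st <+: t →
      ∃ s ∈ p, t <+: s ∧ s.length = t.length + k := by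
  intro k
  induction k with
  | zero => exact fun t ht _ => ⟨t, ht, List.prefix_refl t, rfl⟩
  | succ k ih =>
    intro t ht hst
    obtain ⟨n, hn⟩ := (hp.succs t ht hst).nonempty
    obtain ⟨s, hs, hpre, hlen⟩ := ih (t ++ [n]) hn (hst.trans (List.prefix_append t [n]))
    exact ⟨s, hs, (List.prefix_append t [n]).trans hpre, by simp [hlen]; omega⟩

lemma laver_extend' {p st} (hp : IsLaverWithStem p st) {t : List ℕ} {m : ℕ}
    (ht : t ∈ p) (hst : st <+: t) (hm : t.length ≤ m) :
    ∃ s ∈ p, t <+: s ∧ s.length = m := by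
  obtain ⟨s, hs, h1, h2⟩ := laver_extend hp (m - t.length) t ht hst
  exact ⟨s, hs, h1, by omega⟩

/-- The stem of a Laver subtree extends the stem of the ambient Laver tree. -/
lemma stem_prefix_of_subset {p st r t} (hp : IsLaverWithStem p st)
    (hr : IsLaverWithStem r t) (hsub : r ⊆ p) : st <+: t := by
  have ht : t ∈ p := hsub hr.stem_mem
  rcases hp.comp t ht with h | h
  · by_cases he : t = st
    · exact he ▸ List.prefix_refl t
    · exfalso
      have hlt : t.length < st.length := by
        rcases lt_or_eq_of_le h.length_le with h' | h'
        · exact h'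
        · exact absurd (h.eq_of_length h') he
      have hinf := hr.succs t hr.stem_mem (List.prefix_refl t)
      apply hinf
      have hsub2 : (Succs r t).Subsingleton := by
        intro a ha b hb
        have key : ∀ n, n ∈ Succs r t → t ++ [n] <+: st := by
          intro n hn
          have hmem : t ++ [n] ∈ p := hsub hn
          rcases hp.comp _ hmem with h2 | h2
          · exact h2
          · have : (t ++ [n]).length ≤ st.length := by simp; omega
            exact (prefix_eq_of_length h2 this).symm ▸ List.prefix_refl _
        have := prefix_comparable (key a ha) (key b hb)
        have heq : t ++ [a] = t ++ [b] := by
          rcases this with h2 | h2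
          · exact prefix_eq_of_length h2 (by simp)
          · exact (prefix_eq_of_length h2 (by simp)).symm
        simpa using heq
      exact hsub2.finite
  · exact h

/-- Restriction of a tree to the nodes comparable with `s`. -/
def Restrict (p : Set (List ℕ)) (s : List ℕ) : Set (List ℕ) := {t ∈ p | t <+: s ∨ s <+: t}

lemma restrict_subset (p : Set (List ℕ)) (s : List ℕ) : Restrict p s ⊆ p :=
  fun _ h => h.1

lemma restrict_laver {p st s} (hp : IsLaverWithStem p st) (hs : s ∈ p) (hst : st <+: s) :
    IsLaverWithStem (Restrict p s) s := by
  refine ⟨?_, ⟨hs, Or.inl (List.prefix_refl s)⟩, fun t ht => ht.2, ?_⟩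
  · intro t ht u hu
    refine ⟨hp.tree t ht.1 u hu, ?_⟩
    rcases ht.2 with h | h
    · exact Or.inl (hu.trans h)
    · exact prefix_comparable hu h
  · intro t ht hts
    have : Succs p t ⊆ Succs (Restrict p s) t := by
      intro n hn
      exact ⟨hn, Or.inr (hts.trans (List.prefix_append t [n]))⟩
    exact ((hp.succs t ht.1 (hst.trans hts)).mono this)

/-! ### The grafting lemma -/

/-- Grafting stem-preserving Laver trees onto a front of `p` at level `m`. -/
lemma graft {p : Set (List ℕ)} {st : List ℕ} {m : ℕ} (hm : st.length < m)
    (hp : IsLaverWithStem p st)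
    (G : Set (List ℕ)) (hG : G.Nonempty)
    (hGp : ∀ s ∈ G, s ∈ p ∧ st <+: s ∧ s.length = m)
    (q : List ℕ → Set (List ℕ))
    (hq : ∀ s ∈ G, IsLaverWithStem (q s) s ∧ q s ⊆ p)
    (hsplit : ∀ t, st <+: t → t.length < m → (∃ s ∈ G, t <+: s) →
      {n | ∃ s ∈ G, t ++ [n] <+: s}.Infinite) :
    ∃ p', IsLaverWithStem p' st ∧ p' ⊆ p ∧
      (∀ t ∈ p, (t <+: st ∨ ∃ s ∈ G, t <+: s) → t ∈ p') ∧
      Branches p' ⊆ ⋃ s ∈ G, Branches (q s) := by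
  classical
  set p' : Set (List ℕ) :=
    {t | t <+: st} ∪ {t | st <+: t ∧ ∃ s ∈ G, t <+: s} ∪ ⋃ s ∈ G, q s with hp'
  have hmemq : ∀ {t s}, s ∈ G → t ∈ q s → t <+: s ∨ s <+: t := by
    intro t s hsG htq
    exact (hq s hsG).1.comp t htq
  -- membership classification at level `m` and above
  have hclass : ∀ t ∈ p', m ≤ t.length → ∃ s ∈ G, t ∈ q s ∧ s <+: t := by
    intro t ht hlen
    rcases ht with (h | h) | h
    · exfalso; have := h.length_le; omega
    · obtain ⟨s, hsG, hts⟩ := h.2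
      have hts' : t = s := prefix_eq_of_length hts (by rw [(hGp s hsG).2.2]; exact hlen)
      subst hts'
      exact ⟨t, hsG, (hq t hsG).1.stem_mem, List.prefix_refl t⟩
    · simp only [Set.mem_iUnion] at h
      obtain ⟨s, hsG, htq⟩ := h
      rcases hmemq hsG htq with h2 | h2
      · have : t = s := prefix_eq_of_length h2 (by rw [(hGp s hsG).2.2]; exact hlen)
        exact ⟨s, hsG, htq, this ▸ List.prefix_refl t⟩
      · exact ⟨s, hsG, htq, h2⟩
  -- low membership implies reachability of the front
  have hreach : ∀ t ∈ p', st <+: t → t.length < m → ∃ s ∈ G, t <+: s := by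
    intro t ht hst hlen
    rcases ht with (h | h) | h
    · have heq : t = st := h.eq_of_length (le_antisymm h.length_le hst.length_le)
      subst heq
      obtain ⟨s, hsG⟩ := hG
      exact ⟨s, hsG, (hGp s hsG).2.1⟩
    · exact h.2
    · simp only [Set.mem_iUnion] at h
      obtain ⟨s, hsG, htq⟩ := h
      rcases hmemq hsG htq with h2 | h2
      · exact ⟨s, hsG, h2⟩
      · exfalso; have := h2.length_le; rw [(hGp s hsG).2.2] at this; omega
  have hsub : p' ⊆ p := by
    intro t ht
    rcases ht with (h | h) | h
    · exact hp.tree st hp.stem_mem t h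
    · obtain ⟨s, hsG, hts⟩ := h.2
      exact hp.tree s (hGp s hsG).1 t hts
    · simp only [Set.mem_iUnion] at h
      obtain ⟨s, hsG, htq⟩ := h
      exact (hq s hsG).2 htq
  refine ⟨p', ⟨?_, Or.inl (Or.inl (List.prefix_refl st)), ?_, ?_⟩, hsub, ?_, ?_⟩
  · -- tree
    intro t ht u hu
    rcases ht with (h | h) | h
    · exact Or.inl (Or.inl (hu.trans h))
    · obtain ⟨s, hsG, hts⟩ := h.2
      rcases prefix_comparable hu h.1 with h2 | h2
      · exact Or.inl (Or.inl h2)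
      · exact Or.inl (Or.inr ⟨h2, s, hsG, hu.trans hts⟩)
    · simp only [Set.mem_iUnion] at h
      obtain ⟨s, hsG, htq⟩ := h
      exact Or.inr (by simp only [Set.mem_iUnion]; exact ⟨s, hsG, (hq s hsG).1.tree t htq u hu⟩)
  · -- comparability with the stem
    intro t ht
    rcases ht with (h | h) | h
    · exact Or.inl h
    · exact Or.inr h.1
    · simp only [Set.mem_iUnion] at h
      obtain ⟨s, hsG, htq⟩ := h
      rcases hmemq hsG htq with h2 | h2
      · exact prefix_comparable h2 (hGp s hsG).2.1
      · exact Or.inr ((hGp s hsG).2.1.trans h2)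
  · -- infinite splitting
    intro t ht hst
    by_cases hlen : t.length < m
    · obtain ⟨s, hsG, hts⟩ := hreach t ht hst hlen
      refine (hsplit t hst hlen ⟨s, hsG, hts⟩).mono ?_
      intro n hn
      obtain ⟨s', hs'G, hn'⟩ := hn
      exact Or.inl (Or.inr ⟨hst.trans (List.prefix_append t [n]), s', hs'G, hn'⟩)
    · obtain ⟨s, hsG, htq, hst'⟩ := hclass t ht (by omega)
      refine ((hq s hsG).1.succs t htq hst').mono ?_
      intro n hn
      exact Or.inr (by simp only [Set.mem_iUnion]; exact ⟨s, hsG, hn⟩)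
  · -- low membership
    intro t htp hcase
    rcases hcase with h | h
    · exact Or.inl (Or.inl h)
    · obtain ⟨s, hsG, hts⟩ := h
      rcases prefix_comparable hts (hGp s hsG).2.1 with h2 | h2
      · exact Or.inl (Or.inl h2)
      · exact Or.inl (Or.inr ⟨h2, s, hsG, hts⟩)
  · -- branches
    intro η hη
    have hm' := hη m
    have hseg : (List.range m).map η ∈ p' := hm'
    obtain ⟨s, hsG, hsq, hss⟩ := hclass _ hseg (by simp)
    have hs_eq : (List.range m).map η = s := by
      have h1 : ((List.range m).map η).length = m := by simp
      have h2 : s.length = m := (hGp s hsG).2.2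
      exact (prefix_eq_of_length hss (by omega)).symm
    simp only [Set.mem_iUnion]
    refine ⟨s, hsG, ?_⟩
    intro k
    rcases le_or_gt k m with hk | hk
    · have : (List.range k).map η <+: s := hs_eq ▸ seg_prefix η hk
      exact (hq s hsG).1.tree s (hq s hsG).1.stem_mem _ this
    · have hin : (List.range k).map η ∈ p' := hη k
      obtain ⟨s', hs'G, hq', hs't⟩ := hclass _ hin (by simp; omega)
      have hpre : (List.range m).map η <+: (List.range k).map η := seg_prefix η hk.le
      have hl1 : s'.length = m := (hGp s' hs'G).2.2
      have hl2 : s.length = m := (hGp s hsG).2.2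
      have : s' = s := by
        rcases prefix_comparable hs't (hs_eq ▸ hpre) with h2 | h2
        · exact prefix_eq_of_length h2 (by omega)
        · exact (prefix_eq_of_length h2 (by omega)).symm
      exact this ▸ hq'

/-! ### Member of a prefix-extension splits -/

lemma prefix_snoc_cases {u t : List ℕ} {n : ℕ} (h : u <+: t ++ [n]) :
    u <+: t ∨ u = t ++ [n] := by
  rcases le_or_gt u.length t.length with hl | hl
  · rcases prefix_comparable h (t.prefix_append [n]) with h2 | h2
    · exact Or.inl h2
    · exact Or.inl ((prefix_eq_of_length h2 hl).symm ▸ List.prefix_refl u)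
  · exact Or.inr (prefix_eq_of_length h (by simp; omega))

/-- Key lemma: avoidance with the same stem. -/
lemma stem_avoid {X : Set (ℕ → ℕ)} {p : Set (List ℕ)} {st : List ℕ}
    (hX : LaverIdeal X) (hp : IsLaverWithStem p st) :
    ∃ q, IsLaverWithStem q st ∧ q ⊆ p ∧ X ∩ Branches q = ∅ := by
  classical
  by_contra hcon
  set B : Set (List ℕ) := {s | s ∈ p ∧ st <+: s ∧
    ∃ q, IsLaverWithStem q s ∧ q ⊆ p ∧ X ∩ Branches q = ∅} with hB
  have hstB : st ∉ B := by
    intro ⟨_, _, q, h1, h2, h3⟩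
    exact hcon ⟨q, h1, h2, h3⟩
  -- closure of B under infinitely many children
  have hclosure : ∀ s ∈ p, st <+: s → {n | s ++ [n] ∈ B}.Infinite → s ∈ B := by
    intro s hsp hsts hinf
    set G : Set (List ℕ) := {t | ∃ n, s ++ [n] ∈ B ∧ t = s ++ [n]} with hG
    have hGmem : ∀ t ∈ G, t ∈ B ∧ s <+: t ∧ t.length = s.length + 1 := by
      rintro t ⟨n, hnB, rfl⟩
      exact ⟨hnB, s.prefix_append [n], by simp⟩
    have hch : ∀ t ∈ G, ∃ rr, IsLaverWithStem rr t ∧ rr ⊆ Restrict p s ∧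
        X ∩ Branches rr = ∅ := by
      rintro t ⟨n, hnB, rfl⟩
      obtain ⟨_, _, r, hr1, hr2, hr3⟩ := hnB
      refine ⟨r, hr1, ?_, hr3⟩
      intro u hu
      refine ⟨hr2 hu, ?_⟩
      rcases hr1.comp u hu with h2 | h2
      · rcases prefix_snoc_cases h2 with h3 | h3
        · exact Or.inl h3
        · exact Or.inr (h3 ▸ s.prefix_append [n])
      · exact Or.inr ((s.prefix_append [n]).trans h2)
    choose! rr hrr1 hrr2 hrr3 using hch
    have hps : IsLaverWithStem (Restrict p s) s := restrict_laver hp hsp hsts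
    obtain ⟨n₀, hn₀⟩ := hinf.nonempty
    obtain ⟨p', hp'1, hp'2, _, hp'4⟩ := graft (m := s.length + 1) (by omega) hps G
      ⟨s ++ [n₀], n₀, hn₀, rfl⟩
      (by
        intro t ht
        obtain ⟨htB, h2, h3⟩ := hGmem t ht
        exact ⟨⟨htB.1, Or.inr h2⟩, h2, h3⟩)
      rr (fun t ht => ⟨hrr1 t ht, hrr2 t ht⟩)
      (by
        intro t hst hlen hex
        obtain ⟨u, huG, htu⟩ := hex
        have hts : t = s := by
          have := hst.length_le
          exact (prefix_eq_of_length hst (by omega)).symm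
        subst hts
        refine hinf.mono ?_
        intro n hn
        exact ⟨t ++ [n], ⟨n, hn, rfl⟩, List.prefix_refl _⟩)
    refine ⟨hsp, hsts, p', hp'1, hp'2.trans (restrict_subset p s), ?_⟩
    rw [Set.eq_empty_iff_forall_notMem]
    rintro η ⟨hηX, hηB⟩
    obtain ⟨t, htG, hηt⟩ := by simpa using hp'4 hηB
    have hdis := hrr3 t htG
    rw [Set.eq_empty_iff_forall_notMem] at hdis
    exact hdis η ⟨hηX, hηt⟩
  -- the tree of hereditarily non-B nodes
  set p'' : Set (List ℕ) := {t | t <+: st} ∪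
    {t | t ∈ p ∧ st <+: t ∧ ∀ u, st <+: u → u <+: t → u ≠ st → u ∉ B} with hp''
  have hstp'' : st ∈ p'' := by
    refine Or.inr ⟨hp.stem_mem, List.prefix_refl st, ?_⟩
    intro u h1 h2 h3
    exact absurd (prefix_eq_of_length h2 h1.length_le) h3
  have hsub'' : p'' ⊆ p := by
    rintro t (h | h)
    · exact hp.tree st hp.stem_mem t h
    · exact h.1
  have hnotB : ∀ t ∈ p'', st <+: t → t ∉ B := by
    rintro t (h | h) hst
    · have : t = st := prefix_eq_of_length hst h.length_le |>.symm
      exact this ▸ hstB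
    · by_cases he : t = st
      · exact he ▸ hstB
      · exact h.2.2 t hst (List.prefix_refl t) he
  have hlav'' : IsLaverWithStem p'' st := by
    refine ⟨?_, hstp'', ?_, ?_⟩
    · rintro t (h | h) u hu
      · exact Or.inl (hu.trans h)
      · rcases prefix_comparable hu h.2.1 with h2 | h2
        · exact Or.inl h2
        · refine Or.inr ⟨hp.tree t h.1 u hu, h2, ?_⟩
          intro v hv1 hv2 hv3
          exact h.2.2 v hv1 (hv2.trans hu) hv3
    · rintro t (h | h)
      · exact Or.inl h
      · exact Or.inr h.2.1
    · intro t ht hst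
      have htp : t ∈ p := hsub'' ht
      have htB : t ∉ B := hnotB t ht hst
      have hbad : ¬ {n | t ++ [n] ∈ B}.Infinite := by
        intro hbad
        exact htB (hclosure t htp hst hbad)
      have hfin : {n | t ++ [n] ∈ B}.Finite := Set.not_infinite.mp hbad
      refine ((hp.succs t htp hst).diff hfin).mono ?_
      rintro n ⟨hn1, hn2⟩
      refine Or.inr ⟨hn1, hst.trans (t.prefix_append [n]), ?_⟩
      intro u hu1 hu2 hu3
      rcases prefix_snoc_cases hu2 with h2 | h2
      · rcases ht with h | h
        · have : t = st := prefix_eq_of_length hst h.length_le |>.symm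
          subst this
          exact absurd (prefix_eq_of_length h2 hu1.length_le) hu3
        · exact h.2.2 u hu1 h2 hu3
      · exact h2 ▸ hn2
  obtain ⟨r, ⟨τ, hrτ⟩, hrsub, hrdisj⟩ := hX p'' ⟨st, hlav''⟩
  have hstτ : st <+: τ := stem_prefix_of_subset hlav'' hrτ hrsub
  have hτB : τ ∈ B := ⟨hsub'' (hrsub hrτ.stem_mem), hstτ, r, hrτ, hrsub.trans hsub'', hrdisj⟩
  exact hnotB τ (hrsub hrτ.stem_mem) hstτ hτB

/-! ### The fusion step -/

lemma step_avoid {X : Set (ℕ → ℕ)} {p : Set (List ℕ)} {st : List ℕ}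
    (hX : LaverIdeal X) (hp : IsLaverWithStem p st) (k : ℕ) :
    ∃ p', IsLaverWithStem p' st ∧ p' ⊆ p ∧
      (∀ t ∈ p, t.length ≤ st.length + k + 1 → t ∈ p') ∧ X ∩ Branches p' = ∅ := by
  classical
  set m := st.length + k + 1 with hm
  set G : Set (List ℕ) := {s | s ∈ p ∧ st <+: s ∧ s.length = m} with hG
  have hch : ∀ s ∈ G, ∃ r, IsLaverWithStem r s ∧ r ⊆ Restrict p s ∧
      X ∩ Branches r = ∅ :=
    fun s hs => stem_avoid hX (restrict_laver hp hs.1 hs.2.1)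
  choose! rr hrr1 hrr2 hrr3 using hch
  obtain ⟨s₀, hs₀p, hs₀pre, hs₀len⟩ :=
    laver_extend' hp hp.stem_mem (List.prefix_refl st) (show st.length ≤ m by omega)
  obtain ⟨p', hp'1, hp'2, hp'3, hp'4⟩ := graft (m := m) (by omega) hp G
    ⟨s₀, hs₀p, hs₀pre, hs₀len⟩ (fun s hs => hs)
    rr (fun s hs => ⟨hrr1 s hs, (hrr2 s hs).trans (restrict_subset p s)⟩)
    (by
      intro t hst hlen hex
      obtain ⟨u, huG, htu⟩ := hex
      have htp : t ∈ p := hp.tree u huG.1 t htu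
      refine (hp.succs t htp hst).mono ?_
      intro n hn
      obtain ⟨s', hs'p, h1, h2⟩ := laver_extend' hp hn
        (hst.trans (t.prefix_append [n])) (show (t ++ [n]).length ≤ m by simp; omega)
      exact ⟨s', ⟨hs'p, (hst.trans (t.prefix_append [n])).trans h1, h2⟩, h1⟩)
  refine ⟨p', hp'1, hp'2, ?_, ?_⟩
  · intro t htp hlen
    rcases hp.comp t htp with h | h
    · exact hp'3 t htp (Or.inl h)
    · obtain ⟨s', hs'p, h1, h2⟩ := laver_extend' hp htp h hlen
      exact hp'3 t htp (Or.inr ⟨s', ⟨hs'p, h.trans h1, h2⟩, h1⟩)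
  · rw [Set.eq_empty_iff_forall_notMem]
    rintro η ⟨hηX, hηB⟩
    obtain ⟨s, hsG, hηs⟩ := by simpa using hp'4 hηB
    have hdis := hrr3 s hsG
    rw [Set.eq_empty_iff_forall_notMem] at hdis
    exact hdis η ⟨hηX, hηs⟩

lemma branches_mono {p q : Set (List ℕ)} (h : p ⊆ q) : Branches p ⊆ Branches q :=
  fun _ hη n => h (hη n)

/-! ### Fusion: countable unions -/

lemma laver_union {X : ℕ → Set (ℕ → ℕ)} (hX : ∀ n, LaverIdeal (X n)) :
    LaverIdeal (⋃ n, X n) := by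
  classical
  rintro p ⟨st, hp⟩
  -- the fusion sequence
  let F : ℕ → {T : Set (List ℕ) // IsLaverWithStem T st} := fun k =>
    Nat.rec ⟨p, hp⟩
      (fun k prev =>
        ⟨(step_avoid (hX k) prev.2 k).choose, (step_avoid (hX k) prev.2 k).choose_spec.1⟩) k
  have hFsucc : ∀ k, (F (k + 1)).1 ⊆ (F k).1 ∧
      (∀ t ∈ (F k).1, t.length ≤ st.length + k + 1 → t ∈ (F (k + 1)).1) ∧
      X k ∩ Branches (F (k + 1)).1 = ∅ := by
    intro k
    exact ⟨(step_avoid (hX k) (F k).2 k).choose_spec.2.1,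
      (step_avoid (hX k) (F k).2 k).choose_spec.2.2.1,
      (step_avoid (hX k) (F k).2 k).choose_spec.2.2.2⟩
  have hdec : ∀ j k, j ≤ k → (F k).1 ⊆ (F j).1 := by
    intro j k hjk
    induction k with
    | zero => have : j = 0 := by omega
              subst this; exact fun _ h => h
    | succ k ih =>
      rcases Nat.eq_or_lt_of_le hjk with h | h
      · subst h; exact fun _ h => h
      · exact fun t ht => ih (by omega) ((hFsucc k).1 ht)
  have hup : ∀ j k, j ≤ k → ∀ t ∈ (F j).1, t.length ≤ st.length + j + 1 → t ∈ (F k).1 := by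
    intro j k hjk
    induction k, hjk using Nat.le_induction with
    | base => exact fun t ht _ => ht
    | succ k hjk ih =>
      intro t ht hlen
      exact (hFsucc k).2.1 t (ih t ht hlen) (by omega)
  set q : Set (List ℕ) := ⋂ k, (F k).1 with hq
  have hqsub : ∀ k, q ⊆ (F k).1 := fun k t ht => Set.mem_iInter.mp ht k
  have hqlav : IsLaverWithStem q st := by
    refine ⟨?_, ?_, ?_, ?_⟩
    · intro t ht u hu
      exact Set.mem_iInter.mpr fun k => (F k).2.tree t (hqsub k ht) u hu
    · exact Set.mem_iInter.mpr fun k => (F k).2.stem_mem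
    · intro t ht
      exact (F 0).2.comp t (hqsub 0 ht)
    · intro t ht hst
      have hlen : t.length = st.length + (t.length - st.length) := by
        have := hst.length_le; omega
      set j := t.length - st.length with hj
      refine (((F j).2.succs t (hqsub j ht) hst).mono ?_)
      intro n hn
      refine Set.mem_iInter.mpr fun k => ?_
      rcases le_or_gt k j with hk | hk
      · exact hdec k j hk hn
      · exact hup j k hk.le (t ++ [n]) hn (by simp; omega)
  refine ⟨q, ⟨st, hqlav⟩, fun t ht => hqsub 0 ht, ?_⟩
  rw [Set.eq_empty_iff_forall_notMem]
  rintro η ⟨hηX, hηB⟩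
  obtain ⟨n, hn⟩ := Set.mem_iUnion.mp hηX
  have hdis := (hFsucc n).2.2
  rw [Set.eq_empty_iff_forall_notMem] at hdis
  exact hdis η ⟨hn, branches_mono (hqsub (n + 1)) hηB⟩

/-- `ℓ⁰` is a σ-ideal: it is closed under countable unions and under subsets. -/
theorem laver_sigma_ideal :
    (∀ X : ℕ → Set (ℕ → ℕ), (∀ n, LaverIdeal (X n)) → LaverIdeal (⋃ n, X n)) ∧
    (∀ X Y : Set (ℕ → ℕ), LaverIdeal X → Y ⊆ X → LaverIdeal Y) := by
  constructor
  · exact fun X hX => laver_union hX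
  · intro X Y hX hYX p hp
    obtain ⟨q, h1, h2, h3⟩ := hX p hp
    refine ⟨q, h1, h2, ?_⟩
    rw [Set.eq_empty_iff_forall_notMem] at *
    exact fun η ⟨hη1, hη2⟩ => h3 η ⟨hYX hη1, hη2⟩
end

section
/- (m⁰ is a σ-ideal) If ⟨X_n : n ∈ ℕ⟩ is a countable family of sets each belonging to the Miller ideal m⁰, then ⋃_{n∈ℕ} X_n belongs to m⁰; moreover, any subset of a member of m⁰ belongs to m⁰. -/
namespace MillerSigma

open Classical

lemma pref_total {a b c : List ℕ} (h1 : a <+: c) (h2 : b <+: c) : a <+: b ∨ b <+: a :=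
  List.prefix_or_prefix_of_prefix h1 h2

lemma pref_eq {a b : List ℕ} (h : a <+: b) (hl : b.length ≤ a.length) : a = b :=
  List.IsPrefix.eq_of_length_le h hl

lemma range_pref {m n : ℕ} (h : m ≤ n) : List.range m <+: List.range n := by
  refine ⟨(List.range (n - m)).map (m + ·), ?_⟩
  rw [← List.range_add, Nat.add_sub_cancel' h]

lemma succs_mono {q q' : Set (List ℕ)} (h : q ⊆ q') (s : List ℕ) :
    Succs q s ⊆ Succs q' s := fun _ hn => h hn

lemma branches_mono {q q' : Set (List ℕ)} (h : q ⊆ q') : Branches q ⊆ Branches q' :=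
  fun _ hη n => h (hη n)

/-- The restriction of a tree above/below a node `c`. -/
def Above (r : Set (List ℕ)) (c : List ℕ) : Set (List ℕ) :=
  {u | u ∈ r ∧ (u <+: c ∨ c <+: u)}

lemma above_subset (r : Set (List ℕ)) (c : List ℕ) : Above r c ⊆ r := fun _ h => h.1

lemma above_miller {r : Set (List ℕ)} {c : List ℕ} (hr : IsMillerTree r) (hc : c ∈ r) :
    IsMillerTree (Above r c) := by
  obtain ⟨htree, ⟨st, hst, hstem⟩, hsplit⟩ := hr
  refine ⟨?_, ⟨c, ⟨hc, Or.inl (List.prefix_refl c)⟩, fun s hs => hs.2⟩, ?_⟩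
  · rintro s ⟨hs, hcomp⟩ t ht
    refine ⟨htree s hs t ht, ?_⟩
    rcases hcomp with h | h
    · exact Or.inl (ht.trans h)
    · exact pref_total ht h
  · rintro s ⟨hs, hcomp⟩
    -- let w be the longer of s, c
    obtain ⟨w, hw, hsw, hcw⟩ : ∃ w, w ∈ r ∧ s <+: w ∧ c <+: w := by
      rcases hcomp with h | h
      · exact ⟨c, hc, h, List.prefix_refl c⟩
      · exact ⟨s, hs, List.prefix_refl s, h⟩
    obtain ⟨t, ht, hwt, hinf⟩ := hsplit w hw
    refine ⟨t, ⟨ht, Or.inr (hcw.trans hwt)⟩, hsw.trans hwt, ?_⟩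
    refine hinf.mono ?_
    intro n hn
    exact ⟨hn, Or.inr ((hcw.trans hwt).trans (List.prefix_append t [n]))⟩

/-- Shrink a Miller tree to avoid finitely many members of the ideal. -/
lemma shrinkFin (X : ℕ → Set (ℕ → ℕ)) (hX : ∀ n, MillerIdeal (X n)) (m : ℕ) :
    ∀ r, IsMillerTree r → ∃ q, IsMillerTree q ∧ q ⊆ r ∧ ∀ i < m, X i ∩ Branches q = ∅ := by
  induction m with
  | zero => exact fun r hr => ⟨r, hr, subset_rfl, fun i hi => absurd hi (Nat.not_lt_zero i)⟩
  | succ m ih =>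
    intro r hr
    obtain ⟨q, hq, hqr, hdis⟩ := ih r hr
    obtain ⟨q', hq', hq'q, hdis'⟩ := hX m q hq
    refine ⟨q', hq', hq'q.trans hqr, fun i hi => ?_⟩
    rcases Nat.lt_succ_iff_lt_or_eq.mp hi with h | rfl
    · exact Set.eq_empty_of_subset_empty
        ((hdis i h) ▸ Set.inter_subset_inter_right _ (branches_mono hq'q))
    · exact hdis'

/-- In a Miller tree all of whose elements are comparable with `c`,
there is a splitting node extending `c`. -/
lemma exists_split {q : Set (List ℕ)} (hq : IsMillerTree q) (c : List ℕ)
    (hcomp : ∀ u ∈ q, u <+: c ∨ c <+: u) :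
    ∃ t ∈ q, c <+: t ∧ (Succs q t).Infinite := by
  obtain ⟨htree, ⟨st, hst, _⟩, hsplit⟩ := hq
  obtain ⟨t, ht, _, hinf⟩ := hsplit st hst
  by_cases hct : c <+: t
  · exact ⟨t, ht, hct, hinf⟩
  · exfalso
    have htc : t <+: c := (hcomp t ht).resolve_right hct
    have hlt : t.length < c.length := by
      rcases Nat.lt_or_ge t.length c.length with h | h
      · exact h
      · exact absurd (pref_eq htc h ▸ List.prefix_refl c) hct
    have key : ∀ n ∈ Succs q t, t ++ [n] <+: c := by
      intro n hn
      rcases hcomp _ hn with h | h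
      · exact h
      · have hlen : (t ++ [n]).length ≤ c.length := by
          simp only [List.length_append, List.length_singleton]
          omega
        exact (pref_eq h hlen).symm ▸ List.prefix_refl _
    apply hinf
    apply Set.Subsingleton.finite
    intro n hn n' hn'
    have hcmp := pref_total (key n hn) (key n' hn')
    have heq : t ++ [n] = t ++ [n'] := by
      rcases hcmp with h | h
      · exact pref_eq h (by simp)
      · exact (pref_eq h (by simp)).symm
    simpa using heq

/-- One step of the fusion: shrink the part of `q` above `c` for the first `m` sets,
and find a splitting node extending `c`. -/
lemma step_ex (X : ℕ → Set (ℕ → ℕ)) (hX : ∀ n, MillerIdeal (X n))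
    {q : Set (List ℕ)} {c : List ℕ} (hq : IsMillerTree q) (hc : c ∈ q) (m : ℕ) :
    ∃ Q : Set (List ℕ) × List ℕ, IsMillerTree Q.1 ∧ Q.1 ⊆ q ∧ c <+: Q.2 ∧ Q.2 ∈ Q.1 ∧
      (Succs Q.1 Q.2).Infinite ∧ ∀ i < m, X i ∩ Branches Q.1 = ∅ := by
  obtain ⟨q', hq', hq'sub, hdis⟩ := shrinkFin X hX m (Above q c) (above_miller hq hc)
  obtain ⟨t, ht, hct, hinf⟩ := exists_split hq' c (fun u hu => (hq'sub hu).2)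
  exact ⟨(q', t), hq', hq'sub.trans (above_subset q c), hct, ht, hinf, hdis⟩

/-- `Good Q` says `Q.1` is a Miller tree with splitting node `Q.2`. -/
def Good (Q : Set (List ℕ) × List ℕ) : Prop :=
  IsMillerTree Q.1 ∧ Q.2 ∈ Q.1 ∧ (Succs Q.1 Q.2).Infinite

/-- An injective enumeration of successors of the splitting node. -/
noncomputable def nn (Q : Set (List ℕ) × List ℕ) (k : ℕ) : ℕ :=
  if h : (Succs Q.1 Q.2).Infinite then (Set.Infinite.natEmbedding _ h k : ℕ) else 0

lemma nn_mem {Q : Set (List ℕ) × List ℕ} (h : (Succs Q.1 Q.2).Infinite) (k : ℕ) :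
    Q.2 ++ [nn Q k] ∈ Q.1 := by
  rw [nn, dif_pos h]
  exact (Set.Infinite.natEmbedding _ h k).2

lemma nn_inj {Q : Set (List ℕ) × List ℕ} (h : (Succs Q.1 Q.2).Infinite) :
    Function.Injective (nn Q) := by
  intro a b hab
  rw [nn, nn, dif_pos h, dif_pos h] at hab
  exact (Set.Infinite.natEmbedding _ h).injective (Subtype.ext hab)

noncomputable def step (X : ℕ → Set (ℕ → ℕ)) (hX : ∀ n, MillerIdeal (X n))
    (Q : Set (List ℕ) × List ℕ) (m k : ℕ) : Set (List ℕ) × List ℕ :=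
  if h : Good Q then Classical.choose (step_ex X hX h.1 (nn_mem h.2.2 k) m) else (∅, [])

/-- The fusion function: to each index `σ` (a list, read as a reversed finite sequence)
assign a Miller tree together with a splitting node. -/
noncomputable def F (X : ℕ → Set (ℕ → ℕ)) (hX : ∀ n, MillerIdeal (X n))
    (p : Set (List ℕ)) : List ℕ → Set (List ℕ) × List ℕ
  | [] => if h : IsMillerTree p ∧ [] ∈ p then Classical.choose (step_ex X hX h.1 h.2 1)
          else (∅, [])
  | k :: σ => step X hX (F X hX p σ) (σ.length + 2) k

lemma nil_mem_p (p : Set (List ℕ)) (hp : IsMillerTree p) : ([] : List ℕ) ∈ p := by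
  obtain ⟨htree, ⟨st, hst, _⟩, _⟩ := hp
  exact htree st hst [] (List.nil_prefix)

/-- All invariants of the fusion, proved simultaneously by induction. -/
lemma F_spec (X : ℕ → Set (ℕ → ℕ)) (hX : ∀ n, MillerIdeal (X n)) (p : Set (List ℕ))
    (hp : IsMillerTree p) : ∀ σ : List ℕ,
    (Good (F X hX p σ) ∧ (F X hX p σ).1 ⊆ p ∧
      (∀ i ≤ σ.length, X i ∩ Branches (F X hX p σ).1 = ∅)) ∧
    (∀ k, (F X hX p σ).2 ++ [nn (F X hX p σ) k] <+: (F X hX p (k :: σ)).2 ∧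
      (F X hX p (k :: σ)).1 ⊆ (F X hX p σ).1) := by
  have key : ∀ σ : List ℕ,
      (Good (F X hX p σ) ∧ (F X hX p σ).1 ⊆ p ∧
        (∀ i ≤ σ.length, X i ∩ Branches (F X hX p σ).1 = ∅)) →
      ∀ k, ((F X hX p (k :: σ)).1 ⊆ (F X hX p σ).1 ∧
        (F X hX p σ).2 ++ [nn (F X hX p σ) k] <+: (F X hX p (k :: σ)).2) ∧
        (Good (F X hX p (k :: σ)) ∧ (F X hX p (k :: σ)).1 ⊆ p ∧
          (∀ i ≤ (k :: σ).length, X i ∩ Branches (F X hX p (k :: σ)).1 = ∅)) := by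
    intro σ hσ k
    obtain ⟨hgood, hsub, _⟩ := hσ
    have hF : F X hX p (k :: σ) = step X hX (F X hX p σ) (σ.length + 2) k := rfl
    rw [hF, step, dif_pos hgood]
    obtain ⟨hmil, hsub', hpref, hmem, hinf, hdis⟩ :=
      Classical.choose_spec (step_ex X hX hgood.1 (nn_mem hgood.2.2 k) (σ.length + 2))
    refine ⟨⟨hsub', hpref⟩, ⟨hmil, hmem, hinf⟩, hsub'.trans hsub, fun i hi => hdis i ?_⟩
    simp only [List.length_cons] at hi; omega
  have base : Good (F X hX p []) ∧ (F X hX p []).1 ⊆ p ∧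
      (∀ i ≤ ([] : List ℕ).length, X i ∩ Branches (F X hX p []).1 = ∅) := by
    have h : IsMillerTree p ∧ ([] : List ℕ) ∈ p := ⟨hp, nil_mem_p p hp⟩
    have hF : F X hX p [] = Classical.choose (step_ex X hX h.1 h.2 1) := by
      rw [F, dif_pos h]
    rw [hF]
    obtain ⟨hmil, hsub', _, hmem, hinf, hdis⟩ :=
      Classical.choose_spec (step_ex X hX h.1 h.2 1)
    refine ⟨⟨hmil, hmem, hinf⟩, hsub', fun i hi => ?_⟩
    have : i = 0 := Nat.le_zero.mp hi
    exact this ▸ hdis 0 Nat.one_pos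
  intro σ
  induction σ with
  | nil => exact ⟨base, fun k => ⟨((key [] base) k).1.2, ((key [] base) k).1.1⟩⟩
  | cons k σ ih =>
    have h := ((key σ ih.1) k).2
    exact ⟨h, fun k' => ⟨((key (k :: σ) h) k').1.2, ((key (k :: σ) h) k').1.1⟩⟩


lemma suffix_cons_exists {σ τ : List ℕ} (h : σ <:+ τ) (hne : σ ≠ τ) :
    ∃ j, (j :: σ) <:+ τ := by
  obtain ⟨l, rfl⟩ := h
  rcases List.eq_nil_or_concat l with rfl | ⟨l', j, rfl⟩
  · simp at hne
  · exact ⟨j, l', by simp⟩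

section Order

variable (X : ℕ → Set (ℕ → ℕ)) (hX : ∀ n, MillerIdeal (X n)) (p : Set (List ℕ))

/-- Monotonicity of the fusion along the suffix order. -/
lemma F_mono (hp : IsMillerTree p) :
    ∀ τ σ : List ℕ, σ <:+ τ →
      (F X hX p σ).2 <+: (F X hX p τ).2 ∧ (F X hX p τ).1 ⊆ (F X hX p σ).1 := by
  intro τ
  induction τ with
  | nil =>
    intro σ h
    rw [List.suffix_nil.mp h]
    exact ⟨List.prefix_refl _, subset_rfl⟩
  | cons k τ' ih =>
    intro σ h
    rcases List.suffix_cons_iff.mp h with rfl | h'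
    · exact ⟨List.prefix_refl _, subset_rfl⟩
    · obtain ⟨h1, h2⟩ := ih σ h'
      obtain ⟨h3, h4⟩ := (F_spec X hX p hp τ').2 k
      exact ⟨h1.trans ((List.prefix_append _ _).trans h3), h4.trans h2⟩

lemma F_len (hp : IsMillerTree p) :
    ∀ τ σ : List ℕ, σ <:+ τ → σ ≠ τ →
      (F X hX p σ).2.length < (F X hX p τ).2.length := by
  intro τ
  induction τ with
  | nil => intro σ h hne; exact absurd (List.suffix_nil.mp h) hne
  | cons k τ' ih =>
    intro σ h hne
    rcases List.suffix_cons_iff.mp h with rfl | h'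
    · exact absurd rfl hne
    · have step : (F X hX p τ').2.length < (F X hX p (k :: τ')).2.length := by
        have h3 := ((F_spec X hX p hp τ').2 k).1
        have := h3.length_le
        simp only [List.length_append, List.length_singleton] at this
        omega
      by_cases hστ : σ = τ'
      · exact hστ ▸ step
      · exact (ih σ h' hστ).trans step

/-- Comparable splitting nodes come from comparable indices. -/
lemma F_comp (hp : IsMillerTree p) :
    ∀ τ σ : List ℕ,
      ((F X hX p σ).2 <+: (F X hX p τ).2 ∨ (F X hX p τ).2 <+: (F X hX p σ).2) →
      σ <:+ τ ∨ τ <:+ σ := by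
  intro τ
  induction τ with
  | nil => intro σ _; exact Or.inr List.nil_suffix
  | cons k τ' ih =>
    intro σ h
    have hτ'τ : (F X hX p τ').2 <+: (F X hX p (k :: τ')).2 :=
      (F_mono X hX p hp (k :: τ') τ' (List.suffix_cons k τ')).1
    have hcmp : (F X hX p σ).2 <+: (F X hX p τ').2 ∨
        (F X hX p τ').2 <+: (F X hX p σ).2 := by
      rcases h with h | h
      · exact pref_total h hτ'τ
      · exact Or.inr (hτ'τ.trans h)
    rcases ih σ hcmp with hστ' | hτ'σ
    · exact Or.inl (hστ'.trans (List.suffix_cons k τ'))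
    · by_cases hστ : σ = τ'
      · exact Or.inl (hστ ▸ List.suffix_cons k τ')
      · obtain ⟨j, hj⟩ := suffix_cons_exists hτ'σ (Ne.symm hστ)
        have hA : (F X hX p τ').2 ++ [nn (F X hX p τ') j] <+: (F X hX p σ).2 :=
          (((F_spec X hX p hp τ').2 j).1).trans
            (F_mono X hX p hp σ (j :: τ') hj).1
        have hB : (F X hX p τ').2 ++ [nn (F X hX p τ') k] <+: (F X hX p (k :: τ')).2 :=
          ((F_spec X hX p hp τ').2 k).1
        have heq : (F X hX p τ').2 ++ [nn (F X hX p τ') j] =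
            (F X hX p τ').2 ++ [nn (F X hX p τ') k] := by
          rcases h with h | h
          · -- both prefixes of (F (k::τ')).2
            rcases pref_total (hA.trans h) hB with h' | h'
            · exact pref_eq h' (by simp)
            · exact (pref_eq h' (by simp)).symm
          · rcases pref_total hA (hB.trans h) with h' | h'
            · exact pref_eq h' (by simp)
            · exact (pref_eq h' (by simp)).symm
        have hjk : j = k := by
          have hgood := (F_spec X hX p hp τ').1.1
          exact nn_inj hgood.2.2 (by simpa using heq)
        exact Or.inr (hjk ▸ hj)

lemma F_le (hp : IsMillerTree p) {σ τ : List ℕ}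
    (h : (F X hX p σ).2 <+: (F X hX p τ).2) : σ <:+ τ := by
  rcases F_comp X hX p hp τ σ (Or.inl h) with h' | h'
  · exact h'
  · by_cases hστ : τ = σ
    · exact hστ ▸ List.suffix_refl τ
    · exact absurd h.length_le (Nat.not_le.mpr (F_len X hX p hp σ τ h' hστ))

end Order

/-- The heart of the matter: `m⁰` is closed under countable unions. -/
lemma union_mem (X : ℕ → Set (ℕ → ℕ)) (hX : ∀ n, MillerIdeal (X n)) :
    MillerIdeal (⋃ n, X n) := by
  intro p hp
  set Fp := F X hX p with hFp
  refine ⟨{t | ∃ σ : List ℕ, t <+: (Fp σ).2}, ?_, ?_, ?_⟩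
  · refine ⟨?_, ⟨(Fp []).2, ⟨[], List.prefix_refl _⟩, ?_⟩, ?_⟩
    · rintro s ⟨σ, hs⟩ t ht
      exact ⟨σ, ht.trans hs⟩
    · rintro t ⟨σ, ht⟩
      exact pref_total ht (F_mono X hX p hp σ [] List.nil_suffix).1
    · rintro t ⟨σ, ht⟩
      refine ⟨(Fp σ).2, ⟨σ, List.prefix_refl _⟩, ht, ?_⟩
      apply Set.infinite_of_injective_forall_mem
        (f := fun k => nn (Fp σ) k)
      · exact nn_inj ((F_spec X hX p hp σ).1.1).2.2
      · intro k
        exact ⟨k :: σ, ((F_spec X hX p hp σ).2 k).1⟩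
  · rintro t ⟨σ, ht⟩
    have h1 : (Fp σ).2 ∈ (Fp σ).1 := ((F_spec X hX p hp σ).1.1).2.1
    have h2 : (Fp σ).1 ⊆ p := (F_spec X hX p hp σ).1.2.1
    exact hp.1 _ (h2 h1) t ht
  · -- disjointness from every X m
    rw [Set.eq_empty_iff_forall_notMem]
    rintro η ⟨hηX, hηB⟩
    obtain ⟨m, hm⟩ := Set.mem_iUnion.mp hηX
    -- notation for initial segments of η
    set res : ℕ → List ℕ := fun n => (List.range n).map η with hres
    have res_len : ∀ n, (res n).length = n := by intro n; simp [hres]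
    have res_mono : ∀ {a b : ℕ}, a ≤ b → res a <+: res b := by
      intro a b hab
      exact (range_pref hab).map η
    have hbr : ∀ n, ∃ σ : List ℕ, res n <+: (Fp σ).2 := hηB
    -- `Pη s` : `s` is an initial segment of `η`
    have hP_of : ∀ {s : List ℕ} {n : ℕ}, s <+: res n → s.length = n → s = res n := by
      intro s n h hl
      exact pref_eq h (by rw [res_len, hl])
    -- base of the chain
    have base : (Fp []).2 = res (Fp []).2.length := by
      obtain ⟨τ, hτ⟩ := hbr (Fp []).2.length
      have h0 : (Fp []).2 <+: (Fp τ).2 := (F_mono X hX p hp τ [] List.nil_suffix).1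
      rcases pref_total h0 hτ with h | h
      · exact pref_eq h (res_len _).le
      · exact (pref_eq h (res_len _).ge).symm
    -- extending the chain one step
    have good : ∀ σ : List ℕ, Good (Fp σ) := fun σ => (F_spec X hX p hp σ).1.1
    have step : ∀ σ : List ℕ, (Fp σ).2 = res (Fp σ).2.length →
        ∃ j, (Fp (j :: σ)).2 = res (Fp (j :: σ)).2.length := by
      intro σ hσ
      set L := (Fp σ).2.length with hL
      -- round 1
      obtain ⟨τ, hτ⟩ := hbr (L + 1)
      have hσres : (Fp σ).2 <+: res (L + 1) := by
        rw [hσ]; exact res_mono (Nat.le_succ L)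
      have hστ : σ <:+ τ := F_le X hX p hp (hσres.trans hτ)
      have hne : σ ≠ τ := by
        intro e
        rw [← e] at hτ
        have := hτ.length_le
        rw [res_len, ← hL] at this
        omega
      obtain ⟨j, hj⟩ := suffix_cons_exists hστ hne
      have hjτ : (Fp (j :: σ)).2 <+: (Fp τ).2 := (F_mono X hX p hp τ _ hj).1
      have hA : (Fp σ).2 ++ [nn (Fp σ) j] <+: (Fp (j :: σ)).2 :=
        ((F_spec X hX p hp σ).2 j).1
      have hlen1 : L + 1 ≤ (Fp (j :: σ)).2.length := by
        have := hA.length_le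
        simp only [List.length_append, List.length_singleton] at this
        omega
      have hr1 : res (L + 1) <+: (Fp (j :: σ)).2 := by
        rcases pref_total hτ hjτ with h | h
        · exact h
        · have e := pref_eq h (by rw [res_len]; omega)
          rw [e]
      have hstar : res (L + 1) = (Fp σ).2 ++ [nn (Fp σ) j] := by
        rcases pref_total hr1 hA with h | h
        · exact pref_eq h (by simp only [List.length_append,
            List.length_singleton, res_len]; omega)
        · exact (pref_eq h (by simp only [List.length_append,
            List.length_singleton, res_len]; omega)).symm
      -- round 2
      set N := (Fp (j :: σ)).2.length with hN
      obtain ⟨τ', hτ'⟩ := hbr N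
      have hσres' : (Fp σ).2 <+: res N := by
        rw [hσ]; exact res_mono (by omega)
      have hστ' : σ <:+ τ' := F_le X hX p hp (hσres'.trans hτ')
      have hne' : σ ≠ τ' := by
        intro e
        rw [← e] at hτ'
        have := hτ'.length_le
        rw [res_len, ← hL] at this
        omega
      obtain ⟨j', hj'⟩ := suffix_cons_exists hστ' hne'
      have hj'τ' : (Fp (j' :: σ)).2 <+: (Fp τ').2 := (F_mono X hX p hp τ' _ hj').1
      have hA' : (Fp σ).2 ++ [nn (Fp σ) j'] <+: (Fp (j' :: σ)).2 :=
        ((F_spec X hX p hp σ).2 j').1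
      rcases pref_total hτ' hj'τ' with h | h
      · -- res N <+: (Fp (j' :: σ)).2
        have hres1 : res (L + 1) <+: (Fp (j' :: σ)).2 :=
          (res_mono (by omega : L + 1 ≤ N)).trans h
        have e1 : res (L + 1) = (Fp σ).2 ++ [nn (Fp σ) j'] := by
          rcases pref_total hres1 hA' with h' | h'
          · exact pref_eq h' (by simp only [List.length_append,
              List.length_singleton, res_len]; omega)
          · exact (pref_eq h' (by simp only [List.length_append,
              List.length_singleton, res_len]; omega)).symm
        have hj'j : j = j' := nn_inj (good σ).2.2 (by
          have := hstar.symm.trans e1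
          simpa using this)
        rw [← hj'j] at h
        refine ⟨j, ?_⟩
        rw [← hN]
        exact (pref_eq h (by have h1 := res_len N; omega)).symm
      · -- (Fp (j' :: σ)).2 <+: res N
        have hA'' : (Fp σ).2 ++ [nn (Fp σ) j'] <+: res N := hA'.trans h
        have e1 : res (L + 1) = (Fp σ).2 ++ [nn (Fp σ) j'] := by
          rcases pref_total (res_mono (by omega : L + 1 ≤ N)) hA'' with h' | h'
          · exact pref_eq h' (by simp only [List.length_append,
              List.length_singleton, res_len]; omega)
          · exact (pref_eq h' (by simp only [List.length_append,
              List.length_singleton, res_len]; omega)).symm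
        have hj'j : j = j' := nn_inj (good σ).2.2 (by
          have := hstar.symm.trans e1
          simpa using this)
        rw [← hj'j] at h
        refine ⟨j, ?_⟩
        rw [← hN]
        exact pref_eq h (by have h1 := res_len N; omega)
    -- a chain of indices along `η`
    have chain : ∀ m, ∃ σ : List ℕ, σ.length = m ∧ (Fp σ).2 = res (Fp σ).2.length := by
      intro m
      induction m with
      | zero => exact ⟨[], rfl, base⟩
      | succ m ih =>
        obtain ⟨σ, hlenσ, hσ⟩ := ih
        obtain ⟨j, hj⟩ := step σ hσ
        exact ⟨j :: σ, by simp [hlenσ], hj⟩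
    obtain ⟨σ, hlenσ, hσ⟩ := chain m
    have hbranch : η ∈ Branches (Fp σ).1 := by
      intro n
      show res n ∈ (Fp σ).1
      rcases le_or_gt n (Fp σ).2.length with h | h
      · have hpre : res n <+: (Fp σ).2 := by rw [hσ]; exact res_mono h
        exact (good σ).1.1 _ (good σ).2.1 _ hpre
      · obtain ⟨τ, hτ⟩ := hbr n
        have hpre : (Fp σ).2 <+: res n := by rw [hσ]; exact res_mono h.le
        have hστ : σ <:+ τ := F_le X hX p hp (hpre.trans hτ)
        have hmem : res n ∈ (Fp τ).1 := (good τ).1.1 _ (good τ).2.1 _ hτ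
        exact (F_mono X hX p hp τ σ hστ).2 hmem
    have hdis := (F_spec X hX p hp σ).1.2.2 m (by omega)
    exact Set.eq_empty_iff_forall_notMem.mp hdis η ⟨hm, hbranch⟩

end MillerSigma

/-- `m⁰` is a σ-ideal: it is closed under countable unions and under subsets. -/
theorem miller_sigma_ideal :
    (∀ X : ℕ → Set (ℕ → ℕ), (∀ n, MillerIdeal (X n)) → MillerIdeal (⋃ n, X n)) ∧
    (∀ X Y : Set (ℕ → ℕ), MillerIdeal X → Y ⊆ X → MillerIdeal Y) := by
  constructor
  · exact fun X hX => MillerSigma.union_mem X hX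
  · intro X Y hx hYX p hp
    obtain ⟨q, hq, hqp, hdis⟩ := hx p hp
    exact ⟨q, hq, hqp,
      Set.eq_empty_of_subset_empty (hdis ▸ Set.inter_subset_inter_left _ hYX)⟩
end

section
/- (Fact 1.2: (Q, ≤*) is 𝔱-closed) Let γ < 𝔱 and let ⟨Ā_α : α < γ⟩ be a sequence of elements of Q that is decreasing with respect to ≤* (i.e. Ā_β ≤* Ā_α whenever α ≤ β < γ). Then there exists B̄ ∈ Q with B̄ ≤* Ā_α for every α < γ. -/
/-- `A ⊆* B` : `A ∖ B` is finite. -/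
def SubsetStar (A B : Set ℕ) : Prop := (A \ B).Finite

/-- `T` has an infinite pseudo-intersection. -/
def HasPseudoIntersection (T : Set (Set ℕ)) : Prop :=
  ∃ B : Set ℕ, B.Infinite ∧ ∀ A ∈ T, SubsetStar B A

/-- `T` is a family of infinite subsets of `ℕ`, well-ordered and strictly decreasing
under `⊆*` (every nonempty subfamily has a `⊆*`-greatest member). -/
def IsTowerFamily (T : Set (Set ℕ)) : Prop :=
  (∀ A ∈ T, A.Infinite) ∧
  (∀ A ∈ T, ∀ B ∈ T, SubsetStar A B ∨ SubsetStar B A) ∧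
  (∀ A ∈ T, ∀ B ∈ T, A ≠ B → ¬ (SubsetStar A B ∧ SubsetStar B A)) ∧
  T.WellFoundedOn (fun A B => SubsetStar B A ∧ ¬ SubsetStar A B)

/-- The tower number `𝔱`. -/
noncomputable def towerNumber : Cardinal :=
  sInf {c : Cardinal | ∃ T : Set (Set ℕ),
    IsTowerFamily T ∧ ¬ HasPseudoIntersection T ∧ Cardinal.mk ↥T = c}

/-- `Ā ≤* B̄` on `Q`: `A_s ⊆* B_s` for every `s`, and `A_s ⊆ B_s` for all but finitely many `s`. -/
def QLE (A B : List ℕ → Set ℕ) : Prop :=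
  (∀ s, SubsetStar (A s) (B s)) ∧ {s : List ℕ | ¬ A s ⊆ B s}.Finite

namespace QtClosed

lemma subsetStar_refl (X : Set ℕ) : SubsetStar X X := by
  simp [SubsetStar]

lemma subsetStar_of_subset {X Y : Set ℕ} (h : X ⊆ Y) : SubsetStar X Y := by
  have : X \ Y = ∅ := Set.diff_eq_empty.mpr h
  simp [SubsetStar, this]

lemma subsetStar_trans {X Y Z : Set ℕ} (h1 : SubsetStar X Y) (h2 : SubsetStar Y Z) :
    SubsetStar X Z := by
  refine Set.Finite.subset (h1.union h2) ?_
  intro n hn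
  by_cases hy : n ∈ Y
  · exact Or.inr ⟨hy, hn.2⟩
  · exact Or.inl ⟨hn.1, hy⟩

/-- Almost-equality of sets of naturals. -/
def EStar (X Y : Set ℕ) : Prop := SubsetStar X Y ∧ SubsetStar Y X

lemma estar_refl (X : Set ℕ) : EStar X X := ⟨subsetStar_refl X, subsetStar_refl X⟩

lemma estar_symm {X Y : Set ℕ} (h : EStar X Y) : EStar Y X := ⟨h.2, h.1⟩

lemma estar_trans {X Y Z : Set ℕ} (h1 : EStar X Y) (h2 : EStar Y Z) : EStar X Z :=
  ⟨subsetStar_trans h1.1 h2.1, subsetStar_trans h2.2 h1.2⟩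

lemma estar_equivalence : Equivalence EStar :=
  ⟨estar_refl, estar_symm, estar_trans⟩

/-- The setoid of almost-equality. -/
def eSetoid : Setoid (Set ℕ) := ⟨EStar, estar_equivalence⟩

/-- A canonical representative of the almost-equality class. -/
noncomputable def rep (X : Set ℕ) : Set ℕ := (Quotient.mk eSetoid X).out

lemma rep_estar (X : Set ℕ) : EStar (rep X) X := Quotient.mk_out (s := eSetoid) X

lemma rep_eq_of_estar {X Y : Set ℕ} (h : EStar X Y) : rep X = rep Y :=
  congrArg Quotient.out (Quotient.sound (s := eSetoid) h)

lemma subsetStar_congr {X X' Y Y' : Set ℕ} (hX : EStar X X') (hY : EStar Y Y')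
    (h : SubsetStar X Y) : SubsetStar X' Y' :=
  subsetStar_trans (subsetStar_trans hX.2 h) hY.1

lemma infinite_of_estar {X Y : Set ℕ} (h : EStar X Y) (hX : X.Infinite) : Y.Infinite := by
  intro hfin
  exact hX (Set.Finite.subset (hfin.union h.1) (fun n hn => by
    by_cases hy : n ∈ Y
    · exact Or.inl hy
    · exact Or.inr ⟨hn, hy⟩))

/-- Key lemma: any `⊆*`-decreasing sequence of infinite sets of length `< 𝔱` has an
infinite pseudo-intersection. -/
lemma exists_pseudoInter (γ : Ordinal) (hγ : γ.card < towerNumber)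
    (X : Ordinal → Set ℕ) (hinf : ∀ α < γ, (X α).Infinite)
    (hdec : ∀ α β, α ≤ β → β < γ → SubsetStar (X β) (X α)) :
    ∃ Y : Set ℕ, Y.Infinite ∧ ∀ α < γ, SubsetStar Y (X α) := by
  classical
  set ι : γ.ToType → Ordinal := fun x => (((Ordinal.ToType.mk (o := γ))).symm x : Set.Iio γ).1
    with hιdef
  have hι : ∀ x, ι x < γ := fun x => (((Ordinal.ToType.mk (o := γ))).symm x).2
  set g : γ.ToType → Set ℕ := fun x => rep (X (ι x)) with hgdef
  set T : Set (Set ℕ) := Set.range g with hTdef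
  have hmem : ∀ α, α < γ → rep (X α) ∈ T := by
    intro α hα
    refine ⟨(Ordinal.ToType.mk (o := γ)) ⟨α, hα⟩, ?_⟩
    simp [hgdef, hιdef]
  have hrange : ∀ Z ∈ T, ∃ a, a < γ ∧ Z = rep (X a) := by
    rintro Z ⟨x, rfl⟩
    exact ⟨ι x, hι x, rfl⟩
  -- the basic comparability transfer
  have hcmp : ∀ a b, a ≤ b → b < γ → SubsetStar (rep (X b)) (rep (X a)) := by
    intro a b hab hb
    exact subsetStar_congr (estar_symm (rep_estar _)) (estar_symm (rep_estar _))
      (hdec a b hab hb)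
  have htower : IsTowerFamily T := by
    refine ⟨?_, ?_, ?_, ?_⟩
    · intro Z hZ
      obtain ⟨a, ha, rfl⟩ := hrange Z hZ
      exact infinite_of_estar (estar_symm (rep_estar _)) (hinf a ha)
    · intro Z hZ W hW
      obtain ⟨a, ha, rfl⟩ := hrange Z hZ
      obtain ⟨b, hb, rfl⟩ := hrange W hW
      rcases le_total a b with h | h
      · exact Or.inr (hcmp a b h hb)
      · exact Or.inl (hcmp b a h ha)
    · intro Z hZ W hW hne hcontra
      obtain ⟨a, ha, rfl⟩ := hrange Z hZ
      obtain ⟨b, hb, rfl⟩ := hrange W hW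
      exact hne (rep_eq_of_estar (estar_trans (estar_symm (rep_estar (X a)))
        (estar_trans ⟨hcontra.1, hcontra.2⟩ (rep_estar (X b)))))
    · -- well-foundedness
      have : ∀ t : ↥T, ∃ a, a < γ ∧ (t : Set ℕ) = rep (X a) := fun t => hrange t t.2
      choose φ hφlt hφ using this
      refine Subrelation.wf (r := fun t u : ↥T => φ t < φ u) ?_ (InvImage.wf φ Ordinal.lt_wf)
      intro t u h
      -- h : SubsetStar ↑u ↑t ∧ ¬ SubsetStar ↑t ↑u
      by_contra hle
      push_neg at hle
      -- φ u ≤ φ t, so X (φ t) ⊆* X (φ u), so rep t ⊆* rep u, contradiction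
      have : SubsetStar (t : Set ℕ) (u : Set ℕ) := by
        rw [hφ t, hφ u]
        exact hcmp (φ u) (φ t) hle (hφlt t)
      exact h.2 this
  have hcard : Cardinal.mk ↥T ≤ γ.card :=
    (Cardinal.mk_range_le).trans_eq (Cardinal.mk_toType γ)
  have hpi : HasPseudoIntersection T := by
    by_contra h
    have : towerNumber ≤ Cardinal.mk ↥T := csInf_le' ⟨T, htower, h, rfl⟩
    exact absurd hγ (not_lt.mpr (this.trans hcard))
  obtain ⟨B, hBinf, hB⟩ := hpi
  exact ⟨B, hBinf, fun α hα =>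
    subsetStar_trans (hB _ (hmem α hα)) (rep_estar (X α)).1⟩

/-- A set `X` is `F`-spread: any element having a predecessor in `X` above `n` bounds `F n`. -/
def Spread (F : ℕ → ℕ) (X : Set ℕ) : Prop :=
  X.Infinite ∧ ∀ n a b, a ∈ X → b ∈ X → n < a → a < b → F n ≤ b

lemma exists_spread (F : ℕ → ℕ) (hF : Monotone F) {Y : Set ℕ} (hY : Y.Infinite) :
    ∃ Z, Z ⊆ Y ∧ Spread F Z := by
  classical
  have hex : ∀ m : ℕ, ∃ y ∈ Y, m < y := fun m => hY.exists_gt m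
  choose v hvY hvlt using hex
  let x : ℕ → ℕ := fun k => Nat.rec (v 0) (fun _ xk => v (max xk (F xk))) k
  have hxs : ∀ k, x (k + 1) = v (max (x k) (F (x k))) := fun k => rfl
  have hxY : ∀ k, x k ∈ Y := by
    intro k
    cases k with
    | zero => exact hvY 0
    | succ n => rw [hxs n]; exact hvY _
  have hmono : StrictMono x := by
    apply strictMono_nat_of_lt_succ
    intro k
    rw [hxs k]
    exact lt_of_le_of_lt (le_max_left _ _) (hvlt _)
  have hFx : ∀ k, F (x k) < x (k + 1) := by
    intro k
    rw [hxs k]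
    exact lt_of_le_of_lt (le_max_right _ _) (hvlt _)
  refine ⟨Set.range x, ?_, Set.infinite_range_of_injective hmono.injective, ?_⟩
  · rintro _ ⟨k, rfl⟩; exact hxY k
  · rintro n _ _ ⟨i, rfl⟩ ⟨j, rfl⟩ hna hab
    have hij : i < j := hmono.lt_iff_lt.mp hab
    obtain ⟨j', rfl⟩ : ∃ j', j = i + j' + 1 := ⟨j - i - 1, by omega⟩
    have h1 : x i ≤ x (i + j') := hmono.monotone (Nat.le_add_right _ _)
    have h2 : F n ≤ F (x (i + j')) := hF (le_of_lt (lt_of_lt_of_le hna h1))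
    exact h2.trans (hFx (i + j')).le

/-- Least element of `X` above `n`. -/
noncomputable def nextS (X : Set ℕ) (n : ℕ) : ℕ := sInf {m | m ∈ X ∧ n < m}

lemma nextS_spec {X : Set ℕ} (hX : X.Infinite) (n : ℕ) :
    nextS X n ∈ X ∧ n < nextS X n := by
  have hne : {m | m ∈ X ∧ n < m}.Nonempty := by
    obtain ⟨b, hb, hlt⟩ := hX.exists_gt n
    exact ⟨b, hb, hlt⟩
  exact Nat.sInf_mem hne

lemma step_exists (γ : Ordinal) (hγ : γ.card < towerNumber) (F : Ordinal → ℕ → ℕ)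
    (hF : ∀ α, Monotone (F α)) (α : Ordinal) (P : Ordinal → Set ℕ) :
    ∃ Z : Set ℕ, Spread (F α) Z ∧
      ((α < γ ∧ (∀ β < α, (P β).Infinite) ∧
          (∀ β₁ β₂, β₁ ≤ β₂ → β₂ < α → SubsetStar (P β₂) (P β₁))) →
        ∀ β < α, SubsetStar Z (P β)) := by
  by_cases h : α < γ ∧ (∀ β < α, (P β).Infinite) ∧
      (∀ β₁ β₂, β₁ ≤ β₂ → β₂ < α → SubsetStar (P β₂) (P β₁))
  · obtain ⟨hαγ, hinf, hdec⟩ := h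
    obtain ⟨Y, hYinf, hY⟩ :=
      exists_pseudoInter α ((Ordinal.card_le_card hαγ.le).trans_lt hγ) P hinf hdec
    obtain ⟨Z, hZY, hZ⟩ := exists_spread (F α) (hF α) hYinf
    exact ⟨Z, hZ, fun _ β hβ => subsetStar_trans (subsetStar_of_subset hZY) (hY β hβ)⟩
  · obtain ⟨Z, _, hZ⟩ := exists_spread (F α) (hF α) (Set.infinite_univ (α := ℕ))
    exact ⟨Z, hZ, fun hc => absurd hc h⟩

/-- Transfinite recursion: a decreasing chain of spread sets. -/
noncomputable def chain (γ : Ordinal) (hγ : γ.card < towerNumber) (F : Ordinal → ℕ → ℕ)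
    (hF : ∀ α, Monotone (F α)) : Ordinal → Set ℕ :=
  Ordinal.lt_wf.fix (fun α IH =>
    (step_exists γ hγ F hF α (fun β => if h : β < α then IH β h else ∅)).choose)

lemma chain_eq (γ : Ordinal) (hγ : γ.card < towerNumber) (F : Ordinal → ℕ → ℕ)
    (hF : ∀ α, Monotone (F α)) (α : Ordinal) :
    chain γ hγ F hF α = (step_exists γ hγ F hF α
      (fun β => if _ : β < α then chain γ hγ F hF β else ∅)).choose := by
  exact Ordinal.lt_wf.fix_eq _ α

lemma chain_good (γ : Ordinal) (hγ : γ.card < towerNumber) (F : Ordinal → ℕ → ℕ)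
    (hF : ∀ α, Monotone (F α)) :
    ∀ α < γ, Spread (F α) (chain γ hγ F hF α) ∧
      ∀ β < α, SubsetStar (chain γ hγ F hF α) (chain γ hγ F hF β) := by
  intro α
  induction α using Ordinal.induction with
  | h α IH =>
    intro hαγ
    set P : Ordinal → Set ℕ := fun β => if _ : β < α then chain γ hγ F hF β else ∅ with hPdef
    have hspec := (step_exists γ hγ F hF α P).choose_spec
    rw [← chain_eq γ hγ F hF α] at hspec
    have hP : ∀ β, β < α → P β = chain γ hγ F hF β := by
      intro β hβ; exact dif_pos hβ
    constructor
    · exact hspec.1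
    · intro β hβ
      have := hspec.2 ⟨hαγ, ?_, ?_⟩ β hβ
      · rwa [hP β hβ] at this
      · intro β' hβ'
        rw [hP β' hβ']
        exact ((IH β' hβ' (hβ'.trans hαγ)).1).1
      · intro β₁ β₂ h12 hβ₂
        rw [hP β₁ (lt_of_le_of_lt h12 hβ₂), hP β₂ hβ₂]
        rcases eq_or_lt_of_le h12 with rfl | hlt
        · exact subsetStar_refl _
        · exact (IH β₂ hβ₂ (hβ₂.trans hαγ)).2 β₁ hlt

/-- Domination lemma: fewer than `𝔱` functions are simultaneously almost dominated. -/
lemma exists_dominating (γ : Ordinal) (hγ : γ.card < towerNumber) (f : Ordinal → ℕ → ℕ) :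
    ∃ g : ℕ → ℕ, ∀ α < γ, {k | ¬ f α k ≤ g k}.Finite := by
  classical
  set F : Ordinal → ℕ → ℕ := fun α n => (Finset.range (n + 1)).sup (f α) with hFdef
  have hF : ∀ α, Monotone (F α) := by
    intro α m n h
    exact Finset.sup_mono (Finset.range_subset_range.mpr (by omega))
  have hfF : ∀ α n, f α n ≤ F α n := fun α n =>
    Finset.le_sup (Finset.self_mem_range_succ n)
  set X := chain γ hγ F hF with hXdef
  have good := chain_good γ hγ F hF
  obtain ⟨W, hWinf, hW⟩ := exists_pseudoInter γ hγ X
    (fun α hα => ((good α hα).1).1)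
    (fun α β hle hlt => by
      rcases eq_or_lt_of_le hle with rfl | h
      · exact subsetStar_refl _
      · exact (good β hlt).2 α h)
  refine ⟨fun n => nextS W (nextS W n), fun α hα => ?_⟩
  obtain ⟨N, hN⟩ := (hW α hα).bddAbove
  refine Set.Finite.subset (Set.finite_Iic N) ?_
  intro k hk
  by_contra hkN
  simp only [Set.mem_Iic, not_le] at hkN
  apply hk
  set a := nextS W k with ha
  set b := nextS W a with hb
  obtain ⟨haW, hka⟩ := nextS_spec hWinf k
  obtain ⟨hbW, hab⟩ := nextS_spec hWinf a
  have haX : a ∈ X α := by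
    by_contra h
    exact absurd (hN (⟨haW, h⟩ : a ∈ W \ X α)) (by omega)
  have hbX : b ∈ X α := by
    by_contra h
    exact absurd (hN (⟨hbW, h⟩ : b ∈ W \ X α)) (by omega)
  calc f α k ≤ F α k := hfF α k
  _ ≤ b := ((good α hα).1).2 k a b haX hbX hka hab

end QtClosed

open QtClosed in
/-- Fact 1.2: `(Q, ≤*)` is `𝔱`-closed. Any `≤*`-decreasing sequence
`⟨Ā_α : α < γ⟩` in `Q` with `γ < 𝔱` has a lower bound `B̄ ∈ Q`. -/
theorem Q_t_closed (γ : Ordinal) (hγ : γ.card < towerNumber)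
    (A : Ordinal → List ℕ → Set ℕ)
    (hQ : ∀ α < γ, ∀ s, (A α s).Infinite)
    (hdec : ∀ α β : Ordinal, α ≤ β → β < γ → QLE (A β) (A α)) :
    ∃ B : List ℕ → Set ℕ, (∀ s, (B s).Infinite) ∧ ∀ α < γ, QLE B (A α) := by
  classical
  -- Step 1: column-wise pseudo-intersections
  have h1 : ∀ s : List ℕ, ∃ C : Set ℕ, C.Infinite ∧ ∀ α < γ, SubsetStar C (A α s) := fun s =>
    exists_pseudoInter γ hγ (fun α => A α s) (fun α hα => hQ α hα s)
      (fun α β hle hlt => (hdec α β hle hlt).1 s)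
  choose C hCinf hC using h1
  set nth : List ℕ → ℕ → ℕ := fun s => Nat.nth (· ∈ C s) with hnthdef
  have hCinf' : ∀ s, (setOf (· ∈ C s)).Infinite := fun s => by
    exact hCinf s
  have hnthmem : ∀ s m, nth s m ∈ C s := fun s m => Nat.nth_mem_of_infinite (hCinf' s) m
  have hnthinj : ∀ s, Function.Injective (nth s) := fun s => Nat.nth_injective (hCinf' s)
  -- Step 2: tail-bound functions
  set S : Ordinal → ℕ → Set ℕ := fun α k =>
    {N | ∀ m, N ≤ m → nth (Denumerable.ofNat (List ℕ) k) m ∈ A α (Denumerable.ofNat (List ℕ) k)}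
    with hSdef
  set f : Ordinal → ℕ → ℕ := fun α k => sInf (S α k) with hfdef
  have hfspec : ∀ α, α < γ → ∀ k, f α k ∈ S α k := by
    intro α hα k
    apply Nat.sInf_mem
    set s := Denumerable.ofNat (List ℕ) k with hs
    have hfin : {m | nth s m ∉ A α s}.Finite := by
      refine ((hC s α hα).preimage (Set.injOn_of_injective (hnthinj s))).subset ?_
      intro m hm
      exact ⟨hnthmem s m, hm⟩
    obtain ⟨N, hN⟩ := hfin.bddAbove
    refine ⟨N + 1, fun m hm => ?_⟩
    by_contra hmem
    have := hN (hmem : m ∈ {m | nth s m ∉ A α s})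
    omega
  -- Step 3: dominating function
  obtain ⟨g, hg⟩ := exists_dominating γ hγ f
  -- Step 4: the lower bound
  refine ⟨fun s => nth s '' {m | g (Encodable.encode s) ≤ m}, ?_, ?_⟩
  · intro s
    refine Set.Infinite.image (Set.injOn_of_injective (hnthinj s)) ?_
    exact Set.Ici_infinite (g (Encodable.encode s))
  · intro α hα
    constructor
    · intro s
      refine (hC s α hα).subset ?_
      rintro x ⟨⟨m, _, rfl⟩, hx⟩
      exact ⟨hnthmem s m, hx⟩
    · refine ((hg α hα).image (Denumerable.ofNat (List ℕ))).subset ?_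
      intro s hs
      refine ⟨Encodable.encode s, ?_, by simp⟩
      by_contra hcon
      simp only [Set.mem_setOf_eq, not_not] at hcon
      apply hs
      rintro x ⟨m, hm, rfl⟩
      have h1 : f α (Encodable.encode s) ∈ S α (Encodable.encode s) :=
        hfspec α hα (Encodable.encode s)
      have h2 := h1 m (le_trans hcon hm)
      simpa [Denumerable.ofNat_encode] using h2
end

section
/- (Fact 1.3) Suppose X belongs to the Laver ideal ℓ⁰ and Ā ∈ Q. Then there exists B̄ ∈ Q with B_s ⊆ A_s for every s ∈ ω^{<ω} such that [p_s(B̄)] ∩ X = ∅ for every s ∈ ω^{<ω}. -/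
/-- `LaverOf A s` is the unique Laver tree `p_s(Ā)` with stem `s` such that
`Succ(t) = A_t` for every node `t` extending `s`. -/
def LaverOf (A : List ℕ → Set ℕ) (s : List ℕ) : Set (List ℕ) :=
  {t | t <+: s ∨ (s <+: t ∧ ∀ k, s.length ≤ k → k < t.length → t.getD k 0 ∈ A (t.take k))}

namespace F13
open List

def seg (η : ℕ → ℕ) (n : ℕ) : List ℕ := (List.range n).map η

@[simp] lemma seg_length (η : ℕ → ℕ) (n : ℕ) : (seg η n).length = n := by simp [seg]

lemma seg_take (η : ℕ → ℕ) {k n : ℕ} (h : k ≤ n) : (seg η n).take k = seg η k := by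
  simp [seg, ← List.map_take, List.take_range, Nat.min_eq_left h]

lemma seg_prefix (η : ℕ → ℕ) {k n : ℕ} (h : k ≤ n) : seg η k <+: seg η n := by
  rw [← seg_take η h]; exact List.take_prefix _ _

lemma seg_getD (η : ℕ → ℕ) {k n : ℕ} (h : k < n) : (seg η n).getD k 0 = η k := by
  rw [List.getD_eq_getElem _ _ (by simpa using h)]
  simp [seg]

lemma prefix_take_of_prefix {s t : List ℕ} (h : s <+: t) {k : ℕ} (hk : s.length ≤ k) :
    s <+: t.take k := by
  obtain ⟨r, rfl⟩ := h
  rw [List.take_append, List.take_of_length_le hk]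
  exact ⟨_, rfl⟩

lemma take_eq_of_prefix {s t : List ℕ} (h : s <+: t) : t.take s.length = s := by
  obtain ⟨r, rfl⟩ := h; exact List.take_left

lemma getD_of_prefix {s t : List ℕ} (h : s <+: t) {k : ℕ} (hk : k < s.length) :
    t.getD k 0 = s.getD k 0 := by
  rw [List.getD_eq_getElem _ _ hk, List.getD_eq_getElem _ _ (hk.trans_le h.length_le)]
  exact (h.getElem hk).symm

lemma concat_getD (l : List ℕ) (a : ℕ) : (l ++ [a]).getD l.length 0 = a := by
  rw [List.getD_eq_getElem _ _ (by simp)]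
  exact List.getElem_concat_length rfl (by simp)

lemma eq_take_concat {t : List ℕ} (h : t ≠ []) :
    t = t.take (t.length - 1) ++ [t.getD (t.length - 1) 0] := by
  conv_lhs => rw [← List.dropLast_append_getLast h]
  rw [List.dropLast_eq_take, List.getLast_eq_getElem,
    List.getD_eq_getElem _ _ (Nat.sub_lt (List.length_pos_iff.2 h) one_pos)]

/- ### basic facts about LaverOf -/

lemma mem_laverOf_self (A : List ℕ → Set ℕ) (s : List ℕ) : s ∈ LaverOf A s :=
  Or.inl (List.prefix_refl s)

lemma laverOf_isTree (A : List ℕ → Set ℕ) (s : List ℕ) : IsTree (LaverOf A s) := by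
  rintro t (ht | ⟨hst, hc⟩) u hu
  · exact Or.inl (hu.trans ht)
  · rcases List.prefix_or_prefix_of_prefix hu hst with h | h
    · exact Or.inl h
    · refine Or.inr ⟨h, fun k hk1 hk2 => ?_⟩
      have h1 : t.getD k 0 = u.getD k 0 := getD_of_prefix hu hk2
      have h2 : t.take k = u.take k := by
        obtain ⟨r, rfl⟩ := hu
        rw [List.take_append, Nat.sub_eq_zero_of_le hk2.le, List.take_zero,
          List.append_nil]
      rw [← h1, ← h2]
      exact hc k hk1 (hk2.trans_le hu.length_le)

lemma succs_laverOf {A : List ℕ → Set ℕ} {s t : List ℕ}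
    (ht : t ∈ LaverOf A s) (hst : s <+: t) : Succs (LaverOf A s) t = A t := by
  have hcond : ∀ k, s.length ≤ k → k < t.length → t.getD k 0 ∈ A (t.take k) := by
    rcases ht with h | h
    · have : t = s := h.eq_of_length (le_antisymm h.length_le hst.length_le)
      subst this; intro k h1 h2; omega
    · exact h.2
  ext n
  constructor
  · rintro (h | ⟨h1, h2⟩)
    · exfalso
      have h1 := h.length_le
      have h2 := hst.length_le
      simp only [List.length_append, List.length_singleton] at h1
      omega
    · have := h2 t.length (hst.length_le.trans (by simp)) (by simp)
      rwa [concat_getD, List.take_left] at this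
  · intro hn
    refine Or.inr ⟨hst.trans ⟨[n], rfl⟩, fun k hk1 hk2 => ?_⟩
    simp only [List.length_append, List.length_singleton] at hk2
    rcases Nat.lt_or_ge k t.length with h | h
    · rw [List.getD_eq_getElem _ _ (by simp; omega), List.getElem_append_left h,
        List.take_append, Nat.sub_eq_zero_of_le h.le, List.take_zero,
        List.append_nil, ← List.getD_eq_getElem _ _ h]
      exact hcond k hk1 h
    · have hk : k = t.length := by omega
      subst hk
      rw [concat_getD, List.take_left]
      exact hn

lemma laverOf_laver {A : List ℕ → Set ℕ} (hA : ∀ t, (A t).Infinite) (s : List ℕ) :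
    IsLaverWithStem (LaverOf A s) s := by
  refine ⟨laverOf_isTree A s, mem_laverOf_self A s, ?_, ?_⟩
  · rintro t (h | ⟨h, -⟩)
    · exact Or.inl h
    · exact Or.inr h
  · intro t ht hst
    rw [succs_laverOf ht hst]
    exact hA t

lemma laverOf_mono {A B : List ℕ → Set ℕ} {s : List ℕ}
    (h : ∀ u, s <+: u → B u ⊆ A u) : LaverOf B s ⊆ LaverOf A s := by
  rintro t (ht | ⟨hst, hc⟩)
  · exact Or.inl ht
  · refine Or.inr ⟨hst, fun k hk1 hk2 => ?_⟩
    exact h _ (prefix_take_of_prefix hst hk1) (hc k hk1 hk2)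

end F13

/- ### subtree above a node -/
namespace F13
open List

def Above (q : Set (List ℕ)) (t : List ℕ) : Set (List ℕ) :=
  {u | u <+: t ∨ (t <+: u ∧ u ∈ q)}

lemma above_laver {q : Set (List ℕ)} {st t : List ℕ} (hq : IsLaverWithStem q st)
    (ht : t ∈ q) (hst : st <+: t) : IsLaverWithStem (Above q t) t := by
  obtain ⟨htree, hstmem, hcomp, hsucc⟩ := hq
  refine ⟨?_, Or.inl (List.prefix_refl t), ?_, ?_⟩
  · rintro u (hu | ⟨htu, huq⟩) v hv
    · exact Or.inl (hv.trans hu)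
    · rcases List.prefix_or_prefix_of_prefix hv htu with h | h
      · exact Or.inl h
      · exact Or.inr ⟨h, htree u huq v hv⟩
  · rintro u (hu | ⟨htu, -⟩)
    · exact Or.inl hu
    · exact Or.inr htu
  · rintro u (hu | ⟨htu, huq⟩) htu'
    · have : u = t := hu.eq_of_length (le_antisymm hu.length_le htu'.length_le)
      subst this
      refine Set.Infinite.mono ?_ (hsucc u ht hst)
      intro n hn
      exact Or.inr ⟨⟨[n], rfl⟩, hn⟩
    · refine Set.Infinite.mono ?_ (hsucc u huq (hst.trans htu))
      intro n hn
      exact Or.inr ⟨htu.trans ⟨[n], rfl⟩, hn⟩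

lemma above_subset {q : Set (List ℕ)} {p : Set (List ℕ)} {t : List ℕ}
    (hp : IsTree p) (hqp : q ⊆ p) (ht : t ∈ p) : Above q t ⊆ p := by
  rintro u (hu | ⟨-, huq⟩)
  · exact hp t ht u hu
  · exact hqp huq

lemma branches_above {q : Set (List ℕ)} {t : List ℕ} (hq : IsTree q) (ht : t ∈ q) :
    Branches (Above q t) ⊆ Branches q := by
  intro η hη n
  rcases le_or_gt n t.length with h | h
  · have := hη t.length
    rcases this with h' | ⟨h', -⟩
    · -- seg η t.length <+: t with equal length, so = t
      have : seg η t.length = t := h'.eq_of_length (by simp)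
      have hpre : seg η n <+: t := by rw [← this]; exact seg_prefix η h
      exact hq t ht _ hpre
    · have : seg η t.length = t :=
        (h'.eq_of_length (by simp)).symm
      have hpre : seg η n <+: t := by rw [← this]; exact seg_prefix η h
      exact hq t ht _ hpre
  · rcases hη n with h' | ⟨-, h'⟩
    · exfalso
      have := h'.length_le
      simp at this; omega
    · exact h'

/-- Laver trees have nodes of arbitrary length extending the stem. -/
lemma exists_long {q : Set (List ℕ)} {st : List ℕ} (hq : IsLaverWithStem q st) (m : ℕ) :
    ∃ t ∈ q, st <+: t ∧ m ≤ t.length := by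
  obtain ⟨htree, hstmem, hcomp, hsucc⟩ := hq
  induction m with
  | zero => exact ⟨st, hstmem, List.prefix_refl st, Nat.zero_le _⟩
  | succ m ih =>
    obtain ⟨t, htq, hst, hm⟩ := ih
    obtain ⟨n, hn⟩ := (hsucc t htq hst).nonempty
    exact ⟨t ++ [n], hn, hst.trans ⟨[n], rfl⟩, by simp; omega⟩

/- ### the Good predicate and gluing -/

def Good (X : Set (ℕ → ℕ)) (p : Set (List ℕ)) (t : List ℕ) : Prop :=
  ∃ q, q ⊆ p ∧ IsLaverWithStem q t ∧ X ∩ Branches q = ∅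

/-- Gluing: if infinitely many successors of `t` are good, then `t` is good. -/
lemma good_of_infinitely_many {X : Set (ℕ → ℕ)} {p : Set (List ℕ)} (hp : IsTree p)
    {t : List ℕ} (ht : t ∈ p) {I : Set ℕ}
    (hI : I.Infinite) (hgood : ∀ n ∈ I, Good X p (t ++ [n])) : Good X p t := by
  classical
  choose Q hQp hQl hQX using fun n (hn : n ∈ I) => hgood n hn
  set G : Set (List ℕ) := {u | u <+: t} ∪ ⋃ (n : ℕ) (hn : n ∈ I), Q n hn with hG
  have memQ_comp : ∀ n (hn : n ∈ I) u, u ∈ Q n hn → u <+: t ++ [n] ∨ t ++ [n] <+: u :=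
    fun n hn => (hQl n hn).2.2.1
  -- every member of G is comparable with t
  have hcompG : ∀ u ∈ G, u <+: t ∨ t <+: u := by
    rintro u (hu | hu)
    · exact Or.inl hu
    · simp only [Set.mem_iUnion] at hu
      obtain ⟨n, hn, huQ⟩ := hu
      rcases memQ_comp n hn u huQ with h | h
      · rcases List.prefix_concat_iff.1 h with h' | h'
        · exact Or.inr (by rw [h']; exact List.prefix_append t [n])
        · exact Or.inl h'
      · exact Or.inr ((List.prefix_append t [n]).trans h)
  -- if u in G strictly extends t, then u ∈ Q n and its stem extends into u
  have hext : ∀ u ∈ G, t <+: u → u ≠ t →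
      ∃ n, ∃ hn : n ∈ I, u ∈ Q n hn ∧ t ++ [n] <+: u := by
    rintro u (hu | hu) htu hne
    · exact absurd (hu.eq_of_length (le_antisymm hu.length_le htu.length_le)) hne
    · simp only [Set.mem_iUnion] at hu
      obtain ⟨n, hn, huQ⟩ := hu
      refine ⟨n, hn, huQ, ?_⟩
      rcases memQ_comp n hn u huQ with h | h
      · rcases List.prefix_concat_iff.1 h with h' | h'
        · rw [h']
        · exact absurd (h'.eq_of_length (le_antisymm h'.length_le htu.length_le)) hne
      · exact h
  have hGlaver : IsLaverWithStem G t := by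
    refine ⟨?_, Or.inl (List.prefix_refl t), hcompG, ?_⟩
    · rintro u (hu | hu) v hv
      · exact Or.inl (hv.trans hu)
      · simp only [Set.mem_iUnion] at hu
        obtain ⟨n, hn, huQ⟩ := hu
        exact Or.inr (Set.mem_iUnion.2 ⟨n, Set.mem_iUnion.2 ⟨hn, (hQl n hn).1 u huQ v hv⟩⟩)
    · intro u huG htu
      by_cases hne : u = t
      · subst hne
        refine Set.Infinite.mono ?_ hI
        intro n hn
        exact Or.inr (Set.mem_iUnion.2 ⟨n, Set.mem_iUnion.2 ⟨hn, ((hQl n hn).2.1)⟩⟩)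
      · obtain ⟨n, hn, huQ, hstem⟩ := hext u huG htu hne
        refine Set.Infinite.mono ?_ ((hQl n hn).2.2.2 u huQ hstem)
        intro m hm
        exact Or.inr (Set.mem_iUnion.2 ⟨n, Set.mem_iUnion.2 ⟨hn, hm⟩⟩)
  have hGp : G ⊆ p := by
    rintro u (hu | hu)
    · exact hp t ht u hu
    · simp only [Set.mem_iUnion] at hu
      obtain ⟨n, hn, huQ⟩ := hu
      exact hQp n hn huQ
  refine ⟨G, hGp, hGlaver, ?_⟩
  rw [Set.eq_empty_iff_forall_notMem]
  rintro η ⟨hηX, hηB⟩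
  -- the branch η enters some Q n and stays there
  have h1 : seg η (t.length + 1) ∈ G := hηB (t.length + 1)
  have hta : t <+: seg η (t.length + 1) := by
    rcases hcompG _ h1 with h | h
    · exact absurd h.length_le (by simp)
    · exact h
  obtain ⟨n₀, hn₀, hQ0, hstem0⟩ := hext _ h1 hta (by intro h; have := congrArg List.length h; simp at this)
  have hseg : ∀ m, seg η m ∈ Q n₀ hn₀ := by
    have key : ∀ m, t.length + 1 ≤ m → seg η m ∈ Q n₀ hn₀ := by
      intro m hm
      have hmem : seg η m ∈ G := hηB m
      have htm : t <+: seg η m := by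
        rcases hcompG _ hmem with h | h
        · exact absurd h.length_le (by simp; omega)
        · exact h
      obtain ⟨n, hn, hQm, hstemm⟩ := hext _ hmem htm
        (by intro h; have := congrArg List.length h; simp at this; omega)
      -- n = n₀ since both equal η t.length
      have e1 : n = η t.length := by
        have := getD_of_prefix hstemm (k := t.length) (by simp)
        rw [concat_getD] at this
        rw [← this, seg_getD η (by omega)]
      have e0 : n₀ = η t.length := by
        have := getD_of_prefix hstem0 (k := t.length) (by simp)
        rw [concat_getD] at this
        rw [← this, seg_getD η (by omega)]
      have : n = n₀ := by rw [e1, e0]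
      subst this
      have : hn = hn₀ := rfl
      subst this
      exact hQm
    intro m
    rcases le_or_gt (t.length + 1) m with h | h
    · exact key m h
    · exact (hQl n₀ hn₀).1 _ (key (t.length + 1) le_rfl) _ (seg_prefix η h.le)
  have : η ∈ X ∩ Branches (Q n₀ hn₀) := ⟨hηX, hseg⟩
  rw [hQX n₀ hn₀] at this
  exact this

end F13

namespace F13
open List

/-- A bad node has infinitely many bad successors. -/
lemma bad_succ {X : Set (ℕ → ℕ)} {p : Set (List ℕ)} {s : List ℕ}
    (hp : IsLaverWithStem p s) {t : List ℕ} (ht : t ∈ p) (hst : s <+: t)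
    (hbad : ¬ Good X p t) : {n ∈ Succs p t | ¬ Good X p (t ++ [n])}.Infinite := by
  have hfin : {n ∈ Succs p t | Good X p (t ++ [n])}.Finite := by
    by_contra hinf
    have hinf' : {n ∈ Succs p t | Good X p (t ++ [n])}.Infinite := hinf
    exact hbad (good_of_infinitely_many hp.1 ht hinf' (fun n hn => hn.2))
  have hSinf := hp.2.2.2 t ht hst
  refine Set.Infinite.mono ?_ (hSinf.diff hfin)
  intro n hn
  exact ⟨hn.1, fun hg => hn.2 ⟨hn.1, hg⟩⟩

/-- Stem-preserving avoidance: if `X ∈ ℓ⁰` and `p` is Laver with stem `s`, there is a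
Laver subtree of `p` with the same stem avoiding `X`. -/
lemma stem_preserving {X : Set (ℕ → ℕ)} (hX : LaverIdeal X) {p : Set (List ℕ)} {s : List ℕ}
    (hp : IsLaverWithStem p s) :
    ∃ q, q ⊆ p ∧ IsLaverWithStem q s ∧ X ∩ Branches q = ∅ := by
  by_contra hbad
  have hbads : ¬ Good X p s := fun ⟨q, h1, h2, h3⟩ => hbad ⟨q, h1, h2, h3⟩
  -- the tree of bad nodes
  set r : Set (List ℕ) :=
    {u | u <+: s} ∪ {u | s <+: u ∧ u ∈ p ∧ ∀ v, s <+: v → v <+: u → ¬ Good X p v} with hr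
  have hrp : r ⊆ p := by
    rintro u (hu | ⟨-, hu, -⟩)
    · exact hp.1 s hp.2.1 u hu
    · exact hu
  have hsr : s ∈ r := by
    refine Or.inr ⟨List.prefix_refl s, hp.2.1, fun v hv1 hv2 => ?_⟩
    have : v = s := hv2.eq_of_length (le_antisymm hv2.length_le hv1.length_le)
    rwa [this]
  have hkey : ∀ u ∈ r, s <+: u →
      u ∈ p ∧ (∀ v, s <+: v → v <+: u → ¬ Good X p v) := by
    rintro u (hu | ⟨-, hu1, hu2⟩) hsu
    · have : u = s := hu.eq_of_length (le_antisymm hu.length_le hsu.length_le)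
      subst this
      exact ⟨hp.2.1, fun v hv1 hv2 => by
        have : v = u := hv2.eq_of_length (le_antisymm hv2.length_le hv1.length_le)
        subst this
        exact hbads⟩
    · exact ⟨hu1, hu2⟩
  have hrlaver : IsLaverWithStem r s := by
    refine ⟨?_, hsr, ?_, ?_⟩
    · rintro u (hu | ⟨hsu, hup, hubad⟩) v hv
      · exact Or.inl (hv.trans hu)
      · rcases List.prefix_or_prefix_of_prefix hv hsu with h | h
        · exact Or.inl h
        · exact Or.inr ⟨h, hp.1 u hup v hv, fun w hw1 hw2 => hubad w hw1 (hw2.trans hv)⟩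
    · rintro u (hu | ⟨hsu, -, -⟩)
      · exact Or.inl hu
      · exact Or.inr hsu
    · intro u hur hsu
      obtain ⟨hup, hubad⟩ := hkey u hur hsu
      have hbadu : ¬ Good X p u := hubad u hsu (List.prefix_refl u)
      refine Set.Infinite.mono ?_ (bad_succ hp hup hsu hbadu)
      rintro n ⟨hn1, hn2⟩
      refine Or.inr ⟨hsu.trans (List.prefix_append u [n]), hn1, fun v hv1 hv2 => ?_⟩
      rcases List.prefix_concat_iff.1 hv2 with h | h
      · rw [h]; exact hn2
      · exact hubad v hv1 h
  -- apply the ideal hypothesis to r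
  obtain ⟨q', ⟨st', hq'⟩, hq'r, hq'X⟩ := hX r ⟨s, hrlaver⟩
  obtain ⟨t, htq', hstt, htlen⟩ := exists_long hq' s.length
  have htr : t ∈ r := hq'r htq'
  have hst : s <+: t := by
    rcases htr with h | ⟨h, -⟩
    · exact (h.eq_of_length (le_antisymm h.length_le htlen)) ▸ List.prefix_refl s
    · exact h
  have hbadt : ¬ Good X p t := (hkey t htr hst).2 t hst (List.prefix_refl t)
  refine hbadt ⟨Above q' t, ?_, above_laver hq' htq' hstt, ?_⟩
  · exact above_subset hp.1 (fun u hu => hrp (hq'r hu)) (hrp htr)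
  · rw [Set.eq_empty_iff_forall_notMem] at hq'X ⊢
    intro η hη
    exact hq'X η ⟨hη.1, branches_above hq'.1 htq' hη.2⟩

end F13

namespace F13
open List

lemma node_lemma {X : Set (ℕ → ℕ)} (hX : LaverIdeal X) {A : List ℕ → Set ℕ}
    (hA : ∀ t, (A t).Infinite) (s : List ℕ) :
    ∃ D : List ℕ → Set ℕ, (∀ t, (D t).Infinite) ∧ (∀ t, D t ⊆ A t) ∧
      (∀ t, ¬ s <+: t → D t = A t) ∧ Branches (LaverOf D s) ∩ X = ∅ := by
  classical
  obtain ⟨q, hqp, hql, hqX⟩ := stem_preserving hX (laverOf_laver hA s)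
  set D : List ℕ → Set ℕ :=
    fun t => if t ∈ q ∧ s <+: t then Succs q t else A t with hD
  have hDsub : ∀ t, D t ⊆ A t := by
    intro t
    simp only [hD]
    split_ifs with h
    · intro n hn
      have h1 : t ++ [n] ∈ LaverOf A s := hqp hn
      have := succs_laverOf (A := A) (hqp h.1) h.2
      rw [← this]
      exact hqp hn
    · exact fun n hn => hn
  have hDinf : ∀ t, (D t).Infinite := by
    intro t
    simp only [hD]
    split_ifs with h
    · exact hql.2.2.2 t h.1 h.2
    · exact hA t
  have hDeq : ∀ t, ¬ s <+: t → D t = A t := by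
    intro t ht
    simp only [hD]
    exact if_neg (fun h => ht h.2)
  -- main claim: every node of `LaverOf D s` extending `s` lies in `q`
  have hmain : ∀ n t, t.length = n → t ∈ LaverOf D s → s <+: t → t ∈ q := by
    intro n
    induction n using Nat.strong_induction_on with
    | _ n ih =>
      intro t hlen htD hst
      rcases Nat.lt_or_ge s.length t.length with hlt | hge
      · -- t properly extends s
        have hne : t ≠ [] := by
          intro h; subst h; simp at hlt
        have ht' : t.take (t.length - 1) ∈ LaverOf D s :=
          laverOf_isTree D s t htD _ (List.take_prefix _ _)
        have hst' : s <+: t.take (t.length - 1) :=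
          prefix_take_of_prefix hst (by omega)
        have hq' : t.take (t.length - 1) ∈ q :=
          ih (t.length - 1) (by omega) _ (by simp) ht' hst'
        have hcond : t.getD (t.length - 1) 0 ∈ D (t.take (t.length - 1)) := by
          rcases htD with h | ⟨-, h⟩
          · exact absurd (le_antisymm h.length_le hst.length_le) (by omega)
          · exact h (t.length - 1) (by omega) (by omega)
        simp only [hD] at hcond
        rw [if_pos ⟨hq', hst'⟩] at hcond
        have : t.take (t.length - 1) ++ [t.getD (t.length - 1) 0] ∈ q := hcond
        rwa [← eq_take_concat hne] at this
      · have : t = s := (hst.eq_of_length (le_antisymm hst.length_le hge)).symm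
        subst this
        exact hql.2.1
  refine ⟨D, hDinf, hDsub, hDeq, ?_⟩
  rw [Set.eq_empty_iff_forall_notMem]
  rintro η ⟨hηB, hηX⟩
  have hs : seg η s.length = s := by
    rcases hηB s.length with h | ⟨h, -⟩
    · exact h.eq_of_length (by simp)
    · exact (h.eq_of_length (by simp)).symm
  have hbq : η ∈ Branches q := by
    intro n
    rcases Nat.lt_or_ge n s.length with h | h
    · refine hql.1 s hql.2.1 _ ?_
      rw [← hs]
      exact seg_prefix η h.le
    · refine hmain n _ (by simp) (hηB n) ?_
      rw [← hs]
      exact seg_prefix η h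
  rw [Set.eq_empty_iff_forall_notMem] at hqX
  exact hqX η ⟨hηX, hbq⟩

end F13

namespace F13
open List

lemma branches_mono {p q : Set (List ℕ)} (h : p ⊆ q) : Branches p ⊆ Branches q :=
  fun _ hη n => h (hη n)

open Classical in
noncomputable def step (X : Set (ℕ → ℕ)) (A : List ℕ → Set ℕ) (s : List ℕ) :
    List ℕ → Set ℕ :=
  if h : LaverIdeal X ∧ ∀ t, (A t).Infinite then (node_lemma h.1 h.2 s).choose else A

lemma step_spec {X : Set (ℕ → ℕ)} (hX : LaverIdeal X) {A : List ℕ → Set ℕ}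
    (hA : ∀ t, (A t).Infinite) (s : List ℕ) :
    (∀ t, (step X A s t).Infinite) ∧ (∀ t, step X A s t ⊆ A t) ∧
      (∀ t, ¬ s <+: t → step X A s t = A t) ∧ Branches (LaverOf (step X A s) s) ∩ X = ∅ := by
  have h : LaverIdeal X ∧ ∀ t, (A t).Infinite := ⟨hX, hA⟩
  simp only [step]
  rw [dif_pos h]
  exact (node_lemma h.1 h.2 s).choose_spec

noncomputable def fam (X : Set (ℕ → ℕ)) (A : List ℕ → Set ℕ) : ℕ → List ℕ → Set ℕ
  | 0 => A
  | (n + 1) => fun t => if n ≤ t.length then step X (fam X A n) (t.take n) t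
      else fam X A n t

lemma fam_inf {X : Set (ℕ → ℕ)} (hX : LaverIdeal X) {A : List ℕ → Set ℕ}
    (hA : ∀ t, (A t).Infinite) : ∀ n t, (fam X A n t).Infinite := by
  intro n
  induction n with
  | zero => exact hA
  | succ n ih =>
    intro t
    simp only [fam]
    split_ifs with h
    · exact (step_spec hX ih (t.take n)).1 t
    · exact ih t

lemma fam_succ_sub {X : Set (ℕ → ℕ)} (hX : LaverIdeal X) {A : List ℕ → Set ℕ}
    (hA : ∀ t, (A t).Infinite) (n : ℕ) (t : List ℕ) :
    fam X A (n + 1) t ⊆ fam X A n t := by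
  simp only [fam]
  split_ifs with h
  · exact (step_spec hX (fam_inf hX hA n) (t.take n)).2.1 t
  · exact fun x hx => hx

lemma fam_sub {X : Set (ℕ → ℕ)} (hX : LaverIdeal X) {A : List ℕ → Set ℕ}
    (hA : ∀ t, (A t).Infinite) {m m' : ℕ} (h : m ≤ m') (t : List ℕ) :
    fam X A m' t ⊆ fam X A m t := by
  induction m' with
  | zero => simp_all
  | succ k ih =>
    rcases Nat.lt_or_ge m (k + 1) with h' | h'
    · exact (fam_succ_sub hX hA k t).trans (ih (by omega))
    · have : m = k + 1 := by omega
      subst this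
      exact fun x hx => hx

end F13


/-- Fact 1.3: if `X ∈ ℓ⁰` and `Ā ∈ Q`, there is `B̄ ∈ Q` with `B̄ ⊆ Ā` such that
`[p_s(B̄)] ∩ X = ∅` for every `s`. -/
theorem fact_1_3 (X : Set (ℕ → ℕ)) (hX : LaverIdeal X)
    (A : List ℕ → Set ℕ) (hA : ∀ s, (A s).Infinite) :
    ∃ B : List ℕ → Set ℕ, (∀ s, (B s).Infinite) ∧ (∀ s, B s ⊆ A s) ∧
      ∀ s, Branches (LaverOf B s) ∩ X = ∅ := by
  classical
  set B : List ℕ → Set ℕ := fun t => F13.fam X A (t.length + 1) t with hB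
  refine ⟨B, fun t => F13.fam_inf hX hA _ t, fun t => F13.fam_sub hX hA (Nat.zero_le _) t, ?_⟩
  intro s
  obtain ⟨-, -, -, hDX⟩ := F13.step_spec hX (F13.fam_inf hX hA s.length) s
  have hBD : ∀ u, s <+: u → B u ⊆ F13.step X (F13.fam X A s.length) s u := by
    intro u hu
    have hle : s.length ≤ u.length := hu.length_le
    have h1 : B u ⊆ F13.fam X A (s.length + 1) u := F13.fam_sub hX hA (by omega) u
    have h2 : F13.fam X A (s.length + 1) u = F13.step X (F13.fam X A s.length) s u := by
      simp only [F13.fam]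
      rw [if_pos hle, F13.take_eq_of_prefix hu]
    rw [← h2]
    exact h1
  set D : List ℕ → Set ℕ := F13.step X (F13.fam X A s.length) s with hD
  have hsub : Branches (LaverOf B s) ⊆ Branches (LaverOf D s) :=
    F13.branches_mono (F13.laverOf_mono hBD)
  rw [Set.eq_empty_iff_forall_notMem] at hDX ⊢
  rintro η ⟨h1, h2⟩
  exact hDX η ⟨hsub h1, h2⟩
end

section
/- (Fact 1.4) Suppose X ⊆ ᵚω, Ā, B̄ ∈ Q, B̄ ≤* Ā, and [p_s(Ā)] ∩ X = ∅ for every s ∈ ω^{<ω}. Then [p_s(B̄)] ∩ X = ∅ for every s ∈ ω^{<ω}. -/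
/-- Fact 1.4: if `B̄ ≤* Ā` in `Q` and `[p_s(Ā)] ∩ X = ∅` for all `s`, then
`[p_s(B̄)] ∩ X = ∅` for all `s`. -/
theorem fact_1_4 (X : Set (ℕ → ℕ)) (A B : List ℕ → Set ℕ)
    (hA : ∀ s, (A s).Infinite) (hB : ∀ s, (B s).Infinite)
    (hle : QLE B A) (h : ∀ s, Branches (LaverOf A s) ∩ X = ∅) :
    ∀ s, Branches (LaverOf B s) ∩ X = ∅ := by
  intro s
  rw [Set.eq_empty_iff_forall_notMem]
  rintro η ⟨hηB, hηX⟩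
  -- restriction map is injective
  have inj : Function.Injective (fun k : ℕ => (List.range k).map η) := by
    intro a b hab
    have := congrArg List.length hab
    simpa using this
  obtain ⟨hstar, hfin⟩ := hle
  have hfin' : {k : ℕ | ¬ B ((List.range k).map η) ⊆ A ((List.range k).map η)}.Finite :=
    hfin.preimage (inj.injOn)
  obtain ⟨N0, hN0⟩ := hfin'.bddAbove
  set N := max (N0 + 1) s.length with hN
  have hlen : ∀ n, ((List.range n).map η).length = n := by simp
  have htake : ∀ k n, k ≤ n → ((List.range n).map η).take k = (List.range k).map η := by
    intro k n hkn
    rw [← List.map_take, List.take_range, min_eq_left hkn]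
  have hgetD : ∀ k n, k < n → ((List.range n).map η).getD k 0 = η k := by
    intro k n hkn
    rw [List.getD_eq_getElem _ _ (by simpa using hkn)]
    simp
  -- key: for k ≥ s.length, η k ∈ B (η↾k)
  have key : ∀ k, s.length ≤ k → η k ∈ B ((List.range k).map η) := by
    intro k hk
    have hmem := hηB (k + 1)
    rcases hmem with hpre | ⟨_, h2⟩
    · exfalso
      have := hpre.length_le
      rw [hlen] at this
      omega
    · have := h2 k hk (by rw [hlen]; omega)
      rwa [hgetD k (k+1) (by omega), htake k (k+1) (by omega)] at this
  have keyA : ∀ k, N ≤ k → η k ∈ A ((List.range k).map η) := by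
    intro k hk
    have hBk : η k ∈ B ((List.range k).map η) := key k (le_trans (le_max_right _ _) hk)
    by_contra hcon
    have : k ∈ {k : ℕ | ¬ B ((List.range k).map η) ⊆ A ((List.range k).map η)} := by
      intro hsub
      exact hcon (hsub hBk)
    have := hN0 this
    omega
  -- η is a branch of LaverOf A (η↾N)
  have hbr : η ∈ Branches (LaverOf A ((List.range N).map η)) := by
    intro n
    by_cases hn : n ≤ N
    · left
      rw [← htake n N hn]
      exact List.take_prefix _ _
    · right
      push_neg at hn
      refine ⟨?_, ?_⟩
      · rw [← htake N n (le_of_lt hn)]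
        exact List.take_prefix _ _
      · intro k hk1 hk2
        rw [hlen] at hk1 hk2
        rw [hgetD k n hk2, htake k n (le_of_lt hk2)]
        exact keyA k hk1
  have := h ((List.range N).map η)
  rw [Set.eq_empty_iff_forall_notMem] at this
  exact this η ⟨hbr, hηX⟩
end

section
/- (Fact 1.6) Suppose X belongs to the Miller ideal m⁰ and P̄ ∈ R. Then there exists Q̄ ∈ R with Q̄ ≤ P̄ such that [p_s(Q̄)] ∩ X = ∅ for every s ∈ ω^{<ω}. -/
/-- `P̄ ∈ R`: each `P_s ⊆ ω^{<ω}` is infinite, every `t ∈ P_s` properly extends `s`,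
and distinct members of `P_s` differ at coordinate `|s|`. -/
def IsRFamily (P : List ℕ → Set (List ℕ)) : Prop :=
  ∀ s, (P s).Infinite ∧ (∀ t ∈ P s, s <+: t ∧ s ≠ t) ∧
    ∀ t ∈ P s, ∀ t' ∈ P s, t ≠ t' → t.getD s.length 0 ≠ t'.getD s.length 0

/-- The split nodes of `p_s(P̄)`: the closure of `{s}` under `t ↦ P_t`. -/
inductive MillerClosure (P : List ℕ → Set (List ℕ)) (s : List ℕ) : List ℕ → Prop
  | base : MillerClosure P s s
  | step {t u : List ℕ} : MillerClosure P s t → u ∈ P t → MillerClosure P s u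

/-- `MillerOf P s` is the unique Miller tree `p_s(P̄)` with stem `s` such that
`Split_{p_s(P̄)}(t) = P_t` for every split node `t`. -/
def MillerOf (P : List ℕ → Set (List ℕ)) (s : List ℕ) : Set (List ℕ) :=
  {u | ∃ t, MillerClosure P s t ∧ u <+: t}

/-- `P̄ ≤ Q̄` on `R`. -/
def RLE (P Q : List ℕ → Set (List ℕ)) : Prop := ∀ s, MillerOf P s ⊆ MillerOf Q s

namespace Fact16

lemma prefix_trichotomy {s t u : List ℕ} (hs : s <+: u) (ht : t <+: u) :
    s <+: t ∨ t <+: s := by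
  rcases le_total s.length t.length with h | h
  · exact Or.inl (List.prefix_of_prefix_length_le hs ht h)
  · exact Or.inr (List.prefix_of_prefix_length_le ht hs h)

lemma length_lt_of_proper {s t : List ℕ} (h : s <+: t) (hne : s ≠ t) :
    s.length < t.length := by
  rcases lt_or_eq_of_le h.length_le with h' | h'
  · exact h'
  · exact absurd (h.eq_of_length h') hne

lemma getD_eq_of_prefix {s t : List ℕ} (h : s <+: t) {n : ℕ} (hn : n < s.length) :
    t.getD n 0 = s.getD n 0 := by
  obtain ⟨r, rfl⟩ := h
  rw [List.getD_eq_getElem _ _ hn, List.getD_eq_getElem _ _ (by simp; omega),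
    List.getElem_append_left hn]

section closure
variable {F : List ℕ → Set (List ℕ)}

lemma rmem (hF : IsRFamily F) {s t : List ℕ} (ht : t ∈ F s) :
    s <+: t ∧ s.length < t.length :=
  ⟨((hF s).2.1 t ht).1, length_lt_of_proper ((hF s).2.1 t ht).1 ((hF s).2.1 t ht).2⟩

lemma closure_trans {s t u : List ℕ} (h1 : MillerClosure F s t)
    (h2 : MillerClosure F t u) : MillerClosure F s u := by
  induction h2 with
  | base => exact h1
  | step h hm ih => exact MillerClosure.step ih hm

lemma closure_prefix (hF : IsRFamily F) {s t : List ℕ} (h : MillerClosure F s t) :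
    s <+: t := by
  induction h with
  | base => exact List.prefix_rfl
  | step h hm ih => exact ih.trans (rmem hF hm).1

lemma closure_first (hF : IsRFamily F) {w c : List ℕ} (h : MillerClosure F w c)
    (hne : c ≠ w) : ∃ z ∈ F w, z <+: c := by
  induction h with
  | base => exact absurd rfl hne
  | @step t c ht hc ih =>
    by_cases htw : t = w
    · subst htw; exact ⟨c, hc, List.prefix_rfl⟩
    · obtain ⟨z, hz, hzp⟩ := ih htw
      exact ⟨z, hz, hzp.trans (rmem hF hc).1⟩

lemma closure_loc (hF : IsRFamily F) {w u c : List ℕ} (hu : u ∈ F w)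
    (hc : MillerClosure F w c) (hpre : u <+: c) : MillerClosure F u c := by
  induction hc with
  | base =>
    exact absurd hpre.length_le (by have := (rmem hF hu).2; omega)
  | @step t c ht hcm ih =>
    rcases eq_or_ne u c with rfl | hne
    · exact MillerClosure.base
    have htc : t <+: c := (rmem hF hcm).1
    rcases prefix_trichotomy hpre htc with hut | htu
    · exact MillerClosure.step (ih hut) hcm
    · rcases eq_or_ne t u with rfl | htne
      · exact MillerClosure.step MillerClosure.base hcm
      -- t ⊏ u strictly
      have htu' : t.length < u.length := length_lt_of_proper htu (fun h => htne h)
      rcases eq_or_ne t w with rfl | htw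
      · -- u, c ∈ F t, u ⊏ c : contradiction with distinct coordinates
        have h1 : c.getD t.length 0 = u.getD t.length 0 :=
          getD_eq_of_prefix hpre (rmem hF hu).2
        exact absurd h1.symm ((hF t).2.2 u hu c hcm hne)
      · obtain ⟨z, hz, hzt⟩ := closure_first hF ht htw
        -- z, u ∈ F w, z <+: t <+: u, z ≠ u since |z| ≤ |t| < |u|
        have hzu : z <+: u := hzt.trans htu
        have hzne : z ≠ u := by
          intro h; subst h
          exact absurd hzt.length_le (by omega)
        have h1 : u.getD w.length 0 = z.getD w.length 0 :=
          getD_eq_of_prefix hzu (rmem hF hz).2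
        exact absurd h1.symm ((hF w).2.2 z hz u hu hzne)

lemma closure_cl (hF : IsRFamily F) {s t c : List ℕ} (h1 : MillerClosure F s t)
    (h2 : MillerClosure F s c) (hpre : t <+: c) : MillerClosure F t c := by
  induction h1 with
  | base => exact h2
  | @step t0 u0 ht0 hm ih =>
    have h3 : MillerClosure F t0 c := ih ((rmem hF hm).1.trans hpre)
    exact closure_loc hF hm h3 hpre

end closure

section miller
variable {F : List ℕ → Set (List ℕ)}

lemma closure_mem_millerOf {s c : List ℕ} (h : MillerClosure F s c) :
    c ∈ MillerOf F s := ⟨c, h, List.prefix_rfl⟩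

lemma millerOf_isTree (s : List ℕ) : IsTree (MillerOf F s) := by
  rintro u ⟨c, hc, hp⟩ t htp
  exact ⟨c, hc, htp.trans hp⟩

lemma concat_getD_prefix {c x : List ℕ} (h : c <+: x) (hl : c.length < x.length) :
    c ++ [x.getD c.length 0] <+: x := by
  obtain ⟨r, rfl⟩ := h
  have hr : r ≠ [] := by intro h; simp [h] at hl
  obtain ⟨a, r', rfl⟩ := List.exists_cons_of_ne_nil hr
  have hv : (c ++ a :: r').getD c.length 0 = a := by
    rw [List.getD_eq_getElem _ _ (by simp)]
    rw [List.getElem_append_right (le_refl c.length)]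
    simp
  rw [hv]
  exact ⟨r', by simp⟩

lemma succs_infinite_of_closure (hF : IsRFamily F) {s c : List ℕ}
    (hc : MillerClosure F s c) : (Succs (MillerOf F s) c).Infinite := by
  have hinj : Set.InjOn (fun x => x.getD c.length 0) (F c) := by
    intro x hx y hy hxy
    by_contra hne
    exact (hF c).2.2 x hx y hy hne hxy
  have hsub : (fun x => x.getD c.length 0) '' (F c) ⊆ Succs (MillerOf F s) c := by
    rintro n ⟨x, hx, rfl⟩
    exact ⟨x, MillerClosure.step hc hx, concat_getD_prefix (rmem hF hx).1 (rmem hF hx).2⟩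
  exact (((hF c).1).image hinj).mono hsub

lemma millerOf_isMiller (hF : IsRFamily F) (s : List ℕ) : IsMillerTree (MillerOf F s) := by
  refine ⟨millerOf_isTree s, ⟨s, closure_mem_millerOf MillerClosure.base, ?_⟩, ?_⟩
  · rintro u ⟨c, hc, hp⟩
    exact prefix_trichotomy hp (closure_prefix hF hc)
  · rintro u ⟨c, hc, hp⟩
    exact ⟨c, closure_mem_millerOf hc, hp, succs_infinite_of_closure hF hc⟩

lemma split_mem_closure (hF : IsRFamily F) {s u : List ℕ} (hu : u ∈ MillerOf F s)
    (hinf : (Succs (MillerOf F s) u).Infinite) : MillerClosure F s u := by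
  classical
  by_contra hncl
  refine hinf (Set.Subsingleton.finite ?_)
  obtain ⟨c₀, hc₀, hp₀⟩ := hu
  have hs_c₀ : s <+: c₀ := closure_prefix hF hc₀
  by_cases hsu : s <+: u
  · -- main case
    have hune : u ≠ s := by rintro rfl; exact hncl MillerClosure.base
    set Kp : ℕ → Prop := fun k => MillerClosure F s (u.take k) with hKp
    have hK : Kp s.length := by
      have : u.take s.length = s := (List.prefix_iff_eq_take.mp hsu).symm
      rw [hKp]; simpa [this] using MillerClosure.base
    set k₀ := Nat.findGreatest Kp u.length with hk₀def
    have hk₀ : Kp k₀ := Nat.findGreatest_spec hsu.length_le hK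
    have hk₀le : k₀ ≤ u.length := Nat.findGreatest_le u.length
    set w := u.take k₀ with hwdef
    have hw_pre : w <+: u := List.take_prefix _ _
    have hwlen : w.length = k₀ := by simp [hwdef, hk₀le]
    have hw_ne_u : w ≠ u := by intro h; exact hncl (h ▸ hk₀)
    have hwu : w.length < u.length := length_lt_of_proper hw_pre hw_ne_u
    have key : ∀ n, n ∈ Succs (MillerOf F s) u →
        ∃ z ∈ F w, (u <+: z ∧ u.length < z.length) ∧ z.getD u.length 0 = n := by
      intro n hn
      obtain ⟨c, hc, hp⟩ := hn
      have huc : u <+: c := (List.prefix_append u [n]).trans hp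
      have hwc : w <+: c := hw_pre.trans huc
      have hclen : u.length < c.length := by
        have := hp.length_le; simp at this; omega
      have hwnec : w ≠ c := by intro h; rw [h] at hwu; omega
      have hMwc : MillerClosure F w c := closure_cl hF hk₀ hc hwc
      obtain ⟨z, hzF, hzc⟩ := closure_first hF hMwc (Ne.symm hwnec)
      rcases prefix_trichotomy hzc huc with hzu | huz
      · exfalso
        have hsz : MillerClosure F s z := MillerClosure.step hk₀ hzF
        have : Kp z.length := by
          rw [hKp]
          simpa [(List.prefix_iff_eq_take.mp hzu).symm] using hsz
        have hle : z.length ≤ k₀ := Nat.le_findGreatest hzu.length_le this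
        have := (rmem hF hzF).2
        omega
      · have hune' : u ≠ z := by
          rintro rfl; exact hncl (MillerClosure.step hk₀ hzF)
        have hulen : u.length < z.length := length_lt_of_proper huz hune'
        refine ⟨z, hzF, ⟨huz, hulen⟩, ?_⟩
        have h1 : c.getD u.length 0 = z.getD u.length 0 := getD_eq_of_prefix hzc hulen
        have h2 : c.getD u.length 0 = (u ++ [n]).getD u.length 0 :=
          getD_eq_of_prefix hp (by simp)
        have h3 : (u ++ [n]).getD u.length 0 = n := by
          rw [List.getD_eq_getElem _ _ (by simp)]
          exact List.getElem_concat_length rfl _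
        omega
    intro n₁ hn₁ n₂ hn₂
    obtain ⟨z₁, hz₁, hu₁, he₁⟩ := key n₁ hn₁
    obtain ⟨z₂, hz₂, hu₂, he₂⟩ := key n₂ hn₂
    have hz12 : z₁ = z₂ := by
      by_contra hne
      apply (hF w).2.2 z₁ hz₁ z₂ hz₂ hne
      have e1 : z₁.getD w.length 0 = u.getD w.length 0 := getD_eq_of_prefix hu₁.1 hwu
      have e2 : z₂.getD w.length 0 = u.getD w.length 0 := getD_eq_of_prefix hu₂.1 hwu
      omega
    rw [← he₁, ← he₂, hz12]
  · -- u is a proper prefix of s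
    have hus : u <+: s := (prefix_trichotomy hp₀ hs_c₀).resolve_right hsu
    have hul : u.length < s.length := by
      rcases lt_or_eq_of_le hus.length_le with h | h
      · exact h
      · exact absurd (hus.eq_of_length h) (by rintro rfl; exact hncl MillerClosure.base)
    intro n₁ hn₁ n₂ hn₂
    have key : ∀ n, n ∈ Succs (MillerOf F s) u → n = s.getD u.length 0 := by
      intro n hn
      obtain ⟨c, hc, hp⟩ := hn
      have hsc : s <+: c := closure_prefix hF hc
      have h1 : u ++ [n] <+: s :=
        List.prefix_of_prefix_length_le hp hsc (by simp; omega)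
      have h2 := getD_eq_of_prefix h1 (n := u.length) (by simp)
      have h3 : (u ++ [n]).getD u.length 0 = n := by
        rw [List.getD_eq_getElem _ _ (by simp)]
        exact List.getElem_concat_length rfl _
      omega
    rw [key n₁ hn₁, key n₂ hn₂]

end miller

section good
variable {X : Set (ℕ → ℕ)} {P : List ℕ → Set (List ℕ)}

/-- `w` is an infinitely-splitting node of the Miller tree `T`, `T` avoids `X`,
and every infinitely-splitting node of `T` extending `w` is in the `P`-closure of `w`. -/
def Good (X : Set (ℕ → ℕ)) (P : List ℕ → Set (List ℕ)) (w : List ℕ)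
    (T : Set (List ℕ)) : Prop :=
  IsMillerTree T ∧ Branches T ∩ X = ∅ ∧ w ∈ T ∧ (Succs T w).Infinite ∧
    ∀ c ∈ T, (Succs T c).Infinite → w <+: c → MillerClosure P w c

lemma extend_good (hP : IsRFamily P) {v : List ℕ} {T : Set (List ℕ)}
    (hG : Good X P v T) {B : Set ℕ} (hB : B.Finite) :
    ∃ S : Set (List ℕ), S.Infinite ∧
      (∀ w ∈ S, (v <+: w ∧ v ≠ w) ∧ MillerClosure P v w ∧ Good X P w T ∧
        w.getD v.length 0 ∉ B) ∧
      (∀ w ∈ S, ∀ w' ∈ S, w ≠ w' → w.getD v.length 0 ≠ w'.getD v.length 0) := by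
  obtain ⟨hT, hTX, hvT, hvinf, hcl⟩ := hG
  have hex : ∀ m ∈ Succs T v, ∃ t, t ∈ T ∧ v ++ [m] <+: t ∧ (Succs T t).Infinite := by
    intro m hm
    obtain ⟨t, ht, hp, hi⟩ := hT.2.2 (v ++ [m]) hm
    exact ⟨t, ht, hp, hi⟩
  choose! f hf1 hf2 hf3 using hex
  have hfd : ∀ m ∈ Succs T v, (f m).getD v.length 0 = m := by
    intro m hm
    have h1 := getD_eq_of_prefix (hf2 m hm) (n := v.length) (by simp)
    have h2 : (v ++ [m]).getD v.length 0 = m := by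
      rw [List.getD_eq_getElem _ _ (by simp)]
      exact List.getElem_concat_length rfl _
    omega
  have hfgood : ∀ m ∈ Succs T v, (v <+: f m ∧ v ≠ f m) ∧ MillerClosure P v (f m) ∧
      Good X P (f m) T := by
    intro m hm
    have hvp : v <+: f m := ((List.prefix_append v [m])).trans (hf2 m hm)
    have hvl : v.length < (f m).length := by
      have := (hf2 m hm).length_le; simp at this; omega
    have hvne : v ≠ f m := by intro h; rw [← h] at hvl; omega
    have hmc : MillerClosure P v (f m) := hcl (f m) (hf1 m hm) (hf3 m hm) hvp
    refine ⟨⟨hvp, hvne⟩, hmc, hT, hTX, hf1 m hm, hf3 m hm, ?_⟩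
    intro c hc hci hpc
    exact closure_cl hP hmc (hcl c hc hci (hvp.trans hpc)) hpc
  set D := Succs T v \ B with hD
  have hDinf : D.Infinite := hvinf.diff hB
  have hDs : D ⊆ Succs T v := Set.diff_subset
  refine ⟨f '' D, ?_, ?_, ?_⟩
  · refine hDinf.image ?_
    intro m hm m' hm' he
    have := hfd m (hDs hm); have := hfd m' (hDs hm')
    rw [he] at *; omega
  · rintro w ⟨m, hm, rfl⟩
    refine ⟨(hfgood m (hDs hm)).1, (hfgood m (hDs hm)).2.1, (hfgood m (hDs hm)).2.2, ?_⟩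
    rw [hfd m (hDs hm)]
    exact hm.2
  · rintro w ⟨m, hm, rfl⟩ w' ⟨m', hm', rfl⟩ hne
    rw [hfd m (hDs hm), hfd m' (hDs hm')]
    intro h; exact hne (h ▸ rfl)

lemma fresh_good (hX : MillerIdeal X) (hP : IsRFamily P) (v : List ℕ) {B : Set ℕ}
    (hB : B.Finite) :
    ∃ (S : Set (List ℕ)) (τ : List ℕ → Set (List ℕ)), S.Infinite ∧
      (∀ w ∈ S, (v <+: w ∧ v ≠ w) ∧ MillerClosure P v w ∧ Good X P w (τ w) ∧
        w.getD v.length 0 ∉ B) ∧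
      (∀ w ∈ S, ∀ w' ∈ S, w ≠ w' → w.getD v.length 0 ≠ w'.getD v.length 0) := by
  classical
  have hex : ∀ u ∈ P v, ∃ qw : Set (List ℕ) × List ℕ,
      IsMillerTree qw.1 ∧ qw.1 ⊆ MillerOf P u ∧ Branches qw.1 ∩ X = ∅ ∧
      qw.2 ∈ qw.1 ∧ (Succs qw.1 qw.2).Infinite := by
    intro u hu
    obtain ⟨q, hq, hqsub, hqX⟩ := hX (MillerOf P u) (millerOf_isMiller hP u)
    obtain ⟨st, hst, _⟩ := hq.2.1
    obtain ⟨w, hw, _, hwi⟩ := hq.2.2 st hst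
    exact ⟨⟨q, w⟩, hq, hqsub, by rw [Set.inter_comm] at hqX; exact hqX, hw, hwi⟩
  choose! g hg1 hg2 hg3 hg4 hg5 using hex
  -- for u ∈ P v, (g u).2 is a split node of MillerOf P u
  have hsplit : ∀ u ∈ P v, MillerClosure P u (g u).2 := by
    intro u hu
    refine split_mem_closure hP (hg2 u hu (hg4 u hu)) ?_
    refine (hg5 u hu).mono ?_
    intro n hn; exact hg2 u hu hn
  have hgood : ∀ u ∈ P v, Good X P (g u).2 (g u).1 := by
    intro u hu
    refine ⟨hg1 u hu, hg3 u hu, hg4 u hu, hg5 u hu, ?_⟩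
    intro c hc hci hpc
    have hcc : MillerClosure P u c := by
      refine split_mem_closure hP (hg2 u hu hc) (hci.mono ?_)
      intro n hn; exact hg2 u hu hn
    exact closure_cl hP (hsplit u hu) hcc hpc
  have hpre : ∀ u ∈ P v, u <+: (g u).2 := fun u hu => closure_prefix hP (hsplit u hu)
  have hval : ∀ u ∈ P v, (g u).2.getD v.length 0 = u.getD v.length 0 := by
    intro u hu
    exact getD_eq_of_prefix (hpre u hu) (rmem hP hu).2
  set D := {u ∈ P v | u.getD v.length 0 ∉ B} with hDdef
  have hDP : D ⊆ P v := fun u hu => hu.1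
  have hDinf : D.Infinite := by
    have hfin : {u ∈ P v | u.getD v.length 0 ∈ B}.Finite := by
      refine Set.Finite.of_finite_image (f := fun u => u.getD v.length 0) ?_ ?_
      · refine hB.subset ?_
        rintro x ⟨u, ⟨_, hu2⟩, rfl⟩
        exact hu2
      · intro x hx y hy hxy
        by_contra hne
        exact (hP v).2.2 x hx.1 y hy.1 hne hxy
    have : D = P v \ {u ∈ P v | u.getD v.length 0 ∈ B} := by
      ext u; simp [hDdef]
    rw [this]
    exact (hP v).1.diff hfin
  set f : List ℕ → List ℕ := fun u => (g u).2 with hfdef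
  have hinj : Set.InjOn f D := by
    intro x hx y hy hxy
    by_contra hne
    apply (hP v).2.2 x (hDP hx) y (hDP hy) hne
    rw [← hval x (hDP hx), ← hval y (hDP hy), hfdef] at *
    simp only [hfdef] at hxy
    rw [hxy]
  classical
  refine ⟨f '' D, fun x => (g (Function.invFunOn f D x)).1, hDinf.image hinj, ?_, ?_⟩
  · rintro w ⟨u, hu, rfl⟩
    have hmem : ∃ a ∈ D, f a = f u := ⟨u, hu, rfl⟩
    set u' := Function.invFunOn f D (f u) with hu'def
    have hu'D : u' ∈ D := Function.invFunOn_mem hmem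
    have hu'eq : f u' = f u := Function.invFunOn_eq hmem
    have hvu : v <+: u' ∧ v.length < u'.length := rmem hP (hDP hu'D)
    have h1 : v <+: f u := hu'eq ▸ (hvu.1.trans (hpre u' (hDP hu'D)))
    have h2 : v.length < (f u).length := by
      have h3 := (hpre u' (hDP hu'D)).length_le
      have h4 : (f u).length = (g u').2.length := by rw [← hu'eq]
      omega
    refine ⟨⟨h1, by intro h; rw [← h] at h2; omega⟩, ?_, ?_, ?_⟩
    · have : MillerClosure P v u' := MillerClosure.step MillerClosure.base (hDP hu'D)
      exact hu'eq ▸ closure_trans this (hsplit u' (hDP hu'D))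
    · show Good X P (f u) (g (Function.invFunOn f D (f u))).1
      rw [← hu'def, ← hu'eq]
      exact hgood u' (hDP hu'D)
    · rw [← hu'eq, hval u' (hDP hu'D)]
      exact hu'D.2
  · rintro w ⟨x, hx, rfl⟩ w' ⟨y, hy, rfl⟩ hne
    have hxy : x ≠ y := by rintro rfl; exact hne rfl
    rw [hval x (hDP hx), hval y (hDP hy)]
    exact (hP v).2.2 x (hDP hx) y (hDP hy) hxy

end good

section construction
variable (X : Set (ℕ → ℕ)) (P : List ℕ → Set (List ℕ))

/-- Node data: the set `Q_v` together with the assignment of ambient trees to its members. -/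
abbrev ND := Set (List ℕ) × (List ℕ → Set (List ℕ))

/-- The full specification of the data chosen at node `v`, given the data `g u`
already chosen at all proper prefixes `u` of `v`. -/
def FullSpec (g : List ℕ → ND) (v : List ℕ) (S : Set (List ℕ))
    (τ : List ℕ → Set (List ℕ)) : Prop :=
  S.Infinite ∧
  (∀ w ∈ S, (v <+: w ∧ v ≠ w) ∧ MillerClosure P v w ∧ Good X P w (τ w) ∧
      ∀ u, u <+: v → u ≠ v → w ∉ (g u).1) ∧
  (∀ w ∈ S, ∀ w' ∈ S, w ≠ w' → w.getD v.length 0 ≠ w'.getD v.length 0) ∧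
  (∀ u, u <+: v → u ≠ v → v ∈ (g u).1 → Good X P v ((g u).2 v) →
      ∀ w ∈ S, τ w = (g u).2 v)

/-- One step of the construction. -/
noncomputable def stepND (g : List ℕ → ND) (v : List ℕ) : ND :=
  open Classical in
  if h : ∃ Sτ : ND, FullSpec X P g v Sτ.1 Sτ.2 then h.choose else ⟨∅, fun _ => ∅⟩

/-- Approximations: `G n` assigns correct data to all nodes of length `< n`. -/
noncomputable def G : ℕ → List ℕ → ND
  | 0 => fun _ => ⟨∅, fun _ => ∅⟩
  | (n + 1) => fun v => if v.length = n then stepND X P (G n) v else G n v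

/-- The final assignment. -/
noncomputable def H (v : List ℕ) : ND := G X P (v.length + 1) v

lemma G_stable : ∀ n (v : List ℕ), v.length < n → G X P n v = H X P v := by
  intro n
  induction n with
  | zero => intro v hv; omega
  | succ n ih =>
    intro v hv
    rcases eq_or_lt_of_le (Nat.lt_succ_iff.mp hv) with h | h
    · simp only [H, G, h]
    · rw [show G X P (n+1) v = if v.length = n then stepND X P (G X P n) v else G X P n v from rfl,
        if_neg (by omega)]
      exact ih v h

lemma H_eq_step (v : List ℕ) : H X P v = stepND X P (G X P v.length) v := by
  rw [show H X P v = if v.length = v.length then stepND X P (G X P v.length) v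
      else G X P v.length v from rfl, if_pos rfl]

end construction

section inv
variable {X : Set (ℕ → ℕ)} {P : List ℕ → Set (List ℕ)}

theorem INV (hX : MillerIdeal X) (hP : IsRFamily P) :
    ∀ n (v : List ℕ), v.length = n →
      FullSpec X P (G X P v.length) v (H X P v).1 (H X P v).2 := by
  intro n
  induction n using Nat.strong_induction_on with
  | _ n ih =>
  intro v hvn
  subst hvn
  have hgu : ∀ u, u <+: v → u ≠ v → G X P v.length u = H X P u := by
    intro u hu hne
    exact G_stable X P v.length u (length_lt_of_proper hu hne)
  have ihu : ∀ u, u <+: v → u ≠ v →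
      FullSpec X P (G X P u.length) u (H X P u).1 (H X P u).2 := by
    intro u hu hne
    exact ih u.length (length_lt_of_proper hu hne) u rfl
  have huniq : ∀ u u', (u <+: v ∧ u ≠ v) → (u' <+: v ∧ u' ≠ v) →
      v ∈ (H X P u).1 → v ∈ (H X P u').1 → u = u' := by
    intro u u' hu hu' hv hv'
    by_contra hne
    have key : ∀ a b, (a <+: v ∧ a ≠ v) → (b <+: v ∧ b ≠ v) → a <+: b → a ≠ b →
        v ∈ (H X P a).1 → v ∈ (H X P b).1 → False := by
      intro a b ha hb hab hane hva hvb
      have hspec := ihu b hb.1 hb.2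
      have h2 := (hspec.2.1 v hvb).2.2.2 a hab hane
      rw [G_stable X P b.length a (length_lt_of_proper hab hane)] at h2
      exact h2 hva
    rcases prefix_trichotomy hu.1 hu'.1 with h | h
    · exact key u u' hu hu' h hne hv hv'
    · exact key u' u hu' hu h (Ne.symm hne) hv' hv
  -- the finite set of forbidden values at coordinate |v|
  set B : Set ℕ := {x | ∃ u, (u <+: v ∧ u ≠ v) ∧ ∃ w ∈ (H X P u).1,
      (v <+: w ∧ v ≠ w) ∧ w.getD v.length 0 = x} with hBdef
  have hBfin : B.Finite := by
    have hsub : B ⊆ ⋃ k ∈ Finset.range v.length, {x | ∃ w ∈ (H X P (v.take k)).1,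
        (v <+: w ∧ v ≠ w) ∧ w.getD v.length 0 = x} := by
      rintro x ⟨u, ⟨hu, hune⟩, w, hw, hvw, rfl⟩
      have hul : u.length < v.length := length_lt_of_proper hu hune
      refine Set.mem_biUnion (Finset.mem_coe.mpr (Finset.mem_range.mpr hul)) ?_
      have : v.take u.length = u := (List.prefix_iff_eq_take.mp hu).symm
      exact ⟨w, by rw [this]; exact hw, hvw, rfl⟩
    refine Set.Finite.subset (Set.Finite.biUnion (Finset.range v.length).finite_toSet
      (fun k hk => Set.Subsingleton.finite ?_)) hsub
    rintro x ⟨w, hw, hvw, rfl⟩ x' ⟨w', hw', hvw', rfl⟩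
    have hkl : k < v.length := Finset.mem_range.mp (Finset.mem_coe.mp hk)
    set u := v.take k with hudef
    have huv : u <+: v := List.take_prefix _ _
    have hulen : u.length = k := by simp [hudef]; omega
    have hune : u ≠ v := by intro h; rw [h] at hulen; omega
    have hspec := ihu u huv hune
    have hww : w = w' := by
      by_contra hne
      apply hspec.2.2.1 w hw w' hw' hne
      have e1 : w.getD u.length 0 = v.getD u.length 0 :=
        getD_eq_of_prefix hvw.1 (by omega)
      have e2 : w'.getD u.length 0 = v.getD u.length 0 :=
        getD_eq_of_prefix hvw'.1 (by omega)
      omega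
    rw [hww]
  have hex : ∃ Sτ : ND, FullSpec X P (G X P v.length) v Sτ.1 Sτ.2 := by
    by_cases hr : ∃ u, (u <+: v ∧ u ≠ v) ∧ v ∈ (H X P u).1 ∧ Good X P v ((H X P u).2 v)
    · obtain ⟨u, hu, hvmem, hgood⟩ := hr
      obtain ⟨S, hS1, hS2, hS3⟩ := extend_good hP hgood hBfin
      refine ⟨⟨S, fun _ => (H X P u).2 v⟩, hS1, ?_, hS3, ?_⟩
      · intro w hw
        obtain ⟨hpre, hclo, hgw, hnB⟩ := hS2 w hw
        refine ⟨hpre, hclo, hgw, ?_⟩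
        intro u' hu' hne' hwmem
        rw [hgu u' hu' hne'] at hwmem
        exact hnB ⟨u', ⟨hu', hne'⟩, w, hwmem, hpre, rfl⟩
      · intro u' hu' hne' hv' hgood' w _
        rw [hgu u' hu' hne'] at hv' hgood' ⊢
        have : u' = u := huniq u' u ⟨hu', hne'⟩ hu hv' hvmem
        rw [this]
    · obtain ⟨S, τ, hS1, hS2, hS3⟩ := fresh_good hX hP v hBfin
      refine ⟨⟨S, τ⟩, hS1, ?_, hS3, ?_⟩
      · intro w hw
        obtain ⟨hpre, hclo, hgw, hnB⟩ := hS2 w hw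
        refine ⟨hpre, hclo, hgw, ?_⟩
        intro u' hu' hne' hwmem
        rw [hgu u' hu' hne'] at hwmem
        exact hnB ⟨u', ⟨hu', hne'⟩, w, hwmem, hpre, rfl⟩
      · intro u' hu' hne' hv' hgood'
        rw [hgu u' hu' hne'] at hv' hgood'
        exact absurd ⟨u', ⟨hu', hne'⟩, hv', hgood'⟩ hr
  have hHv : H X P v = hex.choose := by
    rw [H_eq_step]
    simp only [stepND]
    rw [dif_pos hex]
  rw [hHv]
  exact hex.choose_spec

end inv

end Fact16

/-- Fact 1.6: if `X ∈ m⁰` and `P̄ ∈ R`, there is `Q̄ ∈ R` with `Q̄ ≤ P̄` such that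
`[p_s(Q̄)] ∩ X = ∅` for every `s`. -/
theorem fact_1_6 (X : Set (ℕ → ℕ)) (hX : MillerIdeal X)
    (P : List ℕ → Set (List ℕ)) (hP : IsRFamily P) :
    ∃ Q : List ℕ → Set (List ℕ), IsRFamily Q ∧ RLE Q P ∧
      ∀ s, Branches (MillerOf Q s) ∩ X = ∅ := by
  classical
  open Fact16 in
  set Q : List ℕ → Set (List ℕ) := fun v => (H X P v).1 with hQdef
  set τv : List ℕ → List ℕ → Set (List ℕ) := fun v => (H X P v).2 with hτdef
  have hinv : ∀ v, FullSpec X P (G X P v.length) v (Q v) (τv v) :=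
    fun v => INV hX hP v.length v rfl
  have hQR : IsRFamily Q := by
    intro v
    exact ⟨(hinv v).1, fun t ht => ((hinv v).2.1 t ht).1, (hinv v).2.2.1⟩
  have hclmono : ∀ s t, MillerClosure Q s t → MillerClosure P s t := by
    intro s t h
    induction h with
    | base => exact MillerClosure.base
    | @step a b h hm ih =>
      exact closure_trans ih ((hinv a).2.1 b hm).2.1
  refine ⟨Q, hQR, ?_, ?_⟩
  · rintro s x ⟨c, hc, hp⟩
    exact ⟨c, hclmono s c hc, hp⟩
  · intro s
    rw [Set.eq_empty_iff_forall_notMem]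
    rintro η ⟨hb, hηX⟩
    set rmap : ℕ → List ℕ := fun n => (List.range n).map η with hrmap
    have hrlen : ∀ n, (rmap n).length = n := by intro n; simp [hrmap]
    have hrpre : ∀ a b, a ≤ b → rmap a <+: rmap b := by
      intro a b hab
      have h1 : (rmap b).take a = rmap a := by
        simp only [hrmap]
        rw [← List.map_take, List.take_range, min_eq_left hab]
      rw [← h1]
      exact List.take_prefix _ _
    have hrget : ∀ a b, a < b → (rmap b).getD a 0 = η a := by
      intro a b hab
      rw [List.getD_eq_getElem _ _ (by simp [hrmap]; omega)]
      simp [hrmap]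
    have init : s = rmap s.length := by
      obtain ⟨c, hc, hp⟩ := hb s.length
      have hs : s <+: c := closure_prefix hQR hc
      have h1 : s <+: rmap s.length :=
        List.prefix_of_prefix_length_le hs hp (le_of_eq (hrlen s.length).symm)
      exact h1.eq_of_length (hrlen s.length).symm
    have stepex : ∀ l, MillerClosure Q s l → l = rmap l.length →
        ∃ l', l' ∈ Q l ∧ MillerClosure Q s l' ∧ l' = rmap l'.length ∧
          l.length < l'.length := by
      intro l hl hlr
      obtain ⟨c₁, hc₁, hp₁⟩ := hb (l.length + 1)
      have hlc₁ : l <+: c₁ := by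
        rw [hlr]; exact (hrpre _ _ (Nat.le_succ l.length)).trans hp₁
      have hlen₁ : l.length < c₁.length := by
        have := hp₁.length_le; rw [hrlen] at this; omega
      have hnec₁ : c₁ ≠ l := by intro h; rw [h] at hlen₁; omega
      obtain ⟨z, hz, hzc₁⟩ := closure_first hQR (closure_cl hQR hl hc₁ hlc₁) hnec₁
      have hzl := rmem hQR hz
      have hzval : z.getD l.length 0 = η l.length := by
        have e1 : c₁.getD l.length 0 = z.getD l.length 0 := getD_eq_of_prefix hzc₁ hzl.2
        have e2 : c₁.getD l.length 0 = (rmap (l.length + 1)).getD l.length 0 :=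
          getD_eq_of_prefix hp₁ (by rw [hrlen]; omega)
        have e3 := hrget l.length (l.length + 1) (by omega)
        omega
      obtain ⟨c₂, hc₂, hp₂⟩ := hb (z.length + 1)
      have hlc₂ : l <+: c₂ := by
        rw [hlr]; exact (hrpre _ _ (by omega)).trans hp₂
      have hlen₂ : z.length + 1 ≤ c₂.length := by
        have := hp₂.length_le; rw [hrlen] at this; omega
      have hnec₂ : c₂ ≠ l := by intro h; rw [h] at hlen₂; omega
      obtain ⟨z', hz', hz'c₂⟩ := closure_first hQR (closure_cl hQR hl hc₂ hlc₂) hnec₂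
      have hz'l := rmem hQR hz'
      have hz'val : z'.getD l.length 0 = η l.length := by
        have e1 : c₂.getD l.length 0 = z'.getD l.length 0 := getD_eq_of_prefix hz'c₂ hz'l.2
        have e2 : c₂.getD l.length 0 = (rmap (z.length + 1)).getD l.length 0 :=
          getD_eq_of_prefix hp₂ (by rw [hrlen]; omega)
        have e3 := hrget l.length (z.length + 1) (by omega)
        omega
      have hzz : z = z' := by
        by_contra hne
        exact (hQR l).2.2 z hz z' hz' hne (by omega)
      have hzc₂ : z <+: c₂ := hzz ▸ hz'c₂
      have hzr : z <+: rmap (z.length + 1) :=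
        List.prefix_of_prefix_length_le hzc₂ hp₂ (by rw [hrlen]; omega)
      have hzeq : z = rmap z.length := by
        have h3 : z <+: rmap z.length :=
          List.prefix_of_prefix_length_le hzr (hrpre _ _ (by omega))
            (le_of_eq (hrlen z.length).symm)
        exact h3.eq_of_length (hrlen z.length).symm
      exact ⟨z, hz, MillerClosure.step hl hz, hzeq, hzl.2⟩
    choose! f hf1 hf2 hf3 hf4 using stepex
    set t : ℕ → List ℕ := fun k => f^[k] s with htdef
    have ht0 : t 0 = s := rfl
    have htsucc : ∀ k, t (k + 1) = f (t k) := by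
      intro k; simp only [htdef, Function.iterate_succ_apply']
    have hbase : ∀ k, MillerClosure Q s (t k) ∧ t k = rmap (t k).length ∧
        s.length + k ≤ (t k).length := by
      intro k
      induction k with
      | zero => exact ⟨MillerClosure.base, init, by show s.length + 0 ≤ s.length; omega⟩
      | succ k ih =>
        rw [htsucc k]
        refine ⟨hf2 (t k) ih.1 ih.2.1, hf3 (t k) ih.1 ih.2.1, ?_⟩
        have := hf4 (t k) ih.1 ih.2.1
        omega
    have hmem : ∀ k, t (k + 1) ∈ Q (t k) := by
      intro k
      rw [htsucc k]
      exact hf1 (t k) (hbase k).1 (hbase k).2.1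
    set T : Set (List ℕ) := τv (t 0) (t 1) with hTdef
    have hcompat : ∀ k, Good X P (t (k + 1)) T ∧
        (∀ w ∈ Q (t (k + 1)), τv (t (k + 1)) w = T) := by
      intro k
      induction k with
      | zero =>
        show Good X P (t 1) T ∧ ∀ w ∈ Q (t 1), τv (t 1) w = T
        have hg : Good X P (t 1) T := ((hinv (t 0)).2.1 (t 1) (hmem 0)).2.2.1
        refine ⟨hg, ?_⟩
        have hpre : t 0 <+: t 1 ∧ (t 0).length < (t 1).length := rmem hQR (hmem 0)
        have hne : t 0 ≠ t 1 := by intro h; rw [h] at hpre; omega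
        have hco := (hinv (t 1)).2.2.2 (t 0) hpre.1 hne
        rw [G_stable X P (t 1).length (t 0) hpre.2] at hco
        have h1 : t 1 ∈ (H X P (t 0)).1 := hmem 0
        have h2 : Good X P (t 1) ((H X P (t 0)).2 (t 1)) := hg
        intro w hw
        rw [hco h1 h2 w hw]
      | succ k ih =>
        show Good X P (t (k + 2)) T ∧ ∀ w ∈ Q (t (k + 2)), τv (t (k + 2)) w = T
        have hmem' : t (k + 2) ∈ Q (t (k + 1)) := hmem (k + 1)
        have hτeq : τv (t (k + 1)) (t (k + 2)) = T := ih.2 (t (k + 2)) hmem'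
        have hg : Good X P (t (k + 2)) T := by
          have h0 : Good X P (t (k + 2)) (τv (t (k + 1)) (t (k + 2))) :=
            ((hinv (t (k + 1))).2.1 (t (k + 2)) hmem').2.2.1
          rwa [hτeq] at h0
        refine ⟨hg, ?_⟩
        have hpre : t (k + 1) <+: t (k + 2) ∧ (t (k + 1)).length < (t (k + 2)).length :=
          rmem hQR hmem'
        have hne : t (k + 1) ≠ t (k + 2) := by intro h; rw [h] at hpre; omega
        have hco := (hinv (t (k + 2))).2.2.2 (t (k + 1)) hpre.1 hne
        rw [G_stable X P (t (k + 2)).length (t (k + 1)) hpre.2] at hco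
        have h1 : t (k + 2) ∈ (H X P (t (k + 1))).1 := hmem'
        have h2 : Good X P (t (k + 2)) ((H X P (t (k + 1))).2 (t (k + 2))) := by
          show Good X P (t (k + 2)) (τv (t (k + 1)) (t (k + 2)))
          rw [hτeq]; exact hg
        intro w hw
        rw [hco h1 h2 w hw]
        show τv (t (k + 1)) (t (k + 2)) = T
        exact hτeq
    have hTgood : Good X P (t 1) T := (hcompat 0).1
    have hηT : η ∈ Branches T := by
      intro n
      have h1 : t (n + 1) ∈ T := (hcompat n).1.2.2.1
      have h2 : rmap n <+: t (n + 1) := by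
        rw [(hbase (n + 1)).2.1]
        exact hrpre _ _ (by have := (hbase (n + 1)).2.2; omega)
      exact hTgood.1.1 (t (n + 1)) h1 (rmap n) h2
    have := hTgood.2.1
    rw [Set.eq_empty_iff_forall_notMem] at this
    exact this η ⟨hηT, hηX⟩
end

section
/- (Fact 1.7) Suppose X belongs to the Miller ideal m⁰, P̄, Q̄ ∈ R, P̄ ≤* Q̄, and [p_s(Q̄)] ∩ X = ∅ for every s ∈ ω^{<ω}. Then [p_s(P̄)] ∩ X = ∅ for every s ∈ ω^{<ω}. -/
/-- `P̄ ≈ Q̄` on `R`: `P_s =* Q_s` for every `s`, and `P_s = Q_s` for all but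
finitely many `s`. -/
def RApprox (P Q : List ℕ → Set (List ℕ)) : Prop :=
  (∀ s, ((P s \ Q s) ∪ (Q s \ P s)).Finite) ∧ {s : List ℕ | P s ≠ Q s}.Finite

/-- `P̄ ≤* Q̄` on `R`: some `P̄' ∈ R` satisfies `P̄ ≈ P̄'` and `P̄' ≤ Q̄`. -/
def RLEstar (P Q : List ℕ → Set (List ℕ)) : Prop :=
  ∃ P' : List ℕ → Set (List ℕ), IsRFamily P' ∧ RApprox P P' ∧ RLE P' Q

/-! ### Auxiliary lemmas -/

lemma rangeMap_prefix (η : ℕ → ℕ) {m n : ℕ} (h : m ≤ n) :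
    (List.range m).map η <+: (List.range n).map η :=
  List.IsPrefix.map η ((List.prefix_iff_eq_take).2 (by
    simp [List.take_range, Nat.min_eq_left h]))

lemma eq_rangeMap_of_prefix {l : List ℕ} {η : ℕ → ℕ} {n : ℕ}
    (h : l <+: (List.range n).map η) : l = (List.range l.length).map η := by
  have hl : l.length ≤ n := by simpa using h.length_le
  have := List.prefix_iff_eq_take.1 h
  rw [this]
  simp [← List.map_take, List.take_range, Nat.min_eq_left hl]

lemma getD_of_prefix {a b : List ℕ} (h : a <+: b) {i : ℕ} (hi : i < a.length) :
    a.getD i 0 = b.getD i 0 := by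
  rw [List.getD_eq_getElem _ _ hi, List.getD_eq_getElem _ _ (hi.trans_le h.length_le)]
  exact (List.IsPrefix.getElem h hi).symm ▸ rfl

lemma rangeMap_getD (η : ℕ → ℕ) {n i : ℕ} (hi : i < n) :
    ((List.range n).map η).getD i 0 = η i := by
  rw [List.getD_eq_getElem _ _ (by simpa using hi)]; simp

lemma length_lt_of_proper {a b : List ℕ} (h : a <+: b) (hne : a ≠ b) :
    a.length < b.length := by
  rcases lt_or_eq_of_le h.length_le with h' | h'
  · exact h'
  · exact absurd (h.eq_of_length h') hne

lemma mem_R_proper {P : List ℕ → Set (List ℕ)} (hP : IsRFamily P) {t u : List ℕ}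
    (hu : u ∈ P t) : t <+: u ∧ t.length < u.length := by
  obtain ⟨hpre, hne⟩ := (hP t).2.1 u hu
  exact ⟨hpre, length_lt_of_proper hpre hne⟩

lemma closure_prefix {P : List ℕ → Set (List ℕ)} (hP : IsRFamily P) {s t : List ℕ}
    (h : MillerClosure P s t) : s <+: t := by
  induction h with
  | base => exact List.prefix_rfl
  | step h1 h2 ih => exact ih.trans (mem_R_proper hP h2).1

/-- Lemma A: any split node `v` properly extending a split node `t` passes through
some element of `P t`. -/
lemma between_split {P : List ℕ → Set (List ℕ)} (hP : IsRFamily P) {s : List ℕ} :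
    ∀ n (v : List ℕ), v.length ≤ n → MillerClosure P s v →
      ∀ t, MillerClosure P s t → t <+: v → t ≠ v → ∃ u ∈ P t, u <+: v := by
  intro n
  induction n with
  | zero =>
    intro v hv _ t _ hpre hne
    exact absurd (hpre.eq_of_length (by have := hpre.length_le; omega)) hne
  | succ n ih =>
    intro v hv hcl t ht hpre hne
    cases hcl with
    | base =>
      have h1 := closure_prefix hP ht
      exact absurd (hpre.eq_of_length (le_antisymm hpre.length_le h1.length_le)) hne
    | @step w _ hw hu =>
      have hwv := mem_R_proper hP hu
      rcases List.prefix_or_prefix_of_prefix hpre hwv.1 with htw | hwt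
      · rcases eq_or_ne t w with rfl | hne2
        · exact ⟨v, hu, List.prefix_rfl⟩
        · obtain ⟨u, hu', hupre⟩ := ih w (by omega) hw t ht htw hne2
          exact ⟨u, hu', hupre.trans hwv.1⟩
      · rcases eq_or_ne w t with rfl | hne2
        · exact ⟨v, hu, List.prefix_rfl⟩
        · have htlen : t.length < v.length := length_lt_of_proper hpre hne
          obtain ⟨u, hu', hupre⟩ := ih t (by omega) ht w hw hwt hne2
          have hwu := mem_R_proper hP hu'
          have h1 : u.getD w.length 0 = t.getD w.length 0 := getD_of_prefix hupre hwu.2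
          have h2 : t.getD w.length 0 = v.getD w.length 0 :=
            getD_of_prefix hpre (length_lt_of_proper hwt hne2)
          rcases eq_or_ne u v with rfl | hne3
          · have l1 := hpre.length_le
            have l2 := hupre.length_le
            exact absurd (hpre.eq_of_length (by omega)) hne
          · exact absurd (h1.trans h2) ((hP w).2.2 u hu' v hu hne3)

/-- Lemma D: given a split node `t` which is an initial segment of the branch `η`,
there is a next split node along `η` in `P t`. -/
lemma next_split {P : List ℕ → Set (List ℕ)} (hP : IsRFamily P) {s : List ℕ} {η : ℕ → ℕ}
    (hbr : η ∈ Branches (MillerOf P s)) {t : List ℕ} (ht : MillerClosure P s t)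
    (hpre : t = (List.range t.length).map η) :
    ∃ u ∈ P t, u = (List.range u.length).map η := by
  obtain ⟨v0, hv0, hpv0⟩ := hbr (t.length + 1)
  have htv0 : t <+: v0 := by
    rw [hpre]; exact (rangeMap_prefix η (Nat.le_succ _)).trans hpv0
  have hlenv0 : t.length + 1 ≤ v0.length := by simpa using hpv0.length_le
  have hnev0 : t ≠ v0 := fun hh => by have := congrArg List.length hh; omega
  obtain ⟨u', hu', hpu'⟩ := between_split hP v0.length v0 le_rfl hv0 t ht htv0 hnev0
  rcases List.prefix_or_prefix_of_prefix hpu' hpv0 with h1 | h1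
  · exact ⟨u', hu', eq_rangeMap_of_prefix h1⟩
  · -- (range (t.length+1)).map η <+: u'
    have hlenu' : t.length + 1 ≤ u'.length := by simpa using h1.length_le
    obtain ⟨v, hv, hpv⟩ := hbr u'.length
    have htv : t <+: v := by
      rw [hpre]; exact (rangeMap_prefix η (by omega)).trans hpv
    have hlenv : u'.length ≤ v.length := by simpa using hpv.length_le
    have hnev : t ≠ v := fun hh => by have := congrArg List.length hh; omega
    obtain ⟨u'', hu'', hpu''⟩ := between_split hP v.length v le_rfl hv t ht htv hnev
    rcases List.prefix_or_prefix_of_prefix hpu'' hpv with h2 | h2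
    · exact ⟨u'', hu'', eq_rangeMap_of_prefix h2⟩
    · have g1 : u'.getD t.length 0 = η t.length := by
        rw [← getD_of_prefix h1 (by simpa using Nat.lt_succ_self t.length)]
        exact rangeMap_getD η (Nat.lt_succ_self _)
      have g2 : u''.getD t.length 0 = η t.length := by
        rw [← getD_of_prefix h2 (by simpa using hlenu')]
        exact rangeMap_getD η (by omega)
      have hequ : u' = u'' := by
        by_contra hne3
        exact (hP t).2.2 u' hu' u'' hu'' hne3 (g1.trans g2.symm)
      have hlen2 : u''.length = u'.length := by rw [hequ]
      have h3 : (List.range u'.length).map η = u'' :=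
        h2.eq_of_length (by simpa using hlen2.symm)
      exact ⟨u'', hu'', by rw [hlen2, ← h3]⟩

/-- Fact 1.7: if `P̄ ≤* Q̄` in `R` and `[p_s(Q̄)] ∩ X = ∅` for all `s`, then
`[p_s(P̄)] ∩ X = ∅` for all `s`. -/
theorem fact_1_7 (X : Set (ℕ → ℕ)) (hX : MillerIdeal X)
    (P Q : List ℕ → Set (List ℕ)) (hP : IsRFamily P) (hQ : IsRFamily Q)
    (hle : RLEstar P Q) (h : ∀ s, Branches (MillerOf Q s) ∩ X = ∅) :
    ∀ s, Branches (MillerOf P s) ∩ X = ∅ := by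
  obtain ⟨P', hP', ⟨_, hfin⟩, hRLE⟩ := hle
  intro s
  rw [Set.eq_empty_iff_forall_notMem]
  rintro η ⟨hbr, hηX⟩
  -- a bound beyond which P and P' agree
  obtain ⟨N, hN⟩ : ∃ N, ∀ d : List ℕ, P d ≠ P' d → d.length < N := by
    obtain ⟨N, hN⟩ := (hfin.image List.length).bddAbove
    exact ⟨N + 1, fun d hd => Nat.lt_succ_of_le (hN ⟨d, hd, rfl⟩)⟩
  -- the stem s is an initial segment of η
  have hs_eq : s = (List.range s.length).map η := by
    obtain ⟨v, hv, hpv⟩ := hbr s.length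
    have hsv := closure_prefix hP hv
    rcases List.prefix_or_prefix_of_prefix hsv hpv with h1 | h1
    · exact h1.eq_of_length (by simp)
    · exact (h1.eq_of_length (by simp)).symm
  -- find a split node t₀ along η of length ≥ N
  have chain : ∀ k, ∃ t, MillerClosure P s t ∧
      t = (List.range t.length).map η ∧ k ≤ t.length := by
    intro k
    induction k with
    | zero => exact ⟨s, .base, hs_eq, Nat.zero_le _⟩
    | succ k ih =>
      obtain ⟨t, h1, h2, h3⟩ := ih
      obtain ⟨u, hu, h4⟩ := next_split hP hbr h1 h2
      exact ⟨u, .step h1 hu, h4, by have := (mem_R_proper hP hu).2; omega⟩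
  obtain ⟨t₀, ht₀, ht₀e, ht₀len⟩ := chain N
  -- build arbitrarily long split nodes of P' above t₀ along η
  have chain2 : ∀ k, ∃ t, MillerClosure P s t ∧ MillerClosure P' t₀ t ∧
      t = (List.range t.length).map η ∧ k ≤ t.length := by
    intro k
    induction k with
    | zero => exact ⟨t₀, ht₀, .base, ht₀e, Nat.zero_le _⟩
    | succ k ih =>
      obtain ⟨t, h1, h1', h2, h3⟩ := ih
      obtain ⟨u, hu, h4⟩ := next_split hP hbr h1 h2
      have hlen : N ≤ t.length :=
        ht₀len.trans (closure_prefix hP' h1').length_le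
      have hPP' : P t = P' t := by
        by_contra hne; exact absurd hlen (not_le.2 (hN t hne))
      exact ⟨u, .step h1 hu, .step h1' (hPP' ▸ hu), h4,
        by have := (mem_R_proper hP hu).2; omega⟩
  have hηQ : η ∈ Branches (MillerOf Q t₀) := by
    intro n
    apply hRLE t₀
    obtain ⟨t, _, hcl', heq, hlen⟩ := chain2 n
    exact ⟨t, hcl', by rw [heq]; exact rangeMap_prefix η hlen⟩
  have := h t₀
  rw [Set.eq_empty_iff_forall_notMem] at this
  exact this η ⟨hηQ, hηX⟩
end

section
/- (Lemma 2.3, implication (1) ⇒ (2)) If A ⊆ ᵚω and there exists a Laver tree p with [p] ⊆ A, then A is strongly dominating. -/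
/-- `A` is strongly dominating: for every `f` there is `η ∈ A` with
`f (η (k-1)) < η k` for all but finitely many `k ≥ 1`. -/
def StronglyDominating (A : Set (ℕ → ℕ)) : Prop :=
  ∀ f : ℕ → ℕ, ∃ η ∈ A, ∀ᶠ k in Filter.atTop, f (η (k - 1)) < η k

/-- One step of the construction: extend a node of the Laver tree above the stem by a
large successor. -/
noncomputable def laverStep (p : Set (List ℕ)) (st : List ℕ) (h : IsLaverWithStem p st)
    (f : ℕ → ℕ) (l : {l : List ℕ // l ∈ p ∧ st <+: l}) : {l : List ℕ // l ∈ p ∧ st <+: l} :=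
  let hex := (h.2.2.2 l.1 l.2.1 l.2.2).exists_gt (f (l.1.getD (l.1.length - 1) 0))
  ⟨l.1 ++ [Classical.choose hex], (Classical.choose_spec hex).1,
    l.2.2.trans ⟨[Classical.choose hex], rfl⟩⟩

/-- The branch construction. -/
noncomputable def laverSeq (p : Set (List ℕ)) (st : List ℕ) (h : IsLaverWithStem p st)
    (f : ℕ → ℕ) : ℕ → {l : List ℕ // l ∈ p ∧ st <+: l}
  | 0 => ⟨st, h.2.1, List.prefix_refl st⟩
  | k + 1 => laverStep p st h f (laverSeq p st h f k)

lemma laverSeq_len (p : Set (List ℕ)) (st : List ℕ) (h : IsLaverWithStem p st)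
    (f : ℕ → ℕ) (k : ℕ) : (laverSeq p st h f k).1.length = st.length + k := by
  induction k with
  | zero => rfl
  | succ k ih =>
    show ((laverSeq p st h f k).1 ++ _).length = _
    simp [ih]; omega

lemma laverSeq_prefix (p : Set (List ℕ)) (st : List ℕ) (h : IsLaverWithStem p st)
    (f : ℕ → ℕ) {a b : ℕ} (hab : a ≤ b) :
    (laverSeq p st h f a).1 <+: (laverSeq p st h f b).1 := by
  induction b with
  | zero => simp_all
  | succ b ih =>
    rcases Nat.lt_or_ge a (b+1) with hb | hb
    · exact (ih (by omega)).trans ⟨_, rfl⟩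
    · have : a = b + 1 := by omega
      subst this; exact List.prefix_refl _

lemma laverSeq_dom (p : Set (List ℕ)) (st : List ℕ) (h : IsLaverWithStem p st)
    (f : ℕ → ℕ) (k : ℕ) :
    f ((laverSeq p st h f k).1.getD ((laverSeq p st h f k).1.length - 1) 0)
      < (laverSeq p st h f (k+1)).1.getD (laverSeq p st h f k).1.length 0 := by
  have := (Classical.choose_spec
    ((h.2.2.2 (laverSeq p st h f k).1 (laverSeq p st h f k).2.1 (laverSeq p st h f k).2.2).exists_gt
      (f ((laverSeq p st h f k).1.getD ((laverSeq p st h f k).1.length - 1) 0)))).2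
  show f _ < ((laverSeq p st h f k).1 ++ _).getD _ 0
  simpa using this

/-- Lemma 2.3, (1) ⇒ (2): if some Laver tree has all its branches inside `A`,
then `A` is strongly dominating. -/
theorem lemma_2_3_1_to_2 (A : Set (ℕ → ℕ)) (p : Set (List ℕ))
    (hp : IsLaverTree p) (hpA : Branches p ⊆ A) :
    StronglyDominating A := by
  obtain ⟨st, h⟩ := hp
  intro f
  set S := fun k => (laverSeq p st h f k).1 with hS
  have hlen : ∀ k, (S k).length = st.length + k := laverSeq_len p st h f
  set η : ℕ → ℕ := fun m => (S (m+1)).getD m 0 with hη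
  -- η agrees with any S k on indices < length
  have hagree : ∀ k m, m < (S k).length → η m = (S k).getD m 0 := by
    intro k m hm
    have hm1 : m < (S (m+1)).length := by rw [hlen]; omega
    rcases Nat.le_total (m+1) k with hk | hk
    · have hpre := laverSeq_prefix p st h f hk
      show (S (m+1)).getD m 0 = (S k).getD m 0
      rw [List.getD_eq_getElem _ _ hm1, List.getD_eq_getElem _ _ hm]
      exact hpre.getElem hm1
    · have hpre := laverSeq_prefix p st h f hk
      show (S (m+1)).getD m 0 = (S k).getD m 0
      rw [List.getD_eq_getElem _ _ hm1, List.getD_eq_getElem _ _ hm]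
      exact (hpre.getElem hm).symm
  have hbranch : η ∈ Branches p := by
    intro n
    have hn : n ≤ (S n).length := by rw [hlen]; omega
    have : (List.range n).map η = (S n).take n := by
      apply List.ext_getElem
      · simp [List.length_take, hn]
      · intro i h1 h2
        have hi : i < n := by simpa using h1
        have hi' : i < (S n).length := by omega
        simp only [List.getElem_map, List.getElem_range, List.getElem_take]
        rw [hagree n i hi', List.getD_eq_getElem _ _ hi']
    rw [this]
    exact h.1 (S n) (laverSeq p st h f n).2.1 _ (List.take_prefix n (S n))
  refine ⟨η, hpA hbranch, ?_⟩
  rw [Filter.eventually_atTop]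
  refine ⟨st.length + 1, fun k hk => ?_⟩
  set t := k - st.length with ht
  have hkt : k = st.length + t := by omega
  have hdom := laverSeq_dom p st h f t
  have hL : (S t).length = k := by rw [hlen]; omega
  have h1 : η k = (S (t+1)).getD k 0 := by
    apply hagree; rw [hlen]; omega
  have h2 : η (k-1) = (S t).getD (k-1) 0 := by
    apply hagree; rw [hlen]; omega
  rw [h1, h2, ← hL]
  have hdom' : f ((S t).getD ((S t).length - 1) 0) < (S (t+1)).getD (S t).length 0 := hdom
  simpa [hL] using hdom'
end

section
/- (Lemma 2.3, implication (2) ⇒ (4)) If A ⊆ ᵚω is strongly dominating, then for every function F : ω^{<ω} × ℕ → ℕ there exists η ∈ A such that for all but finitely many k, for every i ≤ k, η(k) > F(η↾k, i). -/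
/-- Auxiliary dominating function: `n + 2` plus the max of `F s i` over all
lists `s` of length `≤ n` with entries `≤ n` and all `i ≤ n`. -/
def auxF (F : List ℕ → ℕ → ℕ) (n : ℕ) : ℕ :=
  n + 2 + Finset.sup (Finset.range (n + 1)) (fun m =>
    Finset.sup (Finset.univ : Finset (Fin m → Fin (n + 1))) (fun g =>
      Finset.sup (Finset.range (n + 1)) (fun i => F (List.ofFn (fun j => (g j : ℕ))) i)))

lemma auxF_ge (F : List ℕ → ℕ → ℕ) (n : ℕ) : n + 2 ≤ auxF F n :=
  Nat.le_add_right _ _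

lemma auxF_bound (F : List ℕ → ℕ → ℕ) (n : ℕ) (s : List ℕ) (hl : s.length ≤ n)
    (hs : ∀ x ∈ s, x ≤ n) (i : ℕ) (hi : i ≤ n) : F s i ≤ auxF F n := by
  have hg : ∀ j : Fin s.length, s.get j < n + 1 :=
    fun j => Nat.lt_succ_of_le (hs _ (s.get_mem j))
  set g : Fin s.length → Fin (n + 1) := fun j => ⟨s.get j, hg j⟩ with hgdef
  have hgs : List.ofFn (fun j => (g j : ℕ)) = s := by
    simp [hgdef, List.ofFn_get]
  have h1 : F s i ≤ Finset.sup (Finset.range (n + 1))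
      (fun i => F (List.ofFn (fun j => (g j : ℕ))) i) := by
    rw [hgs]
    exact Finset.le_sup (Finset.mem_range.mpr (by omega))
  have h2 : Finset.sup (Finset.range (n + 1))
      (fun i => F (List.ofFn (fun j => (g j : ℕ))) i) ≤
      Finset.sup (Finset.univ : Finset (Fin s.length → Fin (n + 1))) (fun g =>
        Finset.sup (Finset.range (n + 1)) (fun i => F (List.ofFn (fun j => (g j : ℕ))) i)) :=
    Finset.le_sup (f := fun g : Fin s.length → Fin (n + 1) => Finset.sup (Finset.range (n + 1)) (fun i => F (List.ofFn (fun j => (g j : ℕ))) i)) (Finset.mem_univ g)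
  have h3 : Finset.sup (Finset.univ : Finset (Fin s.length → Fin (n + 1))) (fun g =>
      Finset.sup (Finset.range (n + 1)) (fun i => F (List.ofFn (fun j => (g j : ℕ))) i)) ≤
      Finset.sup (Finset.range (n + 1)) (fun m =>
        Finset.sup (Finset.univ : Finset (Fin m → Fin (n + 1))) (fun g =>
          Finset.sup (Finset.range (n + 1)) (fun i => F (List.ofFn (fun j => (g j : ℕ))) i))) :=
    Finset.le_sup (f := fun m => Finset.sup (Finset.univ : Finset (Fin m → Fin (n + 1))) (fun g =>
      Finset.sup (Finset.range (n + 1)) (fun i => F (List.ofFn (fun j => (g j : ℕ))) i)))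
      (Finset.mem_range.mpr (Nat.lt_succ_of_le hl))
  exact (h1.trans (h2.trans h3)).trans (Nat.le_add_left _ _)

/-- Lemma 2.3, (2) ⇒ (4): if `A` is strongly dominating, then for every
`F : ω^{<ω} × ω → ω` there is `η ∈ A` such that for all but finitely many `k`,
`η k > F (η↾k, i)` for every `i ≤ k`. -/
theorem lemma_2_3_2_to_4 (A : Set (ℕ → ℕ)) (hA : StronglyDominating A)
    (F : List ℕ → ℕ → ℕ) :
    ∃ η ∈ A, ∀ᶠ k in Filter.atTop, ∀ i ≤ k, F ((List.range k).map η) i < η k := by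
  obtain ⟨η, hηA, hev⟩ := hA (auxF F)
  rw [Filter.eventually_atTop] at hev
  obtain ⟨N0, hN0⟩ := hev
  set N := N0 + 1 with hNdef
  have hN : ∀ k, N ≤ k → auxF F (η (k - 1)) < η k := fun k hk => hN0 k (by omega)
  have step : ∀ k, N ≤ k → η k + 2 ≤ η (k + 1) := by
    intro k hk
    have h := hN (k + 1) (by omega)
    simp only [Nat.add_sub_cancel] at h
    have h2 := auxF_ge F (η k)
    omega
  have mono : ∀ a, N ≤ a → ∀ b, a ≤ b → η a ≤ η b := by
    intro a ha b hb
    induction b, hb using Nat.le_induction with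
    | base => exact le_refl _
    | succ n hn ih =>
      have := step n (ha.trans hn)
      omega
  have grow : ∀ b, N ≤ b → 2 * (b - N) ≤ η b := by
    intro b hb
    induction b, hb using Nat.le_induction with
    | base => simp
    | succ n hn ih =>
      have := step n hn
      omega
  refine ⟨η, hηA, ?_⟩
  rw [Filter.eventually_atTop]
  set B := Finset.sup (Finset.range (N + 1)) η with hBdef
  refine ⟨2 * N + B + 3, ?_⟩
  intro k hk i hi
  have hk1 : N ≤ k - 1 := by omega
  have hgrow := grow (k - 1) hk1
  have hn_ge_k : k ≤ η (k - 1) := by omega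
  have hn_ge_B : B ≤ η (k - 1) := by omega
  have hlen : ((List.range k).map η).length ≤ η (k - 1) := by
    simp [hn_ge_k]
  have hentries : ∀ x ∈ (List.range k).map η, x ≤ η (k - 1) := by
    intro x hx
    rw [List.mem_map] at hx
    obtain ⟨j, hj, rfl⟩ := hx
    rw [List.mem_range] at hj
    rcases le_or_gt j N with hjN | hjN
    · have : η j ≤ B := Finset.le_sup (Finset.mem_range.mpr (by omega))
      omega
    · have := mono j (by omega) (k - 1) (by omega)
      omega
  have hFi := auxF_bound F (η (k - 1)) _ hlen hentries i (by omega)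
  have := hN k (by omega)
  omega
end

section
/- (Lemma 2.3, implication (3) ⇒ (1)) Let A ⊆ ᵚω. If the player GOOD has a winning strategy in the domination game D(A), then there exists a Laver tree p with [p] ⊆ A. -/
/-- The infinite sequence obtained by following the finite sequence `s` with the
values of `m`. -/
def appendSeq (s : List ℕ) (m : ℕ → ℕ) : ℕ → ℕ :=
  fun j => if j < s.length then s.getD j 0 else m (j - s.length)

noncomputable def Lseq (σ : List ℕ → ℕ) (m : ℕ → ℕ) : ℕ → List ℕ
  | 0 => []
  | i + 1 => Lseq σ m i ++ [sInf {k | σ (Lseq σ m i ++ [k]) = m i}]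

lemma Lseq_length (σ : List ℕ → ℕ) (m : ℕ → ℕ) : ∀ i, (Lseq σ m i).length = i := by
  intro i; induction i with
  | zero => rfl
  | succ i ih => simp [Lseq, ih]

lemma Lseq_congr (σ : List ℕ → ℕ) {m m' : ℕ → ℕ} :
    ∀ i, (∀ j < i, m j = m' j) → Lseq σ m i = Lseq σ m' i := by
  intro i; induction i with
  | zero => intro _; rfl
  | succ i ih =>
    intro h
    have h1 : Lseq σ m i = Lseq σ m' i := ih (fun j hj => h j (Nat.lt_succ_of_lt hj))
    simp [Lseq, h1, h i (Nat.lt_succ_self i)]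

lemma map_range_getD (l : List ℕ) : (List.range l.length).map (fun j => l.getD j 0) = l := by
  apply List.ext_getElem (by simp)
  intro j h1 h2
  simp [List.getD_eq_getElem, List.getElem?_eq_getElem h2]

lemma getD_prefix_s16 {t' t : List ℕ} (h : t' <+: t) {j : ℕ} (hj : j < t'.length) :
    t'.getD j 0 = t.getD j 0 := by
  obtain ⟨r, rfl⟩ := h
  rw [List.getD_append _ _ _ _ hj]

lemma infinite_of_gt {f : ℕ → ℕ} (hf : ∀ k, f k > k) : (Set.range f).Infinite := by
  apply Set.infinite_of_not_bddAbove
  rintro ⟨b, hb⟩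
  exact absurd (hb (Set.mem_range_self b)) (Nat.not_le.mpr (hf b))

/-- Lemma 2.3, (3) ⇒ (1): if GOOD has a winning strategy `(s, σ)` in the
domination game `D(A)` — i.e. against every sequence `n` of moves of BAD, the
responses `m i := σ ⟨n 0, …, n i⟩` satisfy `m i > n i` and
`s ⌢ ⟨m 0, m 1, …⟩ ∈ A` — then some Laver tree has all its branches in `A`. -/
theorem lemma_2_3_3_to_1 (A : Set (ℕ → ℕ)) (s : List ℕ) (σ : List ℕ → ℕ)
    (hwin : ∀ n : ℕ → ℕ,
      (∀ i, σ ((List.range (i + 1)).map n) > n i) ∧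
      appendSeq s (fun i => σ ((List.range (i + 1)).map n)) ∈ A) :
    ∃ p, IsLaverTree p ∧ Branches p ⊆ A := by
  classical
  set tf : List ℕ → ℕ → ℕ := fun t j => t.getD (s.length + j) 0 with htf
  set Q : (ℕ → ℕ) → ℕ → Prop := fun m i => ∃ k, σ (Lseq σ m i ++ [k]) = m i with hQ
  have hQc : ∀ (m m' : ℕ → ℕ) (i : ℕ), (∀ j < i + 1, m j = m' j) → Q m i → Q m' i := by
    rintro m m' i h ⟨k, hk⟩
    refine ⟨k, ?_⟩
    rw [← Lseq_congr σ i (fun j hj => h j (Nat.lt_succ_of_lt hj)), ← h i (Nat.lt_succ_self i)]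
    exact hk
  set p : Set (List ℕ) :=
    {t | t <+: s ∨ (s <+: t ∧ ∀ i, s.length + i < t.length → Q (tf t) i)} with hp
  have htree : IsTree p := by
    rintro t (ht | ⟨hst, hc⟩) t' ht'
    · exact Or.inl (ht'.trans ht)
    · by_cases hlen : t'.length ≤ s.length
      · exact Or.inl (List.prefix_of_prefix_length_le ht' hst hlen)
      · refine Or.inr ⟨List.prefix_of_prefix_length_le hst ht' (by omega), ?_⟩
        intro i hi
        refine hQc (tf t) (tf t') i ?_ (hc i (lt_of_lt_of_le hi ht'.length_le))
        intro j hj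
        exact (getD_prefix_s16 ht' (by omega)).symm
  have hsmem : s ∈ p := Or.inr ⟨List.prefix_refl s, fun i hi => absurd hi (by omega)⟩
  have hcomp : ∀ t ∈ p, t <+: s ∨ s <+: t := by
    rintro t (ht | ⟨hst, _⟩)
    · exact Or.inl ht
    · exact Or.inr hst
  have hsucc : ∀ t ∈ p, s <+: t → (Succs p t).Infinite := by
    rintro t ht hst
    have hd : s.length ≤ t.length := hst.length_le
    set d : ℕ := t.length - s.length with hdd
    have hsd : s.length + d = t.length := by omega
    set c : List ℕ := Lseq σ (tf t) d with hc
    have hagree : ∀ (v : ℕ) (j : ℕ), s.length + j < t.length → tf (t ++ [v]) j = tf t j := by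
      intro v j hj
      exact (getD_prefix_s16 (t.prefix_append [v]) hj).symm
    have hvd : ∀ v : ℕ, tf (t ++ [v]) d = v := by
      intro v
      show (t ++ [v]).getD (s.length + d) 0 = v
      rw [hsd, List.getD_append_right _ _ _ _ (le_refl _)]
      simp
    have hcc : ∀ i, s.length + i < t.length → Q (tf t) i := by
      intro i hi
      rcases ht with h | ⟨_, h⟩
      · exact absurd h.length_le (by omega)
      · exact h i hi
    have hmem : ∀ k, σ (c ++ [k]) ∈ Succs p t := by
      intro k
      show t ++ [σ (c ++ [k])] ∈ p
      refine Or.inr ⟨hst.trans (t.prefix_append _), ?_⟩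
      intro i hi
      simp only [List.length_append, List.length_singleton] at hi
      rcases lt_or_eq_of_le (by omega : i ≤ d) with hid | hid
      · refine hQc (tf t) (tf (t ++ [σ (c ++ [k])])) i ?_ (hcc i (by omega))
        intro j hj
        exact (hagree _ j (by omega)).symm
      · refine ⟨k, ?_⟩
        rw [hid, Lseq_congr σ d (fun j hj => hagree _ j (by omega)), hvd]
      -- goal closed
    have hgt : ∀ k, σ (c ++ [k]) > k := by
      intro k
      set nb : ℕ → ℕ := fun j => (c ++ [k]).getD j 0 with hnb
      have hlen : (c ++ [k]).length = d + 1 := by simp [hc, Lseq_length]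
      have hmr : (List.range (d + 1)).map nb = c ++ [k] := by
        rw [← hlen]; exact map_range_getD _
      have h1 := (hwin nb).1 d
      rw [hmr] at h1
      have hnd : nb d = k := by
        show (c ++ [k]).getD d 0 = k
        rw [List.getD_append_right _ _ _ _ (by simp [hc, Lseq_length]), ]
        simp [hc, Lseq_length]
      rw [hnd] at h1
      exact h1
    exact (infinite_of_gt hgt).mono (Set.range_subset_iff.mpr hmem)
  refine ⟨p, ⟨s, htree, hsmem, hcomp, hsucc⟩, ?_⟩
  intro η hη
  have hstem : ∀ j < s.length, η j = s.getD j 0 := by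
    have ht := hη s.length
    have hlenr : ((List.range s.length).map η).length = s.length := by simp
    have hts : (List.range s.length).map η = s := by
      rcases ht with h | ⟨h, _⟩
      · exact h.eq_of_length hlenr
      · exact (h.eq_of_length hlenr.symm).symm
    intro j hj
    have : ((List.range s.length).map η).getD j 0 = s.getD j 0 := by rw [hts]
    simpa [List.getD_eq_getElem?_getD, List.getElem?_eq_getElem, hj] using this
  set m : ℕ → ℕ := fun i => η (s.length + i) with hm
  have htail : ∀ (ℓ j : ℕ), s.length + j < s.length + ℓ →
      tf ((List.range (s.length + ℓ)).map η) j = m j := by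
    intro ℓ j hj
    show ((List.range (s.length + ℓ)).map η).getD (s.length + j) 0 = η (s.length + j)
    simp [List.getD_eq_getElem?_getD, List.getElem?_eq_getElem, hj]
  have hQm : ∀ i, Q m i := by
    intro i
    have ht := hη (s.length + i + 1)
    rcases ht with h | ⟨_, hcc⟩
    · exact absurd h.length_le (by simp)
    · refine hQc (tf ((List.range (s.length + i + 1)).map η)) m i ?_ (hcc i (by simp))
      intro j hj
      exact htail (i + 1) j (by omega)
  set n : ℕ → ℕ := fun i => sInf {k | σ (Lseq σ m i ++ [k]) = m i} with hn
  have hL : ∀ i, (List.range i).map n = Lseq σ m i := by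
    intro i; induction i with
    | zero => rfl
    | succ i ih => rw [List.range_succ, List.map_append, ih]; rfl
  have hmn : ∀ i, σ ((List.range (i + 1)).map n) = m i := by
    intro i
    have hmem : n i ∈ {k | σ (Lseq σ m i ++ [k]) = m i} := Nat.sInf_mem (hQm i)
    rw [List.range_succ, List.map_append, hL i]
    exact hmem
  have hA := (hwin n).2
  have heq : appendSeq s (fun i => σ ((List.range (i + 1)).map n)) = η := by
    funext j
    unfold appendSeq
    split
    · exact (hstem j (by assumption)).symm
    · show σ ((List.range (j - s.length + 1)).map n) = η j
      rw [hmn]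
      show η (s.length + (j - s.length)) = η j
      congr 1
      omega
  rwa [heq] at hA
end
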